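/- arXiv:2305.01435 — 11 statements merged into one kernel-verified Lean document; each statement's English description precedes it below -/
import Mathlib

section
/- Assume that the span of {μ_1^c, …, μ_G^c} has dimension at least K (equivalently, the rank of T_{μμ} is at least K), so that the constraint set defining IMSE_K^* is nonempty. Then for every choice of φ_1, …, φ_K ∈ H one has IMSE_K[φ_1, …, φ_K] ≥ IMSE_K^*. (This is the paper's Lemma 3.1: no K-dimensional linear prediction of the centered CATE functions from the scores ⟨μ_g^c, φ_k⟩ can beat the benchmark IMSE_K^*.) -/
open scoped InnerProductSpace

open Module Submodule in
lemma aux_exists_superset_finrank_eq {𝕜 V : Type*} [Field 𝕜] [AddCommGroup V] [Module 𝕜 V]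
    [FiniteDimensional 𝕜 V] (n : ℕ) (U : Submodule 𝕜 V)
    (h1 : finrank 𝕜 U ≤ n) (h2 : n ≤ finrank 𝕜 V) :
    ∃ U' : Submodule 𝕜 V, U ≤ U' ∧ finrank 𝕜 U' = n := by
  obtain ⟨d, hd⟩ := Nat.le.dest h1
  induction d generalizing U with
  | zero => exact ⟨U, le_rfl, by omega⟩
  | succ d ih =>
    have hlt : finrank 𝕜 U < finrank 𝕜 V := by omega
    obtain ⟨m, hm⟩ := U.exists_of_finrank_lt hlt
    have hmU : m ∉ U := by simpa using hm 1 one_ne_zero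
    have hm0 : m ≠ 0 := fun h => hmU (h ▸ U.zero_mem)
    have hinf : U ⊓ (𝕜 ∙ m) = ⊥ := by
      rw [eq_bot_iff]
      rintro x ⟨hxU, hxm⟩
      obtain ⟨r, rfl⟩ := Submodule.mem_span_singleton.mp hxm
      rcases eq_or_ne r 0 with h | h
      · simp [h]
      · exact absurd hxU (hm r h)
    have hr2 : finrank 𝕜 ↥(U ⊔ (𝕜 ∙ m)) = finrank 𝕜 U + 1 := by
      have := Submodule.finrank_sup_add_finrank_inf_eq U (𝕜 ∙ m)
      rw [hinf, finrank_bot, finrank_span_singleton hm0] at this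
      omega
    obtain ⟨U', hle, hfr⟩ := ih (U ⊔ (𝕜 ∙ m)) (by omega) (by omega)
    exact ⟨U', le_trans le_sup_left hle, hfr⟩

open scoped InnerProductSpace

open Module in
lemma aux_exists_chi {H E : Type*} [NormedAddCommGroup H] [InnerProductSpace ℝ H]
    [NormedAddCommGroup E] [InnerProductSpace ℝ E] [FiniteDimensional ℝ E]
    {K : ℕ} (S : H →ₗ[ℝ] E) (hK : K ≤ finrank ℝ (LinearMap.range S)) (φ : Fin K → H) :
    ∃ χ : Fin K → H,
      (∀ k l, ⟪S (χ k), S (χ l)⟫_ℝ = if k = l then (1:ℝ) else 0) ∧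
      ∀ k, ∃ c : Fin K → ℝ, S (φ k) = ∑ j, c j • S (χ j) := by
  set W := LinearMap.range S with hW
  set u : Fin K → ↥W := fun k => ⟨S (φ k), LinearMap.mem_range_self _ _⟩ with hu
  have hUK : finrank ℝ (Submodule.span ℝ (Set.range u)) ≤ K := by
    classical
    refine le_trans (finrank_span_le_card _) ?_
    refine le_trans ?_ (le_of_eq (Fintype.card_fin K))
    convert Fintype.card_range_le u
    rfl
    rw [Set.toFinset_card]
  obtain ⟨U', hUU', hU'K⟩ := aux_exists_superset_finrank_eq K _ hUK hK
  let b : OrthonormalBasis (Fin K) ℝ ↥U' :=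
    (stdOrthonormalBasis ℝ ↥U').reindex (finCongr (by rw [hU'K]))
  have hmem : ∀ j, (((b j : ↥W) : E)) ∈ W := fun j => ((b j : ↥W)).2
  choose χ hχ using fun j => hmem j
  refine ⟨χ, ?_, ?_⟩
  · intro k l
    rw [hχ k, hχ l]
    have h1 : (⟪((b k : ↥W) : E), ((b l : ↥W) : E)⟫_ℝ) = ⟪b k, b l⟫_ℝ := rfl
    rw [h1, orthonormal_iff_ite.mp b.orthonormal]
  · intro k
    have hx : u k ∈ U' := hUU' (Submodule.subset_span (Set.mem_range_self k))
    set x : ↥U' := ⟨u k, hx⟩ with hxdef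
    refine ⟨fun j => b.repr x j, ?_⟩
    have h2 := congrArg (fun z : ↥U' => ((z : ↥W) : E)) (b.sum_repr x)
    simp only at h2
    calc S (φ k) = ((((∑ j, b.repr x j • b j : ↥U') : ↥W)) : E) := h2.symm
      _ = ∑ j, b.repr x j • S (χ j) := by push_cast; simp [hχ]

open scoped InnerProductSpace


/-- Lemma 3.1: no K-dimensional linear prediction of the centered CATE
functions from the scores ⟨μ_g^c, φ_k⟩ can beat the benchmark IMSE_K^*. -/
theorem transfer_IMSE_lower_bound
    {H : Type*} [NormedAddCommGroup H] [InnerProductSpace ℝ H] [CompleteSpace H]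
    [TopologicalSpace.SeparableSpace H]
    (G K : ℕ) (hG : 0 < G) (hK : 0 < K)
    (μ τ μc τc : Fin G → H)
    (hμc : ∀ g, μc g = μ g - (G : ℝ)⁻¹ • ∑ g', μ g')
    (hτc : ∀ g, τc g = τ g - (G : ℝ)⁻¹ • ∑ g', τ g')
    (Tμμ Tμτstar : H →L[ℝ] H)
    (hTμμ : ∀ h : H, Tμμ h = (G : ℝ)⁻¹ • ∑ g, ⟪μc g, h⟫_ℝ • μc g)
    (hTμτstar : ∀ h : H, Tμτstar h = (G : ℝ)⁻¹ • ∑ g, ⟪μc g, h⟫_ℝ • τc g)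
    (IMSE : (Fin K → H) → ℝ)
    (hIMSE : ∀ φ : Fin K → H, IMSE φ =
      ⨅ ψ : Fin K → H, (G : ℝ)⁻¹ * ∑ g, ‖τc g - ∑ k, ⟪μc g, φ k⟫_ℝ • ψ k‖ ^ 2)
    (IMSEstar : ℝ)
    (hIMSEstar : IMSEstar = sInf { v : ℝ | ∃ χ : Fin K → H,
        (∀ k l, ⟪χ k, Tμμ (χ l)⟫_ℝ = if k = l then (1 : ℝ) else 0) ∧
        v = (G : ℝ)⁻¹ * ∑ g, ‖τc g‖ ^ 2 - ∑ k, ‖Tμτstar (χ k)‖ ^ 2 })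
    (hrank : K ≤ Module.finrank ℝ (Submodule.span ℝ (Set.range μc)))
    (φ : Fin K → H) :
    IMSEstar ≤ IMSE φ := by
  classical
  set C : ℝ := (G : ℝ)⁻¹ * ∑ g, ‖τc g‖ ^ 2 with hC
  -- the scaling constant
  set s : ℝ := (Real.sqrt G)⁻¹ with hsdef
  have hGpos : (0:ℝ) < G := by exact_mod_cast hG
  have hs : s ≠ 0 := by
    have h0 : (0:ℝ) < Real.sqrt G := Real.sqrt_pos.mpr hGpos
    exact inv_ne_zero h0.ne'
  have hss : s * s = (G : ℝ)⁻¹ := by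
    rw [hsdef, ← mul_inv]
    rw [Real.mul_self_sqrt hGpos.le]
  -- the score map
  set S : H →ₗ[ℝ] EuclideanSpace ℝ (Fin G) :=
    { toFun := fun h => (WithLp.equiv 2 (Fin G → ℝ)).symm (fun g => s * ⟪μc g, h⟫_ℝ)
      map_add' := by
        intro x y
        ext g
        simp [inner_add_right, mul_add]
      map_smul' := by
        intro r x
        ext g
        simp [inner_smul_right]
        ring } with hSdef
  have hSapply : ∀ (h : H) (g : Fin G), S h g = s * ⟪μc g, h⟫_ℝ := fun h g => rfl
  -- inner product identity
  have hinner : ∀ x y : H, ⟪S x, S y⟫_ℝ = ⟪x, Tμμ y⟫_ℝ := by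
    intro x y
    rw [hTμμ, real_inner_smul_right, inner_sum]
    rw [PiLp.inner_apply]
    simp only [RCLike.inner_apply, starRingEnd_apply, star_trivial, hSapply,
      real_inner_smul_right]
    rw [Finset.mul_sum]
    refine Finset.sum_congr rfl fun g _ => ?_
    rw [real_inner_comm (μc g) x]
    rw [← hss]
    ring
  -- rank condition transfers
  have hrankS : K ≤ Module.finrank ℝ (LinearMap.range S) := by
    set V := Submodule.span ℝ (Set.range μc) with hV
    haveI : FiniteDimensional ℝ ↥V := FiniteDimensional.span_of_finite ℝ (Set.finite_range μc)
    set f : ↥V →ₗ[ℝ] ↥(LinearMap.range S) :=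
      (S.comp V.subtype).codRestrict (LinearMap.range S)
        (fun x => LinearMap.mem_range_self _ _) with hf
    have hinj : Function.Injective f := by
      rw [← LinearMap.ker_eq_bot, eq_bot_iff]
      rintro x hx
      have hSx : S (x : H) = 0 := by
        have h0 : f x = 0 := hx
        exact congrArg Subtype.val h0
      have hcoord : ∀ g, ⟪μc g, (x : H)⟫_ℝ = 0 := by
        intro g
        have h1 : S (x : H) g = 0 := by rw [hSx]; rfl
        rw [hSapply] at h1
        exact (mul_eq_zero.mp h1).resolve_left hs
      have hVle : V ≤ (Submodule.span ℝ {(x : H)})ᗮ := by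
        show Submodule.span ℝ (Set.range μc) ≤ _
        rw [Submodule.span_le]
        rintro y ⟨g, rfl⟩
        rw [SetLike.mem_coe, Submodule.mem_orthogonal]
        intro u hu
        obtain ⟨r, rfl⟩ := Submodule.mem_span_singleton.mp hu
        rw [real_inner_smul_left, real_inner_comm, hcoord g, mul_zero]
      have hxx : ⟪(x : H), (x : H)⟫_ℝ = 0 := by
        have h1 := hVle x.2
        rw [Submodule.mem_orthogonal] at h1
        exact h1 (x : H) (Submodule.mem_span_singleton_self _)
      have hx0 : (x : H) = 0 := inner_self_eq_zero.mp hxx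
      simpa using Subtype.ext hx0
    exact le_trans hrank (LinearMap.finrank_le_finrank_of_injective hinj)
  -- get the χ family
  obtain ⟨χ, hχo, hχc⟩ := aux_exists_chi S hrankS φ
  choose c hc using hχc
  have hortho : ∀ k l, ⟪χ k, Tμμ (χ l)⟫_ℝ = if k = l then (1:ℝ) else 0 := by
    intro k l
    rw [← hinner, hχo]
  have hsingle : ∀ (h : H) (g : Fin G),
      ⟪EuclideanSpace.single g (1:ℝ), S h⟫_ℝ = s * ⟪μc g, h⟫_ℝ := by
    intro h g
    rw [EuclideanSpace.inner_single_left]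
    simp [hSapply h g]
  have hscores : ∀ k g, ⟪μc g, φ k⟫_ℝ = ∑ j, c k j * ⟪μc g, χ j⟫_ℝ := by
    intro k g
    have h1 := congrArg (fun z => ⟪EuclideanSpace.single g (1:ℝ), z⟫_ℝ) (hc k)
    simp only [inner_sum, real_inner_smul_right, hsingle] at h1
    have h2 : ∑ j, c k j * (s * ⟪μc g, χ j⟫_ℝ) = s * ∑ j, c k j * ⟪μc g, χ j⟫_ℝ := by
      rw [Finset.mul_sum]
      exact Finset.sum_congr rfl fun j _ => by ring
    exact mul_left_cancel₀ hs (h1.trans h2)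
  -- key sum identities
  have idA : ∀ j, Tμτstar (χ j) = (G : ℝ)⁻¹ • ∑ g, ⟪μc g, χ j⟫_ℝ • τc g :=
    fun j => hTμτstar (χ j)
  have idB : ∀ j l, (G : ℝ)⁻¹ * ∑ g, ⟪μc g, χ j⟫_ℝ * ⟪μc g, χ l⟫_ℝ
      = if j = l then (1:ℝ) else 0 := by
    intro j l
    rw [← hortho j l, hTμμ, real_inner_smul_right, inner_sum]
    refine congrArg (fun t => (G:ℝ)⁻¹ * t) (Finset.sum_congr rfl fun g _ => ?_)
    rw [real_inner_smul_right, real_inner_comm (χ j) (μc g)]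
    ring
  -- the candidate value
  set v : ℝ := C - ∑ k, ‖Tμτstar (χ k)‖ ^ 2 with hv
  rw [hIMSEstar, hIMSE]
  have hCnonneg : 0 ≤ C := by
    apply mul_nonneg (by positivity)
    exact Finset.sum_nonneg fun g _ => by positivity
  -- boundedness from below
  have hTbound : ∀ x : H, ⟪x, Tμμ x⟫_ℝ = 1 → ‖Tμτstar x‖ ^ 2 ≤ C := by
    intro x hx
    have hb : (G:ℝ)⁻¹ * ∑ g, ⟪μc g, x⟫_ℝ ^ 2 = 1 := by
      rw [← hx, hTμμ, real_inner_smul_right, inner_sum]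
      refine congrArg (fun t => (G:ℝ)⁻¹ * t) (Finset.sum_congr rfl fun g _ => ?_)
      rw [real_inner_smul_right, real_inner_comm x (μc g)]
      ring
    have hnorm : ‖Tμτstar x‖ ≤ (G:ℝ)⁻¹ * ∑ g, |⟪μc g, x⟫_ℝ| * ‖τc g‖ := by
      rw [hTμτstar, norm_smul, Real.norm_eq_abs, abs_of_nonneg (by positivity)]
      refine mul_le_mul_of_nonneg_left ?_ (by positivity)
      refine (norm_sum_le _ _).trans (le_of_eq (Finset.sum_congr rfl fun g _ => ?_))
      rw [norm_smul, Real.norm_eq_abs]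
    have hCS : (∑ g, |⟪μc g, x⟫_ℝ| * ‖τc g‖) ^ 2
        ≤ (∑ g, ⟪μc g, x⟫_ℝ ^ 2) * (∑ g, ‖τc g‖ ^ 2) := by
      have h3 := Finset.sum_mul_sq_le_sq_mul_sq Finset.univ
        (fun g => |⟪μc g, x⟫_ℝ|) (fun g => ‖τc g‖)
      simpa [sq_abs] using h3
    have h1 : ‖Tμτstar x‖ ^ 2 ≤ ((G:ℝ)⁻¹ * ∑ g, |⟪μc g, x⟫_ℝ| * ‖τc g‖) ^ 2 :=
      pow_le_pow_left₀ (norm_nonneg _) hnorm 2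
    calc ‖Tμτstar x‖ ^ 2 ≤ ((G:ℝ)⁻¹ * ∑ g, |⟪μc g, x⟫_ℝ| * ‖τc g‖) ^ 2 := h1
      _ = ((G:ℝ)⁻¹ * (G:ℝ)⁻¹) * (∑ g, |⟪μc g, x⟫_ℝ| * ‖τc g‖) ^ 2 := by ring
      _ ≤ ((G:ℝ)⁻¹ * (G:ℝ)⁻¹) * ((∑ g, ⟪μc g, x⟫_ℝ ^ 2) * (∑ g, ‖τc g‖ ^ 2)) :=
          mul_le_mul_of_nonneg_left hCS (by positivity)
      _ = ((G:ℝ)⁻¹ * ∑ g, ⟪μc g, x⟫_ℝ ^ 2) * C := by rw [hC]; ring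
      _ = C := by rw [hb, one_mul]
  have hbdd : BddBelow { v : ℝ | ∃ χ : Fin K → H,
      (∀ k l, ⟪χ k, Tμμ (χ l)⟫_ℝ = if k = l then (1 : ℝ) else 0) ∧
      v = (G : ℝ)⁻¹ * ∑ g, ‖τc g‖ ^ 2 - ∑ k, ‖Tμτstar (χ k)‖ ^ 2 } := by
    refine ⟨C - K * C, ?_⟩
    rintro x ⟨χ', hχ'o, rfl⟩
    have h1 : ∀ k : Fin K, ‖Tμτstar (χ' k)‖ ^ 2 ≤ C := by
      intro k
      apply hTbound
      simpa using hχ'o k k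
    have h2 : ∑ k, ‖Tμτstar (χ' k)‖ ^ 2 ≤ ∑ _k : Fin K, C :=
      Finset.sum_le_sum fun k _ => h1 k
    simp only [Finset.sum_const, Finset.card_univ, Fintype.card_fin, nsmul_eq_mul] at h2
    rw [← hC]
    linarith
  have hvmem : v ∈ { v : ℝ | ∃ χ : Fin K → H,
      (∀ k l, ⟪χ k, Tμμ (χ l)⟫_ℝ = if k = l then (1 : ℝ) else 0) ∧
      v = (G : ℝ)⁻¹ * ∑ g, ‖τc g‖ ^ 2 - ∑ k, ‖Tμτstar (χ k)‖ ^ 2 } := ⟨χ, hortho, rfl⟩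
  refine le_trans (csInf_le hbdd hvmem) (le_ciInf fun ψ => ?_)
  -- the main inequality for a fixed ψ
  set ψ' : Fin K → H := fun j => ∑ k, c k j • ψ k with hψ'
  have step1 : ∀ g, ∑ k, ⟪μc g, φ k⟫_ℝ • ψ k = ∑ j, ⟪μc g, χ j⟫_ℝ • ψ' j := by
    intro g
    calc ∑ k, ⟪μc g, φ k⟫_ℝ • ψ k
        = ∑ k, ∑ j, (c k j * ⟪μc g, χ j⟫_ℝ) • ψ k := by
          refine Finset.sum_congr rfl fun k _ => ?_
          rw [hscores k g, Finset.sum_smul]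
      _ = ∑ j, ∑ k, (c k j * ⟪μc g, χ j⟫_ℝ) • ψ k := Finset.sum_comm
      _ = ∑ j, ⟪μc g, χ j⟫_ℝ • ψ' j := by
          refine Finset.sum_congr rfl fun j _ => ?_
          simp only [hψ']
          rw [Finset.smul_sum]
          exact Finset.sum_congr rfl fun k _ => by rw [smul_smul, mul_comm]
  have hcross : (G : ℝ)⁻¹ * ∑ g, ⟪τc g, ∑ j, ⟪μc g, χ j⟫_ℝ • ψ' j⟫_ℝ
      = ∑ j, ⟪Tμτstar (χ j), ψ' j⟫_ℝ := by
    have h1 : ∀ g, ⟪τc g, ∑ j, ⟪μc g, χ j⟫_ℝ • ψ' j⟫_ℝ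
        = ∑ j, ⟪μc g, χ j⟫_ℝ * ⟪τc g, ψ' j⟫_ℝ := by
      intro g
      rw [inner_sum]
      exact Finset.sum_congr rfl fun j _ => real_inner_smul_right _ _ _
    rw [Finset.sum_congr rfl fun g _ => h1 g, Finset.sum_comm, Finset.mul_sum]
    refine Finset.sum_congr rfl fun j _ => ?_
    rw [idA j, real_inner_smul_left, sum_inner]
    refine congrArg (fun t => (G:ℝ)⁻¹ * t) (Finset.sum_congr rfl fun g _ => ?_)
    rw [real_inner_smul_left]
  have hquad : (G : ℝ)⁻¹ * ∑ g, ‖∑ j, ⟪μc g, χ j⟫_ℝ • ψ' j‖ ^ 2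
      = ∑ j, ‖ψ' j‖ ^ 2 := by
    have h1 : ∀ g, ‖∑ j, ⟪μc g, χ j⟫_ℝ • ψ' j‖ ^ 2
        = ∑ j, ∑ l, (⟪μc g, χ j⟫_ℝ * ⟪μc g, χ l⟫_ℝ) * ⟪ψ' j, ψ' l⟫_ℝ := by
      intro g
      rw [← real_inner_self_eq_norm_sq, sum_inner]
      refine Finset.sum_congr rfl fun j _ => ?_
      rw [real_inner_smul_left, inner_sum, Finset.mul_sum]
      refine Finset.sum_congr rfl fun l _ => ?_
      rw [real_inner_smul_right]
      ring
    rw [Finset.sum_congr rfl fun g _ => h1 g, Finset.sum_comm, Finset.mul_sum]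
    have h2 : ∀ j, (G:ℝ)⁻¹ * ∑ g, ∑ l, (⟪μc g, χ j⟫_ℝ * ⟪μc g, χ l⟫_ℝ) * ⟪ψ' j, ψ' l⟫_ℝ
        = ‖ψ' j‖ ^ 2 := by
      intro j
      rw [Finset.sum_comm, Finset.mul_sum]
      have h3 : ∀ l, (G:ℝ)⁻¹ * ∑ g, (⟪μc g, χ j⟫_ℝ * ⟪μc g, χ l⟫_ℝ) * ⟪ψ' j, ψ' l⟫_ℝ
          = (if j = l then (1:ℝ) else 0) * ⟪ψ' j, ψ' l⟫_ℝ := by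
        intro l
        rw [← Finset.sum_mul, ← idB j l]
        ring
      rw [Finset.sum_congr rfl fun l _ => h3 l]
      simp [real_inner_self_eq_norm_sq]
    exact Finset.sum_congr rfl fun j _ => h2 j
  have key : (G : ℝ)⁻¹ * ∑ g, ‖τc g - ∑ k, ⟪μc g, φ k⟫_ℝ • ψ k‖ ^ 2
      = v + ∑ j, ‖Tμτstar (χ j) - ψ' j‖ ^ 2 := by
    have e1 : ∀ g, ‖τc g - ∑ k, ⟪μc g, φ k⟫_ℝ • ψ k‖ ^ 2
        = ‖τc g‖ ^ 2 - 2 * ⟪τc g, ∑ j, ⟪μc g, χ j⟫_ℝ • ψ' j⟫_ℝ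
          + ‖∑ j, ⟪μc g, χ j⟫_ℝ • ψ' j‖ ^ 2 := by
      intro g
      rw [step1 g, norm_sub_sq_real]
    have e3 : ∑ j, ‖Tμτstar (χ j) - ψ' j‖ ^ 2
        = ∑ j, ‖Tμτstar (χ j)‖ ^ 2 - 2 * ∑ j, ⟪Tμτstar (χ j), ψ' j⟫_ℝ
          + ∑ j, ‖ψ' j‖ ^ 2 := by
      rw [Finset.sum_congr rfl fun j _ => norm_sub_sq_real _ _, Finset.sum_add_distrib,
        Finset.sum_sub_distrib, Finset.mul_sum]
    rw [Finset.sum_congr rfl fun g _ => e1 g, Finset.sum_add_distrib,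
      Finset.sum_sub_distrib]
    have e2 : ∑ g, 2 * ⟪τc g, ∑ j, ⟪μc g, χ j⟫_ℝ • ψ' j⟫_ℝ
        = 2 * ∑ g, ⟪τc g, ∑ j, ⟪μc g, χ j⟫_ℝ • ψ' j⟫_ℝ := by rw [Finset.mul_sum]
    rw [e2, hv, e3, hC]
    have hc1 := hcross
    have hq1 := hquad
    ring_nf
    ring_nf at hc1 hq1
    linarith
  have hpos : 0 ≤ ∑ j, ‖Tμτstar (χ j) - ψ' j‖ ^ 2 :=
    Finset.sum_nonneg fun j _ => by positivity
  rw [key]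
  linarith
end

section
/- If φ_1, …, φ_K ∈ H satisfy the normalization ⟨φ_k, T_{μμ} φ_l⟩ = δ_{kl} for all 1 ≤ k, l ≤ K, then IMSE_K[φ_1, …, φ_K] = (1/G)·Σ_{g=1}^G ‖τ_g^c‖² − Σ_{k=1}^K ‖T_{μτ}^* φ_k‖², and the infimum defining IMSE_K[φ_1, …, φ_K] is attained at the choice ψ_k = T_{μτ}^* φ_k for k = 1, …, K. (This identity, proved in the paper's proof of Lemma 3.1 and Corollary 3.1, shows the optimal second-stage predictors are ψ_k = T_{μτ}^* φ_k.) -/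
/-!
Writing `b k := c • ∑ g, a g k • t g`, the orthonormality `c * ∑ g, a g k * a g l = δ k l` makes
`ψ ↦ (∑ k, a g k • ψ k)_g` an isometry whose adjoint sends `t` to `b`. Expanding the squares turns the
weighted residual into `c * ∑ g, ‖t g‖ ^ 2 - ∑ k, ‖b k‖ ^ 2 + ∑ k, ‖ψ k - b k‖ ^ 2`, which is minimal
exactly at `ψ = b`. With `a g k = ⟪μc g, φ k⟫`, `t = τc` and `c = G⁻¹` one gets `b = T_{μτ}^* φ`.
-/

open scoped InnerProductSpace
open Finset Set

section WeightedLeastSquares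

variable {H : Type*} [NormedAddCommGroup H] [InnerProductSpace ℝ H]
  {ι κ : Type*} [Fintype ι] [Fintype κ]

theorem weighted_sum_inner_sum_smul (c : ℝ) (a : ι → κ → ℝ) (t : ι → H) (ψ : κ → H) :
    c * ∑ g, ⟪t g, ∑ k, a g k • ψ k⟫_ℝ = ∑ k, ⟪c • ∑ g, a g k • t g, ψ k⟫_ℝ := by
  simp only [inner_sum, sum_inner, real_inner_smul_left, real_inner_smul_right, mul_sum]
  exact sum_comm

theorem weighted_sum_norm_sum_smul_sq [DecidableEq κ] {c : ℝ} {a : ι → κ → ℝ}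
    (ha : ∀ k l, c * ∑ g, a g k * a g l = if k = l then 1 else 0) (ψ : κ → H) :
    c * ∑ g, ‖∑ k, a g k • ψ k‖ ^ 2 = ∑ k, ‖ψ k‖ ^ 2 := by
  calc c * ∑ g, ‖∑ k, a g k • ψ k‖ ^ 2
      = ∑ k, ∑ l, (c * ∑ g, a g k * a g l) * ⟪ψ k, ψ l⟫_ℝ := by
        simp only [← real_inner_self_eq_norm_sq, inner_sum, sum_inner, real_inner_smul_left,
          real_inner_smul_right, mul_sum, sum_mul]
        rw [sum_comm]
        refine sum_congr rfl fun k _ => ?_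
        rw [sum_comm]
        refine sum_congr rfl fun l _ => sum_congr rfl fun g _ => ?_
        rw [real_inner_comm (ψ l)]
        ring
    _ = ∑ k, ‖ψ k‖ ^ 2 := by simp [ha]

theorem weighted_sum_norm_sub_sum_smul_sq [DecidableEq κ] {c : ℝ} {a : ι → κ → ℝ}
    (ha : ∀ k l, c * ∑ g, a g k * a g l = if k = l then 1 else 0) (t : ι → H) (ψ : κ → H) :
    c * ∑ g, ‖t g - ∑ k, a g k • ψ k‖ ^ 2 =
      c * ∑ g, ‖t g‖ ^ 2 - ∑ k, ‖c • ∑ g, a g k • t g‖ ^ 2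
        + ∑ k, ‖ψ k - c • ∑ g, a g k • t g‖ ^ 2 := by
  have hcross := weighted_sum_inner_sum_smul c a t ψ
  have hquad := weighted_sum_norm_sum_smul_sq ha ψ
  simp only [norm_sub_sq_real, sum_add_distrib, sum_sub_distrib, ← mul_sum]
  simp only [real_inner_comm _ (ψ _)]
  linear_combination -2 * hcross + hquad

theorem isLeast_weighted_sum_norm_sub_sum_smul_sq [DecidableEq κ] {c : ℝ} {a : ι → κ → ℝ}
    (ha : ∀ k l, c * ∑ g, a g k * a g l = if k = l then 1 else 0) (t : ι → H) :
    IsLeast (range fun ψ : κ → H => c * ∑ g, ‖t g - ∑ k, a g k • ψ k‖ ^ 2)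
      (c * ∑ g, ‖t g‖ ^ 2 - ∑ k, ‖c • ∑ g, a g k • t g‖ ^ 2) := by
  refine ⟨⟨fun k => c • ∑ g, a g k • t g, by simp [weighted_sum_norm_sub_sum_smul_sq ha]⟩, ?_⟩
  rintro _ ⟨ψ, rfl⟩
  dsimp only
  rw [weighted_sum_norm_sub_sum_smul_sq ha]
  exact le_add_of_nonneg_right (sum_nonneg fun k _ => sq_nonneg _)

end WeightedLeastSquares

theorem transfer_IMSE_formula_and_attainment_general
    {H : Type*} [NormedAddCommGroup H] [InnerProductSpace ℝ H]
    (G K : ℕ)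
    (μc τc : Fin G → H)
    (Tμμ Tμτstar : H →L[ℝ] H)
    (hTμμ : ∀ h : H, Tμμ h = (G : ℝ)⁻¹ • ∑ g, ⟪μc g, h⟫_ℝ • μc g)
    (hTμτstar : ∀ h : H, Tμτstar h = (G : ℝ)⁻¹ • ∑ g, ⟪μc g, h⟫_ℝ • τc g)
    (IMSE : (Fin K → H) → ℝ)
    (hIMSE : ∀ φ : Fin K → H, IMSE φ =
      ⨅ ψ : Fin K → H, (G : ℝ)⁻¹ * ∑ g, ‖τc g - ∑ k, ⟪μc g, φ k⟫_ℝ • ψ k‖ ^ 2)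
    (φ : Fin K → H)
    (hnorm : ∀ k l, ⟪φ k, Tμμ (φ l)⟫_ℝ = if k = l then (1 : ℝ) else 0) :
    IMSE φ = (G : ℝ)⁻¹ * ∑ g, ‖τc g‖ ^ 2 - ∑ k, ‖Tμτstar (φ k)‖ ^ 2 ∧
    (G : ℝ)⁻¹ * ∑ g, ‖τc g - ∑ k, ⟪μc g, φ k⟫_ℝ • Tμτstar (φ k)‖ ^ 2 = IMSE φ := by
  have hortho : ∀ k l,
      (G : ℝ)⁻¹ * ∑ g, ⟪μc g, φ k⟫_ℝ * ⟪μc g, φ l⟫_ℝ = if k = l then 1 else 0 := by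
    intro k l
    simp only [← hnorm k l, hTμμ, real_inner_smul_right, inner_sum, real_inner_comm (φ k), mul_comm]
  simp only [hTμτstar, hIMSE]
  have hleast := isLeast_weighted_sum_norm_sub_sum_smul_sq hortho τc
  have hinf := hleast.isGLB.ciInf_eq
  exact ⟨hinf, by rw [hinf, weighted_sum_norm_sub_sum_smul_sq hortho]; simp⟩

/-- for a T_{μμ}-orthonormal family φ_1,…,φ_K, the IMSE equals the total
variance minus Σ_k ‖T_{μτ}^* φ_k‖², and the infimum is attained at ψ_k = T_{μτ}^* φ_k. -/
theorem transfer_IMSE_formula_and_attainment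
    {H : Type*} [NormedAddCommGroup H] [InnerProductSpace ℝ H] [CompleteSpace H]
    [TopologicalSpace.SeparableSpace H]
    (G K : ℕ) (hG : 0 < G) (hK : 0 < K)
    (μ τ μc τc : Fin G → H)
    (hμc : ∀ g, μc g = μ g - (G : ℝ)⁻¹ • ∑ g', μ g')
    (hτc : ∀ g, τc g = τ g - (G : ℝ)⁻¹ • ∑ g', τ g')
    (Tμμ Tμτstar : H →L[ℝ] H)
    (hTμμ : ∀ h : H, Tμμ h = (G : ℝ)⁻¹ • ∑ g, ⟪μc g, h⟫_ℝ • μc g)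
    (hTμτstar : ∀ h : H, Tμτstar h = (G : ℝ)⁻¹ • ∑ g, ⟪μc g, h⟫_ℝ • τc g)
    (IMSE : (Fin K → H) → ℝ)
    (hIMSE : ∀ φ : Fin K → H, IMSE φ =
      ⨅ ψ : Fin K → H, (G : ℝ)⁻¹ * ∑ g, ‖τc g - ∑ k, ⟪μc g, φ k⟫_ℝ • ψ k‖ ^ 2)
    (φ : Fin K → H)
    (hnorm : ∀ k l, ⟪φ k, Tμμ (φ l)⟫_ℝ = if k = l then (1 : ℝ) else 0) :
    IMSE φ = (G : ℝ)⁻¹ * ∑ g, ‖τc g‖ ^ 2 - ∑ k, ‖Tμτstar (φ k)‖ ^ 2 ∧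
    (G : ℝ)⁻¹ * ∑ g, ‖τc g - ∑ k, ⟪μc g, φ k⟫_ℝ • Tμτstar (φ k)‖ ^ 2 = IMSE φ :=
  transfer_IMSE_formula_and_attainment_general G K μc τc Tμμ Tμτstar hTμμ hTμτstar IMSE hIMSE φ
    hnorm
end

section
/- Let T be a bounded, self-adjoint, nonnegative linear operator on a real Hilbert space H, let K be a positive integer and L ∈ (0, ∞), and let φ̃_1, …, φ̃_K ∈ H satisfy ⟨φ̃_k, T φ̃_l⟩ = δ_{kl} for all 1 ≤ k, l ≤ K and ‖φ̃_k‖ ≤ L for each k. Then there exist a₀ > 0 and a finite constant C, depending only on K and L, such that for every a ∈ (0, a₀) there exist φ̄_1, …, φ̄_K ∈ H with ⟨φ̄_k, (T + a·I) φ̄_l⟩ = δ_{kl} for all 1 ≤ k, l ≤ K and ‖φ̄_k − φ̃_k‖ ≤ C·a for each k. (This is the Gram–Schmidt perturbation step in the paper's proof of Theorem 3.1: a T-orthonormal family can be replaced by a nearby (T + aI)-orthonormal family at distance of order a.) -/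
open scoped InnerProductSpace

open scoped Matrix

universe u

private lemma inv_sqrt_bounds (x : ℝ) (hx : 0 ≤ x) :
    1 - x ≤ (Real.sqrt (1 + x))⁻¹ ∧ (Real.sqrt (1 + x))⁻¹ ≤ 1 := by
  set t := Real.sqrt (1 + x) with ht
  have ht1 : 1 ≤ t := Real.one_le_sqrt.2 (by linarith)
  have ht0 : 0 < t := by linarith
  have ht2 : t * t = 1 + x := Real.mul_self_sqrt (by linarith)
  constructor
  · have h : (1 - x) * t ≤ 1 := by
      nlinarith [mul_nonneg (sub_nonneg.2 ht1) (by nlinarith : (0:ℝ) ≤ t ^ 2 + t - 1)]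
    have := (le_div_iff₀ ht0).2 h
    rwa [one_div] at this
  · exact inv_le_one_of_one_le₀ ht1

/-- Gram–Schmidt perturbation step in the proof of Theorem 3.1:
a T-orthonormal family of norm at most L can be replaced by a nearby
(T + aI)-orthonormal family at distance of order a, with constants depending
only on K and L. -/
theorem gram_schmidt_perturbation
    (K : ℕ) (hK : 0 < K) (L : ℝ) (hL : 0 < L) :
    ∃ a₀ : ℝ, 0 < a₀ ∧ ∃ C : ℝ,
      ∀ (H : Type u) [NormedAddCommGroup H] [InnerProductSpace ℝ H] [CompleteSpace H],
      ∀ T : H →L[ℝ] H, IsSelfAdjoint T → (∀ x : H, 0 ≤ ⟪x, T x⟫_ℝ) →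
      ∀ φt : Fin K → H,
        (∀ k l, ⟪φt k, T (φt l)⟫_ℝ = if k = l then (1 : ℝ) else 0) →
        (∀ k, ‖φt k‖ ≤ L) →
      ∀ a : ℝ, 0 < a → a < a₀ →
        ∃ φb : Fin K → H,
          (∀ k l, ⟪φb k, T (φb l) + a • φb l⟫_ℝ = if k = l then (1 : ℝ) else 0) ∧
          ∀ k, ‖φb k - φt k‖ ≤ C * a := by
  classical
  refine ⟨1, one_pos, (K : ℝ)^2 * L^3, ?_⟩
  intro H _ _ _ T hT hTpos φt hortho hnorm a ha ha1
  -- the Gram matrix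
  set b : Matrix (Fin K) (Fin K) ℝ := Matrix.of (fun k l => ⟪φt k, φt l⟫_ℝ) with hbdef
  have hbapp : ∀ k l, b k l = ⟪φt k, φt l⟫_ℝ := fun k l => rfl
  have hb : b.IsHermitian := by
    ext k l
    simp only [Matrix.conjTranspose_apply, hbapp, star_trivial]
    exact real_inner_comm _ _
  have hbps : b.PosSemidef := by
    refine Matrix.posSemidef_iff_dotProduct_mulVec.mpr ⟨hb, fun x => ?_⟩
    have : dotProduct (star x) (b *ᵥ x) = ⟪∑ k, x k • φt k, ∑ l, x l • φt l⟫_ℝ := by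
      rw [sum_inner]
      simp only [dotProduct, Matrix.mulVec, dotProduct, star_trivial,
        Pi.star_apply, inner_sum, real_inner_smul_left, real_inner_smul_right, hbapp]
      refine Finset.sum_congr rfl fun k _ => ?_
      rw [Finset.mul_sum]
      refine Finset.sum_congr rfl fun l _ => by ring
    rw [this]
    exact real_inner_self_nonneg
  set U : Matrix (Fin K) (Fin K) ℝ := (hb.eigenvectorUnitary : Matrix (Fin K) (Fin K) ℝ)
    with hUdef
  have hU1 : U * star U = 1 := (Matrix.mem_unitaryGroup_iff).mp hb.eigenvectorUnitary.2
  have hU2 : star U * U = 1 := (Matrix.mem_unitaryGroup_iff').mp hb.eigenvectorUnitary.2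
  set d : Fin K → ℝ := hb.eigenvalues with hddef
  have hbspec : b = U * Matrix.diagonal d * star U := hb.spectral_theorem
  have hd0 : ∀ i, 0 ≤ d i := hbps.eigenvalues_nonneg
  -- eigenvalue bound via trace
  have htr : ∑ i, d i = b.trace := by
    rw [hbspec, Matrix.trace_mul_cycle, hU2, Matrix.one_mul, Matrix.trace_diagonal]
  have htrb : b.trace ≤ (K : ℝ) * L^2 := by
    rw [Matrix.trace]
    have : ∀ k : Fin K, b.diag k ≤ L^2 := by
      intro k
      rw [Matrix.diag_apply, hbapp, real_inner_self_eq_norm_sq]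
      have := hnorm k
      nlinarith [norm_nonneg (φt k)]
    calc ∑ k, b.diag k ≤ ∑ _k : Fin K, L^2 := Finset.sum_le_sum fun k _ => this k
      _ = (K : ℝ) * L^2 := by simp [mul_comm]
  have hdle : ∀ i, d i ≤ (K : ℝ) * L^2 := by
    intro i
    calc d i ≤ ∑ j, d j :=
          Finset.single_le_sum (fun j _ => hd0 j) (Finset.mem_univ i)
      _ = b.trace := htr
      _ ≤ (K : ℝ) * L^2 := htrb
  -- the inverse square root diagonal
  set s : Fin K → ℝ := fun i => (Real.sqrt (1 + a * d i))⁻¹ with hsdef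
  have hsb : ∀ i, |s i - 1| ≤ a * ((K : ℝ) * L^2) := by
    intro i
    have hx : 0 ≤ a * d i := mul_nonneg ha.le (hd0 i)
    obtain ⟨h1, h2⟩ := inv_sqrt_bounds (a * d i) hx
    have h3 : a * d i ≤ a * ((K : ℝ) * L^2) := mul_le_mul_of_nonneg_left (hdle i) ha.le
    have h0 : (0:ℝ) ≤ a * ((K : ℝ) * L^2) := by positivity
    simp only [hsdef]
    rw [abs_sub_le_iff]
    exact ⟨by linarith, by linarith⟩
  have hskey : ∀ i, s i * ((1 + a * d i) * s i) = 1 := by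
    intro i
    have hpos : (0:ℝ) < 1 + a * d i := by nlinarith [hd0 i]
    have hsq : Real.sqrt (1 + a * d i) * Real.sqrt (1 + a * d i) = 1 + a * d i :=
      Real.mul_self_sqrt hpos.le
    have hss : s i * s i = (1 + a * d i)⁻¹ := by
      simp only [hsdef]
      rw [← mul_inv, hsq]
    calc s i * ((1 + a * d i) * s i) = (1 + a * d i) * (s i * s i) := by ring
      _ = (1 + a * d i) * (1 + a * d i)⁻¹ := by rw [hss]
      _ = 1 := mul_inv_cancel₀ hpos.ne'
  set M : Matrix (Fin K) (Fin K) ℝ := U * Matrix.diagonal s * star U with hMdef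
  set G : Matrix (Fin K) (Fin K) ℝ := 1 + a • b with hGdef
  have hGspec : G = U * Matrix.diagonal (fun i => 1 + a * d i) * star U := by
    have h1 : (1 : Matrix (Fin K) (Fin K) ℝ) = U * (1 : Matrix (Fin K) (Fin K) ℝ) * star U := by
      rw [Matrix.mul_one, hU1]
    have hdiag : Matrix.diagonal (fun i => 1 + a * d i)
        = (1 : Matrix (Fin K) (Fin K) ℝ) + a • Matrix.diagonal d := by
      rw [← Matrix.diagonal_one, ← Matrix.diagonal_smul, ← Matrix.diagonal_add]
      rfl
    rw [hGdef, hdiag, Matrix.mul_add, Matrix.add_mul, ← h1, hbspec]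
    congr 1
    rw [Matrix.mul_smul, Matrix.smul_mul]
  have hcancel : ∀ X : Matrix (Fin K) (Fin K) ℝ, star U * (U * X) = X := by
    intro X; rw [← Matrix.mul_assoc, hU2, Matrix.one_mul]
  have hMGM : M * G * M = 1 := by
    rw [hGspec, hMdef]
    calc U * Matrix.diagonal s * star U * (U * Matrix.diagonal (fun i => 1 + a * d i) * star U)
          * (U * Matrix.diagonal s * star U)
        = U * (Matrix.diagonal s
            * (star U * (U * (Matrix.diagonal (fun i => 1 + a * d i)
            * (star U * (U * (Matrix.diagonal s * star U))))))) := by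
          simp only [Matrix.mul_assoc]
      _ = U * (Matrix.diagonal s * (Matrix.diagonal (fun i => 1 + a * d i)
            * (Matrix.diagonal s * star U))) := by rw [hcancel, hcancel]
      _ = U * ((Matrix.diagonal s * (Matrix.diagonal (fun i => 1 + a * d i)
            * Matrix.diagonal s)) * star U) := by simp only [Matrix.mul_assoc]
      _ = U * (Matrix.diagonal (fun i => s i * ((1 + a * d i) * s i)) * star U) := by
          rw [Matrix.diagonal_mul_diagonal, Matrix.diagonal_mul_diagonal]
      _ = U * (1 * star U) := by
          have hdiag1 : Matrix.diagonal (fun i => s i * ((1 + a * d i) * s i))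
              = (1 : Matrix (Fin K) (Fin K) ℝ) := by
            have : (fun i => s i * ((1 + a * d i) * s i)) = fun _ => (1:ℝ) := funext hskey
            rw [this, Matrix.diagonal_one]
          rw [hdiag1]
      _ = 1 := by rw [Matrix.one_mul, hU1]
  -- entry formulas
  have hMentry : ∀ k l, M k l = ∑ i, U k i * s i * U l i := by
    intro k l
    rw [hMdef, Matrix.mul_apply]
    refine Finset.sum_congr rfl fun i _ => ?_
    rw [Matrix.mul_diagonal, Matrix.star_apply, star_trivial]
  have hMsymm : ∀ k l, M k l = M l k := by
    intro k l
    rw [hMentry, hMentry]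
    exact Finset.sum_congr rfl fun i _ => by ring
  have hrow : ∀ k, ∑ i, U k i ^ 2 = 1 := by
    intro k
    have := congrFun (congrFun hU1 k) k
    rw [Matrix.mul_apply, Matrix.one_apply_eq] at this
    rw [← this]
    refine Finset.sum_congr rfl fun i _ => ?_
    rw [Matrix.star_apply, star_trivial, sq]
  have honeentry : ∀ k l, (1 : Matrix (Fin K) (Fin K) ℝ) k l = ∑ i, U k i * U l i := by
    intro k l
    rw [← hU1, Matrix.mul_apply]
    refine Finset.sum_congr rfl fun i _ => ?_
    rw [Matrix.star_apply, star_trivial]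
  -- entry bound on M - 1
  have hMbd : ∀ k l, |M k l - (1 : Matrix (Fin K) (Fin K) ℝ) k l| ≤ a * ((K : ℝ) * L^2) := by
    intro k l
    rw [hMentry, honeentry, ← Finset.sum_sub_distrib]
    have hterm : ∀ i, U k i * s i * U l i - U k i * U l i = U k i * (s i - 1) * U l i := by
      intro i; ring
    simp only [hterm]
    calc |∑ i, U k i * (s i - 1) * U l i| ≤ ∑ i, |U k i * (s i - 1) * U l i| :=
          Finset.abs_sum_le_sum_abs _ _
      _ ≤ ∑ i, |U k i| * (a * ((K : ℝ) * L^2)) * |U l i| := by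
          refine Finset.sum_le_sum fun i _ => ?_
          rw [abs_mul, abs_mul]
          exact mul_le_mul_of_nonneg_right
            (mul_le_mul_of_nonneg_left (hsb i) (abs_nonneg _)) (abs_nonneg _)
      _ = (a * ((K : ℝ) * L^2)) * ∑ i, |U k i| * |U l i| := by
          rw [Finset.mul_sum]; exact Finset.sum_congr rfl fun i _ => by ring
      _ ≤ (a * ((K : ℝ) * L^2)) * 1 := by
          refine mul_le_mul_of_nonneg_left ?_ (by positivity)
          have hcs := Finset.sum_mul_sq_le_sq_mul_sq Finset.univ
            (fun i => |U k i|) (fun i => |U l i|)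
          simp only [sq_abs] at hcs
          rw [hrow, hrow, mul_one] at hcs
          have hnn : 0 ≤ ∑ i, |U k i| * |U l i| :=
            Finset.sum_nonneg fun i _ => mul_nonneg (abs_nonneg _) (abs_nonneg _)
          nlinarith [hcs]
      _ = a * ((K : ℝ) * L^2) := mul_one _
  -- define the new family
  set φb : Fin K → H := fun k => ∑ i, M k i • φt i with hφbdef
  refine ⟨φb, ?_, ?_⟩
  · intro k l
    have hexp : T (φb l) + a • φb l = ∑ j, M l j • (T (φt j) + a • φt j) := by
      rw [hφbdef]
      simp only [map_sum, map_smul, Finset.smul_sum, ← Finset.sum_add_distrib, smul_add]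
      refine Finset.sum_congr rfl fun j _ => ?_
      rw [smul_comm]
    have lhs_eq : ⟪φb k, T (φb l) + a • φb l⟫_ℝ
        = ∑ i, ∑ j, M k i * (G i j * M l j) := by
      rw [hexp, hφbdef]
      rw [sum_inner]
      refine Finset.sum_congr rfl fun i _ => ?_
      rw [real_inner_smul_left, inner_sum, Finset.mul_sum]
      refine Finset.sum_congr rfl fun j _ => ?_
      rw [real_inner_smul_right, inner_add_right, real_inner_smul_right]
      have hG : G i j = (if i = j then (1:ℝ) else 0) + a * b i j := by
        rw [hGdef, Matrix.add_apply, Matrix.smul_apply, Matrix.one_apply, smul_eq_mul]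
      rw [hG, hortho, hbapp]
      ring
    have rhs_eq : (M * G * M) k l = ∑ i, ∑ j, M k i * (G i j * M l j) := by
      rw [Matrix.mul_apply]
      rw [Finset.sum_comm]
      refine Finset.sum_congr rfl fun j _ => ?_
      rw [Matrix.mul_apply, Finset.sum_mul]
      refine Finset.sum_congr rfl fun i _ => ?_
      rw [hMsymm l j]
      ring
    rw [lhs_eq, ← rhs_eq, hMGM, Matrix.one_apply]
  · intro k
    have hdiff : φb k - φt k = ∑ i, (M k i - (1 : Matrix (Fin K) (Fin K) ℝ) k i) • φt i := by
      rw [hφbdef]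
      simp only [sub_smul, Finset.sum_sub_distrib]
      congr 1
      simp [Matrix.one_apply, ite_smul]
    rw [hdiff]
    calc ‖∑ i, (M k i - (1 : Matrix (Fin K) (Fin K) ℝ) k i) • φt i‖
        ≤ ∑ i, ‖(M k i - (1 : Matrix (Fin K) (Fin K) ℝ) k i) • φt i‖ :=
          norm_sum_le _ _
      _ ≤ ∑ _i : Fin K, (a * ((K : ℝ) * L^2)) * L := by
          refine Finset.sum_le_sum fun i _ => ?_
          rw [norm_smul, Real.norm_eq_abs]
          exact mul_le_mul (hMbd k i) (hnorm i) (norm_nonneg _) (by positivity)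
      _ = (K : ℝ) * ((a * ((K : ℝ) * L^2)) * L) := by simp [mul_comm]
      _ = (K : ℝ)^2 * L^3 * a := by ring
end

section
/- Assume additionally that C₂ := Σ_{j,l} c_{jl}²/ν_j² < ∞, and define the bounded operators T_{μμ} h := Σ_j ν_j·⟨ξ_j, h⟩·ξ_j and T_{μτ} h := Σ_{j,l} c_{jl}·⟨ζ_l, h⟩·ξ_j on H. Let λ > 0 and let χ ∈ H be a unit vector with D D^* χ = λ·χ. Then the series φ := λ^{−1}·Σ_j ν_j^{−1/2}·⟨ξ_j, D D^* χ⟩·ξ_j converges in H, with ‖φ‖ ≤ λ^{−1}·√(C₀·C₂) and ⟨φ, T_{μμ} φ⟩ = 1, and φ solves the unregularized generalized eigenvalue problem T_{μτ} T_{μτ}^* φ = λ·T_{μμ} φ. (This makes precise the existence and norm-bound claims in Proposition 3.1: eigenvectors of S = D D^* at positive eigenvalues give rise to square-integrable solutions φ = T_{μμ}^{−1/2} χ of the generalized eigenvalue problem.) -/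
open scoped InnerProductSpace

section AuxEV

variable {H : Type*} [NormedAddCommGroup H] [InnerProductSpace ℝ H]

lemma auxEV_coeff_single {ι : Type*} {ξ : ι → H} (hξ : Orthonormal ℝ ξ) {f : ι → ℝ} {x : H}
    (hx : HasSum (fun j => f j • ξ j) x) (i : ι) : ⟪ξ i, x⟫_ℝ = f i := by
  classical
  have h := hx.mapL (innerSL ℝ (ξ i))
  simp only [innerSL_apply_apply, real_inner_smul_right] at h
  have he : (fun j => f j * ⟪ξ i, ξ j⟫_ℝ) = fun j => if j = i then f i else 0 := by
    funext j
    rw [orthonormal_iff_ite.mp hξ]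
    rcases eq_or_ne j i with rfl | hne
    · simp
    · simp [hne, Ne.symm hne]
  rw [he] at h
  exact h.unique (hasSum_ite_eq i (f i))

lemma auxEV_coeff_double {ξ : ℕ → H} (hξ : Orthonormal ℝ ξ) {F : ℕ × ℕ → ℝ} {x : H}
    (hx : HasSum (fun jl : ℕ × ℕ => F jl • ξ jl.1) x) (j : ℕ) :
    HasSum (fun l => F (j, l)) ⟪ξ j, x⟫_ℝ := by
  classical
  have h := hx.mapL (innerSL ℝ (ξ j))
  simp only [innerSL_apply_apply, real_inner_smul_right] at h
  have he : (fun jl : ℕ × ℕ => F jl * ⟪ξ j, ξ jl.1⟫_ℝ)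
      = fun jl : ℕ × ℕ => if jl.1 = j then F jl else 0 := by
    funext jl
    rw [orthonormal_iff_ite.mp hξ]
    rcases eq_or_ne jl.1 j with hj | hne
    · simp [hj]
    · simp [hne, Ne.symm hne]
  rw [he] at h
  have hinj : Function.Injective (fun l : ℕ => ((j, l) : ℕ × ℕ)) := by
    intro a b hab
    simpa using congrArg Prod.snd hab
  have hsupp : ∀ jl : ℕ × ℕ, jl ∉ Set.range (fun l : ℕ => ((j, l) : ℕ × ℕ)) →
      (if jl.1 = j then F jl else 0) = 0 := by
    intro jl hjl
    have hne : jl.1 ≠ j := by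
      intro hc
      exact hjl ⟨jl.2, by rw [Prod.ext_iff]; exact ⟨hc.symm, rfl⟩⟩
    simp [hne]
  have h2 := (hinj.hasSum_iff hsupp).mpr h
  have he2 : ((fun jl : ℕ × ℕ => if jl.1 = j then F jl else 0) ∘ fun l : ℕ => ((j, l) : ℕ × ℕ))
      = fun l => F (j, l) := by funext l; simp
  rwa [he2] at h2

lemma auxEV_mem_closure {ι : Type*} {S : Set H} {f : ι → H} {x : H}
    (hx : HasSum f x) (hf : ∀ i, f i ∈ Submodule.span ℝ S) :
    x ∈ (Submodule.span ℝ S).topologicalClosure := by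
  rw [← SetLike.mem_coe, Submodule.topologicalClosure_coe]
  exact mem_closure_of_tendsto hx
    (Filter.Eventually.of_forall fun s => Submodule.sum_mem _ fun i _ => hf i)

lemma auxEV_unique {ι : Type*} [CompleteSpace H] {ξ : ι → H} {x y : H}
    (hx : x ∈ (Submodule.span ℝ (Set.range ξ)).topologicalClosure)
    (hy : y ∈ (Submodule.span ℝ (Set.range ξ)).topologicalClosure)
    (h : ∀ i, ⟪ξ i, x⟫_ℝ = ⟪ξ i, y⟫_ℝ) : x = y := by
  set K := Submodule.span ℝ (Set.range ξ) with hKdef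
  have hz : x - y ∈ Kᗮ := by
    rw [Submodule.mem_orthogonal]
    intro u hu
    induction hu using Submodule.span_induction with
    | mem v hv =>
      obtain ⟨i, rfl⟩ := hv
      rw [inner_sub_right, h i, sub_self]
    | zero => simp
    | add a b _ _ ha hb => rw [inner_add_left, ha, hb, add_zero]
    | smul r a _ ha => rw [real_inner_smul_left, ha, mul_zero]
  have hmem : x - y ∈ Kᗮᗮ := by
    rw [Submodule.orthogonal_orthogonal_eq_closure]
    exact Submodule.sub_mem _ hx hy
  have hzero : x - y = 0 := by
    have := (Submodule.orthogonal_disjoint Kᗮ)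
    exact Submodule.disjoint_def.mp this _ hz hmem
  exact sub_eq_zero.mp hzero

lemma auxEV_summable {ξ : ℕ → H} (hξ : Orthonormal ℝ ξ) [CompleteSpace H] {f : ℕ → ℝ}
    (hf : Summable fun j => f j ^ 2) : Summable fun j => f j • ξ j := by
  rw [summable_iff_vanishing_norm]
  intro ε hε
  obtain ⟨s, hs⟩ := summable_iff_vanishing_norm.mp hf (ε ^ 2) (by positivity)
  refine ⟨s, fun t ht => ?_⟩
  have h1 : ‖∑ i ∈ t, f i • ξ i‖ ^ 2 = ∑ i ∈ t, f i ^ 2 := by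
    have h2 := hξ.inner_sum f f t
    simp only [starRingEnd_apply, star_trivial] at h2
    rw [real_inner_self_eq_norm_sq] at h2
    rw [h2]
    exact Finset.sum_congr rfl fun i _ => (sq (f i)).symm
  have h3 := hs t ht
  rw [Real.norm_eq_abs] at h3
  have h4 : ∑ i ∈ t, f i ^ 2 < ε ^ 2 := lt_of_abs_lt h3
  have h5 : ‖∑ i ∈ t, f i • ξ i‖ ^ 2 < ε ^ 2 := h1 ▸ h4
  calc ‖∑ i ∈ t, f i • ξ i‖ = |‖∑ i ∈ t, f i • ξ i‖| := (abs_of_nonneg (norm_nonneg _)).symm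
    _ < ε := abs_lt_of_sq_lt_sq (by simpa [sq_abs] using h5) hε.le

lemma auxEV_parseval {ξ : ℕ → H} (hξ : Orthonormal ℝ ξ) {f : ℕ → ℝ} {x : H}
    (hx : HasSum (fun j => f j • ξ j) x) : HasSum (fun j => f j ^ 2) (‖x‖ ^ 2) := by
  have h := hx.mapL (innerSL ℝ x)
  simp only [innerSL_apply_apply, real_inner_smul_right] at h
  have he : (fun j => f j * ⟪x, ξ j⟫_ℝ) = fun j => f j ^ 2 := by
    funext j
    rw [real_inner_comm, auxEV_coeff_single hξ hx j]
    ring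
  rw [he, real_inner_self_eq_norm_sq] at h
  exact h

lemma auxEV_tsum_cs {u v : ℕ → ℝ} (hu : Summable fun n => u n ^ 2)
    (hv : Summable fun n => v n ^ 2) :
    (∑' n, u n * v n) ^ 2 ≤ (∑' n, u n ^ 2) * ∑' n, v n ^ 2 := by
  have habs : Summable fun n => |u n * v n| := by
    refine Summable.of_nonneg_of_le (fun n => abs_nonneg _) (fun n => ?_)
      ((hu.add hv).mul_left (1 / 2))
    rw [abs_mul]
    nlinarith [sq_nonneg (|u n| - |v n|), sq_abs (u n), sq_abs (v n)]
  have huv : Summable fun n => u n * v n := habs.of_abs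
  have key : ∀ s : Finset ℕ, (∑ n ∈ s, u n * v n) ^ 2 ≤ (∑' n, u n ^ 2) * ∑' n, v n ^ 2 := by
    intro s
    calc (∑ n ∈ s, u n * v n) ^ 2 ≤ (∑ n ∈ s, u n ^ 2) * ∑ n ∈ s, v n ^ 2 :=
          Finset.sum_mul_sq_le_sq_mul_sq s u v
      _ ≤ (∑' n, u n ^ 2) * ∑' n, v n ^ 2 := by
          apply mul_le_mul
          · exact Summable.sum_le_tsum s (fun i _ => sq_nonneg _) hu
          · exact Summable.sum_le_tsum s (fun i _ => sq_nonneg _) hv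
          · positivity
          · exact tsum_nonneg fun i => sq_nonneg _
  have htend : Filter.Tendsto (fun s : Finset ℕ => (∑ n ∈ s, u n * v n) ^ 2)
      Filter.atTop (nhds ((∑' n, u n * v n) ^ 2)) := huv.hasSum.pow 2
  exact le_of_tendsto htend (Filter.Eventually.of_forall key)

end AuxEV

/-- Proposition 3.1, existence/norm bound: eigenvectors of S = D D* at
positive eigenvalues give rise to square-integrable solutions φ = T_{μμ}^{-1/2} χ of the
unregularized generalized eigenvalue problem T_{μτ} T_{μτ}^* φ = λ T_{μμ} φ. -/
theorem unregularized_eigenproblem_solution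
    {H : Type*} [NormedAddCommGroup H] [InnerProductSpace ℝ H] [CompleteSpace H]
    [TopologicalSpace.SeparableSpace H]
    (ξ ζ : ℕ → H) (hξ : Orthonormal ℝ ξ) (hζ : Orthonormal ℝ ζ)
    (ν : ℕ → ℝ) (hν : ∀ j, 0 < ν j) (hνbd : BddAbove (Set.range ν))
    (c : ℕ → ℕ → ℝ) (C₀ C₂ : ℝ)
    (hC₀ : HasSum (fun jl : ℕ × ℕ => (c jl.1 jl.2) ^ 2 / ν jl.1) C₀)
    (hC₂ : HasSum (fun jl : ℕ × ℕ => (c jl.1 jl.2) ^ 2 / (ν jl.1) ^ 2) C₂)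
    (D : H →L[ℝ] H)
    (hD : ∀ h : H, HasSum
      (fun jl : ℕ × ℕ =>
        ((Real.sqrt (ν jl.1))⁻¹ * c jl.1 jl.2 * ⟪ζ jl.2, h⟫_ℝ) • ξ jl.1) (D h))
    (Tμμ : H →L[ℝ] H)
    (hTμμ : ∀ h : H, HasSum (fun j : ℕ => (ν j * ⟪ξ j, h⟫_ℝ) • ξ j) (Tμμ h))
    (Tμτ : H →L[ℝ] H)
    (hTμτ : ∀ h : H, HasSum
      (fun jl : ℕ × ℕ => (c jl.1 jl.2 * ⟪ζ jl.2, h⟫_ℝ) • ξ jl.1) (Tμτ h))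
    (lam : ℝ) (hlam : 0 < lam)
    (χ : H) (hχ : ‖χ‖ = 1)
    (heig : D (ContinuousLinearMap.adjoint D χ) = lam • χ) :
    ∃ φ : H,
      HasSum (fun j : ℕ =>
        (lam⁻¹ * (Real.sqrt (ν j))⁻¹ *
          ⟪ξ j, D (ContinuousLinearMap.adjoint D χ)⟫_ℝ) • ξ j) φ ∧
      ‖φ‖ ≤ lam⁻¹ * Real.sqrt (C₀ * C₂) ∧
      ⟪φ, Tμμ φ⟫_ℝ = 1 ∧
      Tμτ (ContinuousLinearMap.adjoint Tμτ φ) = lam • Tμμ φ := by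
  classical
  set Dstar := ContinuousLinearMap.adjoint D with hDstar
  set b : ℕ → ℝ := fun j => ⟪ξ j, χ⟫_ℝ with hb
  set g : ℕ → ℝ := fun l => ⟪ζ l, Dstar χ⟫_ℝ with hg
  have hsq : ∀ j, Real.sqrt (ν j) ≠ 0 := fun j => (Real.sqrt_pos.mpr (hν j)).ne'
  have hsqsq : ∀ j, Real.sqrt (ν j) * Real.sqrt (ν j) = ν j :=
    fun j => Real.mul_self_sqrt (hν j).le
  have hDχ := hD (Dstar χ)
  -- coefficients of D D* χ
  have hcoefD : ∀ j, ⟪ξ j, D (Dstar χ)⟫_ℝ = lam * b j := by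
    intro j
    rw [heig, real_inner_smul_right]
  -- fiberwise sums
  have hfib : ∀ j, HasSum (fun l => (Real.sqrt (ν j))⁻¹ * c j l * g l) (lam * b j) := by
    intro j
    have h := auxEV_coeff_double hξ hDχ j
    rwa [hcoefD j] at h
  have hfib' : ∀ j, HasSum (fun l => c j l * g l) (Real.sqrt (ν j) * (lam * b j)) := by
    intro j
    have h := (hfib j).mul_left (Real.sqrt (ν j))
    have he : (fun l => Real.sqrt (ν j) * ((Real.sqrt (ν j))⁻¹ * c j l * g l))
        = fun l => c j l * g l := by
      funext l
      rw [show (Real.sqrt (ν j))⁻¹ * c j l * g l = (Real.sqrt (ν j))⁻¹ * (c j l * g l)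
        from by ring, mul_inv_cancel_left₀ (hsq j)]
    rwa [he] at h
  -- ‖D* χ‖² = lam
  have hDn : ⟪Dstar χ, Dstar χ⟫_ℝ = lam := by
    rw [hDstar, ContinuousLinearMap.adjoint_inner_left, heig, real_inner_smul_right]
    have : ⟪χ, χ⟫_ℝ = 1 := by
      rw [real_inner_self_eq_norm_sq, hχ]; norm_num
    rw [this, mul_one]
  -- Bessel
  have hg2 : Summable fun l => g l ^ 2 := by
    have h := hζ.inner_products_summable (Dstar χ)
    simpa [Real.norm_eq_abs, sq_abs] using h
  have hg2le : (∑' l, g l ^ 2) ≤ lam := by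
    have h := hζ.tsum_inner_products_le (Dstar χ)
    rw [← real_inner_self_eq_norm_sq, hDn] at h
    simpa [Real.norm_eq_abs, sq_abs] using h
  -- fiber sums of squares of c
  set A : ℕ → ℝ := fun j => ∑' l, c j l ^ 2 with hA
  have hcsum : ∀ j, Summable fun l => c j l ^ 2 := by
    intro j
    have h := (hC₀.summable.prod_factor j).mul_left (ν j)
    have he : (fun l => ν j * (c j l ^ 2 / ν j)) = fun l => c j l ^ 2 := by
      funext l; rw [mul_div_cancel₀ _ (hν j).ne']
    rwa [he] at h
  have hAnn : ∀ j, 0 ≤ A j := fun j => tsum_nonneg fun l => sq_nonneg _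
  have hAC₀ : HasSum (fun j => A j / ν j) C₀ := by
    refine hC₀.prod_fiberwise fun j => ?_
    have h := (hcsum j).hasSum.div_const (ν j)
    exact h
  have hAC₂ : HasSum (fun j => A j / ν j ^ 2) C₂ := by
    refine hC₂.prod_fiberwise fun j => ?_
    have h := (hcsum j).hasSum.div_const (ν j ^ 2)
    exact h
  have hC₂nn : 0 ≤ C₂ :=
    hasSum_le (fun jl => by positivity) hasSum_zero hC₂
  -- key bound : ν j * (lam * b j)^2 ≤ A j * lam
  have hkey : ∀ j, ν j * (lam * b j) ^ 2 ≤ A j * lam := by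
    intro j
    have h1 : (∑' l, c j l * g l) ^ 2 ≤ A j * ∑' l, g l ^ 2 :=
      auxEV_tsum_cs (hcsum j) hg2
    have h2 : (∑' l, c j l * g l) = Real.sqrt (ν j) * (lam * b j) := (hfib' j).tsum_eq
    rw [h2] at h1
    have h3 : (Real.sqrt (ν j) * (lam * b j)) ^ 2 = ν j * (lam * b j) ^ 2 := by
      rw [mul_pow, sq, hsqsq j]
    rw [h3] at h1
    calc ν j * (lam * b j) ^ 2 ≤ A j * ∑' l, g l ^ 2 := h1
      _ ≤ A j * lam := mul_le_mul_of_nonneg_left hg2le (hAnn j)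
  -- Parseval-type : HasSum (fun j => (lam * b j)^2) (lam ^ 2)
  have hlb2 : HasSum (fun j => (lam * b j) ^ 2) (lam ^ 2) := by
    have h := hDχ.mapL (innerSL ℝ (D (Dstar χ)))
    simp only [innerSL_apply_apply, real_inner_smul_right] at h
    have hval : ⟪D (Dstar χ), D (Dstar χ)⟫_ℝ = lam ^ 2 := by
      rw [heig, real_inner_smul_right, real_inner_smul_left, real_inner_self_eq_norm_sq, hχ]
      ring
    rw [hval] at h
    refine h.prod_fiberwise fun j => ?_
    have h2 := (hfib j).mul_right (lam * b j)
    have he : (fun l => (Real.sqrt (ν j))⁻¹ * c j l * g l * (lam * b j))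
        = fun l => (Real.sqrt (ν j))⁻¹ * c j l * ⟪ζ l, Dstar χ⟫_ℝ *
            ⟪D (Dstar χ), ξ j⟫_ℝ := by
      funext l
      rw [real_inner_comm (ξ j) (D (Dstar χ)), hcoefD j]
    rw [he] at h2
    have he2 : lam * b j * (lam * b j) = (lam * b j) ^ 2 := by ring
    rwa [he2] at h2
  -- lam ≤ C₀
  have hlamC₀ : lam ≤ C₀ := by
    have h1 : lam ^ 2 ≤ ∑' j, A j / ν j * lam := by
      rw [← hlb2.tsum_eq]
      refine Summable.tsum_le_tsum (fun j => ?_) hlb2.summable (hAC₀.summable.mul_right lam)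
      have := hkey j
      rw [div_mul_eq_mul_div, le_div_iff₀ (hν j)]
      nlinarith [hkey j]
    have h2 : (∑' j, A j / ν j * lam) = C₀ * lam := by
      rw [tsum_mul_right, hAC₀.tsum_eq]
    rw [h2] at h1
    nlinarith
  -- coefficients of φ
  set w : ℕ → ℝ := fun j => (Real.sqrt (ν j))⁻¹ * b j with hw
  have hwsq : ∀ j, w j ^ 2 ≤ lam⁻¹ * (A j / ν j ^ 2) := by
    intro j
    have hw2 : w j ^ 2 = (ν j)⁻¹ * b j ^ 2 := by
      show ((Real.sqrt (ν j))⁻¹ * b j) ^ 2 = (ν j)⁻¹ * b j ^ 2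
      rw [mul_pow, inv_pow, Real.sq_sqrt (hν j).le]
    have hb2 : b j ^ 2 ≤ A j / (ν j * lam) := by
      rw [le_div_iff₀ (mul_pos (hν j) hlam)]
      nlinarith [hkey j, hlam, hν j]
    rw [hw2]
    calc (ν j)⁻¹ * b j ^ 2 ≤ (ν j)⁻¹ * (A j / (ν j * lam)) :=
          mul_le_mul_of_nonneg_left hb2 (inv_nonneg.mpr (hν j).le)
      _ = lam⁻¹ * (A j / ν j ^ 2) := by
          rw [div_eq_mul_inv, div_eq_mul_inv, mul_inv, sq, mul_inv]
          ring
  have hw2sum : Summable fun j => w j ^ 2 :=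
    Summable.of_nonneg_of_le (fun j => sq_nonneg _) hwsq (hAC₂.summable.mul_left lam⁻¹)
  have hφsum : Summable fun j => w j • ξ j := auxEV_summable hξ hw2sum
  obtain ⟨φ, hφ⟩ := hφsum
  -- the coefficient function in the goal equals w
  have hgoalcoef : (fun j : ℕ => (lam⁻¹ * (Real.sqrt (ν j))⁻¹ *
      ⟪ξ j, D (Dstar χ)⟫_ℝ) • ξ j) = fun j => w j • ξ j := by
    funext j
    rw [hcoefD j, hw]
    congr 1
    rw [show lam⁻¹ * (Real.sqrt (ν j))⁻¹ * (lam * b j)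
        = lam⁻¹ * lam * ((Real.sqrt (ν j))⁻¹ * b j) from by ring,
      inv_mul_cancel₀ hlam.ne', one_mul]
  -- membership in closed span of ξ
  set K := (Submodule.span ℝ (Set.range ξ)).topologicalClosure with hK
  have hφK : φ ∈ K := auxEV_mem_closure hφ fun j =>
    Submodule.smul_mem _ _ (Submodule.subset_span ⟨j, rfl⟩)
  have hφcoef : ∀ j, ⟪ξ j, φ⟫_ℝ = w j := fun j => auxEV_coeff_single hξ hφ j
  -- norm bound
  have hφnorm : ‖φ‖ ≤ lam⁻¹ * Real.sqrt (C₀ * C₂) := by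
    have hns : HasSum (fun j => w j ^ 2) (‖φ‖ ^ 2) := auxEV_parseval hξ hφ
    have h1 : ‖φ‖ ^ 2 ≤ lam⁻¹ * C₂ := by
      rw [← hns.tsum_eq]
      calc (∑' j, w j ^ 2) ≤ ∑' j, lam⁻¹ * (A j / ν j ^ 2) :=
            Summable.tsum_le_tsum hwsq hw2sum (hAC₂.summable.mul_left lam⁻¹)
        _ = lam⁻¹ * C₂ := by rw [tsum_mul_left, hAC₂.tsum_eq]
    have hC₀nn : 0 ≤ C₀ := hlam.le.trans hlamC₀
    have h2 : lam⁻¹ * C₂ ≤ (lam⁻¹ * Real.sqrt (C₀ * C₂)) ^ 2 := by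
      have heq : (lam⁻¹ * Real.sqrt (C₀ * C₂)) ^ 2 = lam⁻¹ ^ 2 * (C₀ * C₂) := by
        rw [mul_pow, Real.sq_sqrt (mul_nonneg hC₀nn hC₂nn)]
      rw [heq]
      have h3 : lam⁻¹ * C₂ = lam⁻¹ ^ 2 * (lam * C₂) := by
        field_simp
      rw [h3]
      exact mul_le_mul_of_nonneg_left
        (mul_le_mul_of_nonneg_right hlamC₀ hC₂nn) (by positivity)
    have h4 : ‖φ‖ ^ 2 ≤ (lam⁻¹ * Real.sqrt (C₀ * C₂)) ^ 2 := h1.trans h2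
    have h5 := Real.sqrt_le_sqrt h4
    rwa [Real.sqrt_sq (norm_nonneg φ),
      Real.sqrt_sq (by positivity : (0:ℝ) ≤ lam⁻¹ * Real.sqrt (C₀ * C₂))] at h5
  -- inner product normalization
  have hbsq : HasSum (fun j => b j ^ 2) 1 := by
    have h := hlb2.mul_left (lam⁻¹ ^ 2)
    have he : (fun j => lam⁻¹ ^ 2 * (lam * b j) ^ 2) = fun j => b j ^ 2 := by
      funext j; field_simp
    have he2 : lam⁻¹ ^ 2 * lam ^ 2 = 1 := by field_simp
    rwa [he, he2] at h
  have hinner : ⟪φ, Tμμ φ⟫_ℝ = 1 := by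
    have h := (hTμμ φ).mapL (innerSL ℝ φ)
    simp only [innerSL_apply_apply, real_inner_smul_right] at h
    have he : (fun j => ν j * ⟪ξ j, φ⟫_ℝ * ⟪φ, ξ j⟫_ℝ) = fun j => b j ^ 2 := by
      funext j
      rw [real_inner_comm (ξ j) φ, hφcoef j]
      show ν j * ((Real.sqrt (ν j))⁻¹ * b j) * ((Real.sqrt (ν j))⁻¹ * b j) = b j ^ 2
      have hinv : (Real.sqrt (ν j))⁻¹ * (Real.sqrt (ν j))⁻¹ = (ν j)⁻¹ := by
        rw [← mul_inv, hsqsq j]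
      calc ν j * ((Real.sqrt (ν j))⁻¹ * b j) * ((Real.sqrt (ν j))⁻¹ * b j)
          = ν j * ((Real.sqrt (ν j))⁻¹ * (Real.sqrt (ν j))⁻¹) * (b j * b j) := by ring
        _ = b j ^ 2 := by rw [hinv, mul_inv_cancel₀ (hν j).ne', one_mul, sq]
    rw [he] at h
    exact h.unique hbsq
  -- adjoint identity
  have hadj : ContinuousLinearMap.adjoint Tμτ φ = Dstar χ := by
    apply ext_inner_right ℝ
    intro h
    rw [ContinuousLinearMap.adjoint_inner_left, hDstar,
      ContinuousLinearMap.adjoint_inner_left]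
    have h1 := (hTμτ h).mapL (innerSL ℝ φ)
    have h2 := (hD h).mapL (innerSL ℝ χ)
    simp only [innerSL_apply_apply, real_inner_smul_right] at h1 h2
    refine h1.unique ?_
    have he : (fun jl : ℕ × ℕ => (Real.sqrt (ν jl.1))⁻¹ * c jl.1 jl.2 * ⟪ζ jl.2, h⟫_ℝ *
        ⟪χ, ξ jl.1⟫_ℝ) = fun jl : ℕ × ℕ => c jl.1 jl.2 * ⟪ζ jl.2, h⟫_ℝ * ⟪φ, ξ jl.1⟫_ℝ := by
      funext jl
      rw [real_inner_comm (ξ jl.1) φ, hφcoef jl.1, real_inner_comm (ξ jl.1) χ]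
      show (Real.sqrt (ν jl.1))⁻¹ * c jl.1 jl.2 * ⟪ζ jl.2, h⟫_ℝ * b jl.1
        = c jl.1 jl.2 * ⟪ζ jl.2, h⟫_ℝ * ((Real.sqrt (ν jl.1))⁻¹ * b jl.1)
      ring
    rwa [he] at h2
  -- final identity
  have hfinal : Tμτ (Dstar χ) = lam • Tμμ φ := by
    have h1 := hTμτ (Dstar χ)
    have hx1 : Tμτ (Dstar χ) ∈ K := auxEV_mem_closure h1 fun jl =>
      Submodule.smul_mem _ _ (Submodule.subset_span ⟨jl.1, rfl⟩)
    have hx2 : Tμμ φ ∈ K := auxEV_mem_closure (hTμμ φ) fun j =>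
      Submodule.smul_mem _ _ (Submodule.subset_span ⟨j, rfl⟩)
    have hx2' : lam • Tμμ φ ∈ K := Submodule.smul_mem _ _ hx2
    refine auxEV_unique hx1 hx2' fun j => ?_
    have hc1 : ⟪ξ j, Tμτ (Dstar χ)⟫_ℝ = Real.sqrt (ν j) * (lam * b j) :=
      (auxEV_coeff_double hξ h1 j).unique (hfib' j)
    have hc2 : ⟪ξ j, Tμμ φ⟫_ℝ = ν j * w j := by
      rw [auxEV_coeff_single hξ (hTμμ φ) j, hφcoef j]
    rw [hc1, real_inner_smul_right, hc2]
    show Real.sqrt (ν j) * (lam * b j) = lam * (ν j * ((Real.sqrt (ν j))⁻¹ * b j))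
    have hinv2 : ν j * (Real.sqrt (ν j))⁻¹ = Real.sqrt (ν j) := by
      field_simp [hsq j]
      exact (Real.sq_sqrt (hν j).le).symm
    rw [show lam * (ν j * ((Real.sqrt (ν j))⁻¹ * b j))
        = ν j * (Real.sqrt (ν j))⁻¹ * (lam * b j) from by ring, hinv2]
  exact ⟨φ, by rw [hgoalcoef]; exact hφ, hφnorm, hinner, by rw [hadj, hfinal]⟩
end

section
/- Assume that the rank of T_{μμ} is at least K. Then: (i) there exist real numbers λ_1 ≥ … ≥ λ_K ≥ 0 and vectors φ_1^*, …, φ_K^* ∈ H with T_{μτ} T_{μτ}^* φ_k^* = λ_k·T_{μμ} φ_k^* and ⟨φ_k^*, T_{μμ} φ_l^*⟩ = δ_{kl} for all 1 ≤ k, l ≤ K, such that IMSE_K[φ_1^*, …, φ_K^*] = IMSE_K^*; and (ii) there exist a finite constant C and a₀ > 0 such that for every a ∈ (0, a₀) there exist real numbers λ_{1a} ≥ … ≥ λ_{Ka} ≥ 0 and vectors φ_{1a}, …, φ_{Ka} ∈ H with T_{μτ} T_{μτ}^* φ_{ka} = λ_{ka}·(T_{μμ} + a·I) φ_{ka} and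 ⟨φ_{ka}, (T_{μμ} + a·I) φ_{la}⟩ = δ_{kl}, such that IMSE_K[φ_{1a}, …, φ_{Ka}] ≤ IMSE_K^* + C·a. (This is Proposition 3.1 in the design-based finite-population setting, where the summability condition (19) of the paper holds automatically: the unregularized optimal basis exists and attains IMSE_K^*, and regularized solutions achieve IMSE_K^* up to an error linear in the regularization parameter a.) -/
open scoped InnerProductSpace
open Finset


section Diag
variable {E : Type*} [NormedAddCommGroup E] [InnerProductSpace ℝ E]

/-- Diagonal operator in an orthonormal basis. -/
noncomputable def diagMap {m : ℕ} (u : OrthonormalBasis (Fin m) ℝ E) (c : Fin m → ℝ) :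
    E →ₗ[ℝ] E where
  toFun x := ∑ j, (c j * ⟪u j, x⟫_ℝ) • u j
  map_add' x y := by
    simp only [inner_add_right, mul_add, add_smul, Finset.sum_add_distrib]
  map_smul' r x := by
    simp only [inner_smul_right, RingHom.id_apply, Finset.smul_sum, smul_smul]
    apply Finset.sum_congr rfl; intro j _; ring_nf

lemma diagMap_apply {m : ℕ} (u : OrthonormalBasis (Fin m) ℝ E) (c : Fin m → ℝ) (x : E) :
    diagMap u c x = ∑ j, (c j * ⟪u j, x⟫_ℝ) • u j := rfl

lemma inner_diagMap {m : ℕ} (u : OrthonormalBasis (Fin m) ℝ E) (c : Fin m → ℝ) (x y : E) :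
    ⟪x, diagMap u c y⟫_ℝ = ∑ j, c j * ⟪u j, x⟫_ℝ * ⟪u j, y⟫_ℝ := by
  rw [diagMap_apply, inner_sum]
  apply Finset.sum_congr rfl; intro j _
  rw [real_inner_smul_right, real_inner_comm x (u j)]; ring

lemma diagMap_symm {m : ℕ} (u : OrthonormalBasis (Fin m) ℝ E) (c : Fin m → ℝ) (x y : E) :
    ⟪diagMap u c x, y⟫_ℝ = ⟪x, diagMap u c y⟫_ℝ := by
  rw [real_inner_comm, inner_diagMap, inner_diagMap]
  apply Finset.sum_congr rfl; intro j _; ring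

lemma diagMap_inner_basis {m : ℕ} (u : OrthonormalBasis (Fin m) ℝ E) (c : Fin m → ℝ) (x : E)
    (i : Fin m) : ⟪u i, diagMap u c x⟫_ℝ = c i * ⟪u i, x⟫_ℝ := by
  rw [inner_diagMap]
  rw [Finset.sum_eq_single i]
  · simp [real_inner_self_eq_norm_sq, u.orthonormal.1 i]
  · intro j _ hj
    have : ⟪u j, u i⟫_ℝ = 0 := u.orthonormal.2 hj
    rw [this]; ring
  · intro h; exact absurd (Finset.mem_univ i) h

lemma diagMap_diagMap {m : ℕ} (u : OrthonormalBasis (Fin m) ℝ E) (c d : Fin m → ℝ) (x : E) :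
    diagMap u c (diagMap u d x) = diagMap u (fun j => c j * d j) x := by
  rw [diagMap_apply u c, diagMap_apply u (fun j => c j * d j)]
  apply Finset.sum_congr rfl; intro j _
  rw [diagMap_inner_basis]; ring_nf

lemma diagMap_one (u : OrthonormalBasis (Fin m) ℝ E) (x : E) :
    diagMap u (fun _ => (1:ℝ)) x = x := by
  rw [diagMap_apply]
  simpa using u.sum_repr' x

lemma diagMap_congr {m : ℕ} (u : OrthonormalBasis (Fin m) ℝ E) {c d : Fin m → ℝ}
    (h : ∀ j, c j = d j) (x : E) : diagMap u c x = diagMap u d x := by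
  rw [diagMap_apply, diagMap_apply]
  apply Finset.sum_congr rfl; intro j _; rw [h j]

end Diag


section KyFan
variable {E : Type*} [NormedAddCommGroup E] [InnerProductSpace ℝ E] [FiniteDimensional ℝ E]

lemma kyFan (B : E →ₗ[ℝ] E) (hB : B.IsSymmetric) (hBpos : ∀ x : E, 0 ≤ ⟪x, B x⟫_ℝ)
    (K : ℕ) (hK0 : 0 < K) (hK : K ≤ Module.finrank ℝ E) :
    ∃ (γ : Fin K → ℝ) (e : Fin K → E),
      Antitone γ ∧ (∀ k, 0 ≤ γ k) ∧ (∀ k, B (e k) = γ k • e k) ∧ Orthonormal ℝ e ∧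
      (∀ η : Fin K → E, Orthonormal ℝ η → ∑ k, ⟪η k, B (η k)⟫_ℝ ≤ ∑ k, γ k) := by
  set n := Module.finrank ℝ E with hn
  have hrfl : Module.finrank ℝ E = n := rfl
  set ev : Fin n → ℝ := hB.eigenvalues hrfl with hev
  set σ : Equiv.Perm (Fin n) := Tuple.sort (fun i => - ev i) with hσ
  set b : OrthonormalBasis (Fin n) ℝ E := (hB.eigenvectorBasis hrfl).reindex σ.symm with hb
  have hbapp : ∀ j, b j = hB.eigenvectorBasis hrfl (σ j) := by
    intro j
    simp [hb, OrthonormalBasis.reindex_apply]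
  set μ : Fin n → ℝ := fun j => ev (σ j) with hμdef
  have hμant : Antitone μ := by
    intro j j' hjj'
    have := Tuple.monotone_sort (fun i => - ev i) hjj'
    simpa [hμdef] using this
  have heig : ∀ j, B (b j) = μ j • b j := by
    intro j
    rw [hbapp]
    simp [hμdef, hev]
  have hμnonneg : ∀ j, 0 ≤ μ j := by
    intro j
    have h1 : ⟪b j, B (b j)⟫_ℝ = μ j := by
      rw [heig, real_inner_smul_right]
      have : ‖b j‖ = 1 := b.orthonormal.1 j
      rw [real_inner_self_eq_norm_sq, this]
      ring
    rw [← h1]; exact hBpos _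
  refine ⟨fun k => μ (Fin.castLE hK k), fun k => b (Fin.castLE hK k), ?_, ?_, ?_, ?_, ?_⟩
  · intro k l hkl
    exact hμant (by exact_mod_cast hkl)
  · intro k; exact hμnonneg _
  · intro k; exact heig _
  · exact b.orthonormal.comp _ (Fin.castLE_injective hK)
  · intro η hη
    set t : Fin n → ℝ := fun j => ∑ k, ⟪b j, η k⟫_ℝ ^ 2 with ht
    have htnonneg : ∀ j, 0 ≤ t j := fun j => Finset.sum_nonneg fun k _ => sq_nonneg _
    have htle : ∀ j, t j ≤ 1 := by
      intro j
      have := hη.sum_inner_products_le (s := Finset.univ) (b j)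
      have hb1 : ‖b j‖ = 1 := b.orthonormal.1 j
      calc t j = ∑ k, ‖⟪η k, b j⟫_ℝ‖ ^ 2 := by
                  apply Finset.sum_congr rfl; intro k _
                  rw [Real.norm_eq_abs, sq_abs, real_inner_comm]
        _ ≤ ‖b j‖ ^ 2 := this
        _ = 1 := by rw [hb1]; norm_num
    have hsum_t : ∑ j, t j = (K : ℝ) := by
      rw [Finset.sum_comm]
      have : ∀ k, ∑ j, ⟪b j, η k⟫_ℝ ^ 2 = 1 := by
        intro k
        have hp := b.sum_inner_mul_inner (η k) (η k)
        have hnk : ⟪η k, η k⟫_ℝ = 1 := by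
          have := hη.1 k
          rw [real_inner_self_eq_norm_sq, this]; norm_num
        calc ∑ j, ⟪b j, η k⟫_ℝ ^ 2 = ∑ j, ⟪η k, b j⟫_ℝ * ⟪b j, η k⟫_ℝ := by
              apply Finset.sum_congr rfl; intro j _
              rw [sq, real_inner_comm]
          _ = 1 := by rw [hp, hnk]
      simp only [this, Finset.sum_const, Finset.card_univ, Fintype.card_fin, nsmul_eq_mul, mul_one]
    have hexpand : ∑ k, ⟪η k, B (η k)⟫_ℝ = ∑ j, μ j * t j := by
      have hk1 : ∀ k, ⟪η k, B (η k)⟫_ℝ = ∑ j, μ j * ⟪b j, η k⟫_ℝ ^ 2 := by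
        intro k
        have hp := b.sum_inner_mul_inner (η k) (B (η k))
        rw [← hp]
        apply Finset.sum_congr rfl; intro j _
        have : ⟪b j, B (η k)⟫_ℝ = μ j * ⟪b j, η k⟫_ℝ := by
          rw [← hB (b j) (η k), heig, real_inner_smul_left]
        rw [this, real_inner_comm (η k) (b j)]
        ring
      rw [Finset.sum_congr rfl fun k _ => hk1 k, Finset.sum_comm]
      apply Finset.sum_congr rfl; intro j _
      rw [ht, Finset.mul_sum]
    rw [hexpand]
    -- combinatorial bound
    set T : Finset (Fin n) := Finset.univ.filter (fun j => (j : ℕ) < K) with hT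
    have hKn : K - 1 < n := by omega
    set c : ℝ := μ ⟨K - 1, hKn⟩ with hc
    have hcle : ∀ j ∈ T, c ≤ μ j := by
      intro j hj
      rw [hT, Finset.mem_filter] at hj
      exact hμant (by simp [Fin.le_def]; omega)
    have hcge : ∀ j ∈ Finset.univ \ T, μ j ≤ c := by
      intro j hj
      rw [hT] at hj
      simp only [Finset.mem_sdiff, Finset.mem_filter, Finset.mem_univ, true_and, not_lt] at hj
      exact hμant (by simp [Fin.le_def]; omega)
    have hbij : ∑ j ∈ T, μ j = ∑ k : Fin K, μ (Fin.castLE hK k) := by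
      refine (Finset.sum_bij (fun (k : Fin K) _ => Fin.castLE hK k) ?_ ?_ ?_ ?_).symm
      · intro k _; rw [hT]; simp [Fin.castLE]; try omega
      · intro k _ k' _ h; exact Fin.castLE_injective hK h
      · intro j hj
        rw [hT, Finset.mem_filter] at hj
        exact ⟨⟨(j : ℕ), hj.2⟩, Finset.mem_univ _, by simp [Fin.castLE]⟩
      · intro k _; rfl
    have hcard : ∑ j ∈ T, (1 : ℝ) = (K : ℝ) := by
      have : ∑ j ∈ T, (1:ℝ) = (T.card : ℝ) := by simp
      rw [this]
      congr 1
      have : T.card = (Finset.univ : Finset (Fin K)).card := by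
        refine (Finset.card_bij (fun (k : Fin K) _ => Fin.castLE hK k) ?_ ?_ ?_).symm
        · intro k _; rw [hT]; simp [Fin.castLE]; try omega
        · intro k _ k' _ h; exact Fin.castLE_injective hK h
        · intro j hj
          rw [hT, Finset.mem_filter] at hj
          exact ⟨⟨(j : ℕ), hj.2⟩, Finset.mem_univ _, by simp [Fin.castLE]⟩
      rw [this]; simp
    rw [← hbij]
    have hsplit : ∑ j, μ j * t j = ∑ j ∈ T, μ j * t j + ∑ j ∈ Finset.univ \ T, μ j * t j := by
      rw [← Finset.sum_sdiff (Finset.subset_univ T)]; ring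
    rw [hsplit]
    have h1 : ∑ j ∈ T, μ j * t j ≤ ∑ j ∈ T, ((μ j - c) + c * t j) := by
      apply Finset.sum_le_sum
      intro j hj
      have h2 : μ j * t j = (μ j - c) * t j + c * t j := by ring
      rw [h2]
      have : (μ j - c) * t j ≤ (μ j - c) * 1 := by
        apply mul_le_mul_of_nonneg_left (htle j) (by linarith [hcle j hj])
      linarith
    have h2 : ∑ j ∈ Finset.univ \ T, μ j * t j ≤ ∑ j ∈ Finset.univ \ T, c * t j := by
      apply Finset.sum_le_sum
      intro j hj
      exact mul_le_mul_of_nonneg_right (hcge j hj) (htnonneg j)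
    have h3 : ∑ j ∈ T, t j + ∑ j ∈ Finset.univ \ T, t j = (K : ℝ) := by
      rw [← hsum_t, ← Finset.sum_sdiff (Finset.subset_univ T)]; ring
    have h4 : ∑ j ∈ T, ((μ j - c) + c * t j) = ∑ j ∈ T, μ j - c * K + c * ∑ j ∈ T, t j := by
      rw [Finset.sum_add_distrib, Finset.sum_sub_distrib, ← Finset.mul_sum]
      have : ∑ j ∈ T, c = c * K := by
        rw [Finset.sum_const]
        have : (T.card : ℝ) = K := by
          have := hcard; rwa [Finset.sum_const, nsmul_eq_mul, mul_one] at this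
        rw [nsmul_eq_mul, this, mul_comm]
      rw [this]
    have h5 : ∑ j ∈ Finset.univ \ T, c * t j = c * ∑ j ∈ Finset.univ \ T, t j := by
      rw [Finset.mul_sum]
    calc ∑ j ∈ T, μ j * t j + ∑ j ∈ Finset.univ \ T, μ j * t j
        ≤ (∑ j ∈ T, μ j - c * K + c * ∑ j ∈ T, t j) + c * ∑ j ∈ Finset.univ \ T, t j := by
          rw [← h4, ← h5]; exact add_le_add h1 h2
      _ = ∑ j ∈ T, μ j - c * K + c * (∑ j ∈ T, t j + ∑ j ∈ Finset.univ \ T, t j) := by ring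
      _ = ∑ j ∈ T, μ j := by rw [h3]; ring

end KyFan

section GenEig
variable {E : Type*} [NormedAddCommGroup E] [InnerProductSpace ℝ E] [FiniteDimensional ℝ E]

lemma genEig (A N : E →ₗ[ℝ] E) (hA : ∀ x y, ⟪A x, y⟫_ℝ = ⟪x, A y⟫_ℝ)
    (hApos : ∀ x, 0 ≤ ⟪x, A x⟫_ℝ)
    (hN : N.IsSymmetric) (hNpos : ∀ x : E, x ≠ 0 → 0 < ⟪x, N x⟫_ℝ)
    (K : ℕ) (hK0 : 0 < K) (hK : K ≤ Module.finrank ℝ E) :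
    ∃ (γ : Fin K → ℝ) (φ : Fin K → E),
      Antitone γ ∧ (∀ k, 0 ≤ γ k) ∧
      (∀ k, A (φ k) = γ k • N (φ k)) ∧
      (∀ k l, ⟪φ k, N (φ l)⟫_ℝ = if k = l then (1:ℝ) else 0) ∧
      (∀ k, ⟪φ k, A (φ k)⟫_ℝ = γ k) ∧
      (∀ χ : Fin K → E, (∀ k l, ⟪χ k, N (χ l)⟫_ℝ = if k = l then (1:ℝ) else 0) →
        ∑ k, ⟪χ k, A (χ k)⟫_ℝ ≤ ∑ k, γ k) := by
  have hrfl : Module.finrank ℝ E = Module.finrank ℝ E := rfl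
  set u : OrthonormalBasis (Fin (Module.finrank ℝ E)) ℝ E := hN.eigenvectorBasis hrfl with hu
  set ν : Fin (Module.finrank ℝ E) → ℝ := hN.eigenvalues hrfl with hν
  have hNu : ∀ j, N (u j) = ν j • u j := fun j => by
    have h := hN.apply_eigenvectorBasis hrfl j
    rw [← hu, ← hν] at h
    exact_mod_cast h
  have hνpos : ∀ j, 0 < ν j := by
    intro j
    have h1 : ⟪u j, N (u j)⟫_ℝ = ν j := by
      rw [hNu, real_inner_smul_right, real_inner_self_eq_norm_sq, u.orthonormal.1 j]; ring
    rw [← h1]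
    apply hNpos
    intro h
    have := u.orthonormal.1 j
    rw [h] at this; simp at this
  have hNdiag : ∀ x, N x = diagMap u ν x := by
    intro x
    conv_lhs => rw [← u.sum_repr' x]
    rw [map_sum, diagMap_apply]
    apply Finset.sum_congr rfl; intro j _
    rw [map_smul, hNu, smul_smul, mul_comm]
  set c : Fin (Module.finrank ℝ E) → ℝ := fun j => (Real.sqrt (ν j))⁻¹ with hc
  have hsq : ∀ j, Real.sqrt (ν j) > 0 := fun j => Real.sqrt_pos.mpr (hνpos j)
  have hcν : ∀ j, c j * (ν j * c j) = 1 := by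
    intro j
    have h2 : Real.sqrt (ν j) * Real.sqrt (ν j) = ν j := Real.mul_self_sqrt (hνpos j).le
    have hs := (hsq j).ne'
    simp only [hc]
    field_simp
    try nlinarith [h2]
  have hcs : ∀ j, c j * Real.sqrt (ν j) = 1 := fun j => inv_mul_cancel₀ (hsq j).ne'
  set R : E →ₗ[ℝ] E := diagMap u c with hR
  set B : E →ₗ[ℝ] E := R ∘ₗ A ∘ₗ R with hB
  have hRsymm : ∀ x y, ⟪R x, y⟫_ℝ = ⟪x, R y⟫_ℝ := fun x y => diagMap_symm u c x y
  have hBapp : ∀ x, B x = R (A (R x)) := fun x => rfl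
  have hBsym : B.IsSymmetric := by
    intro x y
    rw [hBapp, hBapp, hRsymm, hA, hRsymm]
  have hBpos : ∀ x, 0 ≤ ⟪x, B x⟫_ℝ := by
    intro x
    rw [hBapp, ← hRsymm]
    exact hApos (R x)
  obtain ⟨γ, e, hant, hnn, heig, horth, hmax⟩ := kyFan B hBsym hBpos K hK0 hK
  have hRR_NR : ∀ x, N (R x) = diagMap u (fun j => Real.sqrt (ν j)) x := by
    intro x
    rw [hNdiag, hR, diagMap_diagMap]
    apply diagMap_congr
    intro j
    rw [hc]
    rw [eq_comm]
    field_simp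
    rw [eq_div_iff (hsq j).ne', Real.mul_self_sqrt (hνpos j).le]
  have hRNR : ∀ x, R (N (R x)) = x := by
    intro x
    rw [hRR_NR, hR, diagMap_diagMap]
    rw [diagMap_congr u (fun j => hcs j) x, diagMap_one]
  refine ⟨γ, fun k => R (e k), hant, hnn, ?_, ?_, ?_, ?_⟩
  · intro k
    have h1 : R (A (R (e k))) = γ k • e k := heig k
    have h2 : N (R (A (R (e k)))) = γ k • N (e k) := by rw [h1, map_smul]
    have h3 : R (N (R (A (R (e k))))) = A (R (e k)) := hRNR _
    calc A (R (e k)) = R (N (R (A (R (e k))))) := h3.symm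
      _ = R (γ k • N (e k)) := by rw [h2]
      _ = γ k • R (N (e k)) := by rw [map_smul]
      _ = γ k • N (R (e k)) := by
          congr 1
          rw [hNdiag (e k), hNdiag (R (e k)), hR, diagMap_diagMap, diagMap_diagMap]
          exact diagMap_congr u (fun j => by ring) _
  · intro k l
    have : ⟪R (e k), N (R (e l))⟫_ℝ = ⟪e k, e l⟫_ℝ := by
      rw [hRsymm, hRNR]
    rw [this]
    rcases eq_or_ne k l with h | h
    · subst h; simp [real_inner_self_eq_norm_sq, horth.1 k]
    · simp [h, horth.2 h]
  · intro k
    have : ⟪R (e k), A (R (e k))⟫_ℝ = ⟪e k, B (e k)⟫_ℝ := by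
      rw [hBapp, hRsymm]
    rw [this, heig k, real_inner_smul_right, real_inner_self_eq_norm_sq, horth.1 k]
    ring
  · intro χ hχ
    set η : Fin K → E := fun k => N (R (χ k)) with hη
    have hRη : ∀ k, R (η k) = χ k := fun k => hRNR (χ k)
    have hηinner : ∀ k l, ⟪η k, η l⟫_ℝ = ⟪χ k, N (χ l)⟫_ℝ := by
      intro k l
      rw [hη]
      simp only
      rw [hRR_NR, hRR_NR, diagMap_symm, diagMap_diagMap,
        diagMap_congr u (fun j => Real.mul_self_sqrt (hνpos j).le) (χ l), ← hNdiag]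
    have hηorth : Orthonormal ℝ η := by
      rw [orthonormal_iff_ite]
      intro k l
      rw [hηinner]
      exact hχ k l
    have := hmax η hηorth
    calc ∑ k, ⟪χ k, A (χ k)⟫_ℝ = ∑ k, ⟪η k, B (η k)⟫_ℝ := by
          apply Finset.sum_congr rfl; intro k _
          rw [hBapp, ← hRsymm, hRη]
      _ ≤ ∑ k, γ k := this

end GenEig

section Helpers
variable {H : Type*} [NormedAddCommGroup H] [InnerProductSpace ℝ H]



lemma val_expand' (G K : ℕ) (μc τc : Fin G → H) (Tμμ Tμτstar : H →L[ℝ] H)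
    (hTμμ : ∀ h : H, Tμμ h = (G : ℝ)⁻¹ • ∑ g, ⟪μc g, h⟫_ℝ • μc g)
    (hTμτstar : ∀ h : H, Tμτstar h = (G : ℝ)⁻¹ • ∑ g, ⟪μc g, h⟫_ℝ • τc g)
    (φ ψ : Fin K → H) :
    (G : ℝ)⁻¹ * ∑ g, ‖τc g - ∑ k, ⟪μc g, φ k⟫_ℝ • ψ k‖ ^ 2
    = (G : ℝ)⁻¹ * ∑ g, ‖τc g‖ ^ 2 - 2 * ∑ k, ⟪Tμτstar (φ k), ψ k⟫_ℝ
      + ∑ k, ∑ l, ⟪φ k, Tμμ (φ l)⟫_ℝ * ⟪ψ k, ψ l⟫_ℝ := by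
  have hg : ∀ g, ‖τc g - ∑ k, ⟪μc g, φ k⟫_ℝ • ψ k‖ ^ 2
      = ‖τc g‖ ^ 2 - 2 * ∑ k, ⟪μc g, φ k⟫_ℝ * ⟪τc g, ψ k⟫_ℝ
        + ∑ k, ∑ l, ⟪μc g, φ k⟫_ℝ * ⟪μc g, φ l⟫_ℝ * ⟪ψ k, ψ l⟫_ℝ := by
    intro g
    have hX1 : ⟪τc g, ∑ k, ⟪μc g, φ k⟫_ℝ • ψ k⟫_ℝ = ∑ k, ⟪μc g, φ k⟫_ℝ * ⟪τc g, ψ k⟫_ℝ := by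
      rw [inner_sum]
      exact Finset.sum_congr rfl fun k _ => real_inner_smul_right _ _ _
    have hX2 : ‖∑ k, ⟪μc g, φ k⟫_ℝ • ψ k‖ ^ 2
        = ∑ k, ∑ l, ⟪μc g, φ k⟫_ℝ * ⟪μc g, φ l⟫_ℝ * ⟪ψ k, ψ l⟫_ℝ := by
      rw [← real_inner_self_eq_norm_sq, sum_inner]
      apply Finset.sum_congr rfl; intro k _
      rw [real_inner_smul_left, inner_sum, Finset.mul_sum]
      apply Finset.sum_congr rfl; intro l _
      rw [real_inner_smul_right]; ring
    rw [norm_sub_sq_real, hX1, hX2]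
  have hmid : ∀ k, ⟪Tμτstar (φ k), ψ k⟫_ℝ
      = (G : ℝ)⁻¹ * ∑ g, ⟪μc g, φ k⟫_ℝ * ⟪τc g, ψ k⟫_ℝ := by
    intro k
    rw [hTμτstar, real_inner_smul_left, sum_inner]
    congr 1
    apply Finset.sum_congr rfl; intro g _
    rw [real_inner_smul_left]
  have hthird : ∀ k l, ⟪φ k, Tμμ (φ l)⟫_ℝ
      = (G : ℝ)⁻¹ * ∑ g, ⟪μc g, φ k⟫_ℝ * ⟪μc g, φ l⟫_ℝ := by
    intro k l
    rw [hTμμ, real_inner_smul_right, inner_sum]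
    congr 1
    apply Finset.sum_congr rfl; intro g _
    rw [real_inner_smul_right, real_inner_comm (φ k) (μc g)]; ring
  calc (G : ℝ)⁻¹ * ∑ g, ‖τc g - ∑ k, ⟪μc g, φ k⟫_ℝ • ψ k‖ ^ 2
      = (G : ℝ)⁻¹ * ∑ g, (‖τc g‖ ^ 2 - 2 * ∑ k, ⟪μc g, φ k⟫_ℝ * ⟪τc g, ψ k⟫_ℝ
          + ∑ k, ∑ l, ⟪μc g, φ k⟫_ℝ * ⟪μc g, φ l⟫_ℝ * ⟪ψ k, ψ l⟫_ℝ) := by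
        rw [Finset.sum_congr rfl fun g _ => hg g]
    _ = (G : ℝ)⁻¹ * ∑ g, ‖τc g‖ ^ 2
        - 2 * ((G : ℝ)⁻¹ * ∑ g, ∑ k, ⟪μc g, φ k⟫_ℝ * ⟪τc g, ψ k⟫_ℝ)
        + (G : ℝ)⁻¹ * ∑ g, ∑ k, ∑ l, ⟪μc g, φ k⟫_ℝ * ⟪μc g, φ l⟫_ℝ * ⟪ψ k, ψ l⟫_ℝ := by
        rw [Finset.sum_add_distrib, Finset.sum_sub_distrib, ← Finset.mul_sum]
        ring
    _ = (G : ℝ)⁻¹ * ∑ g, ‖τc g‖ ^ 2 - 2 * ∑ k, ⟪Tμτstar (φ k), ψ k⟫_ℝ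
        + ∑ k, ∑ l, ⟪φ k, Tμμ (φ l)⟫_ℝ * ⟪ψ k, ψ l⟫_ℝ := by
        congr 1
        · congr 1
          rw [Finset.sum_congr rfl fun k _ => hmid k, ← Finset.mul_sum, Finset.sum_comm]
        · simp only [Finset.mul_sum]
          rw [Finset.sum_comm]
          apply Finset.sum_congr rfl; intro k _
          rw [Finset.sum_comm]
          apply Finset.sum_congr rfl; intro l _
          rw [hthird, Finset.mul_sum, Finset.sum_mul]
          apply Finset.sum_congr rfl; intro g _
          ring




lemma gram_prod_nonneg' {K : ℕ} (φ u : Fin K → H) :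
    0 ≤ ∑ k, ∑ l, ⟪φ k, φ l⟫_ℝ * ⟪u k, u l⟫_ℝ := by
  classical
  set U : Submodule ℝ H := Submodule.span ℝ (Set.range u) with hU
  haveI : FiniteDimensional ℝ U := FiniteDimensional.span_of_finite ℝ (Set.finite_range u)
  set b := stdOrthonormalBasis ℝ U with hb
  set m := Module.finrank ℝ U
  have hmem : ∀ k, u k ∈ U := fun k => Submodule.subset_span (Set.mem_range_self k)
  set uu : Fin K → U := fun k => ⟨u k, hmem k⟩ with huu
  have hinner : ∀ k l, ⟪u k, u l⟫_ℝ = ∑ j, ⟪uu k, b j⟫_ℝ * ⟪b j, uu l⟫_ℝ := by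
    intro k l
    rw [b.sum_inner_mul_inner (uu k) (uu l)]
    rfl
  calc (0:ℝ) ≤ ∑ j, ‖∑ k, ⟪b j, uu k⟫_ℝ • φ k‖ ^ 2 :=
        Finset.sum_nonneg fun j _ => sq_nonneg _
    _ = ∑ j, ∑ k, ∑ l, ⟪φ k, φ l⟫_ℝ * (⟪uu k, b j⟫_ℝ * ⟪b j, uu l⟫_ℝ) := by
        apply Finset.sum_congr rfl; intro j _
        rw [← real_inner_self_eq_norm_sq, sum_inner]
        apply Finset.sum_congr rfl; intro k _
        rw [real_inner_smul_left, inner_sum, Finset.mul_sum]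
        apply Finset.sum_congr rfl; intro l _
        rw [real_inner_smul_right, real_inner_comm (uu k) (b j)]
        ring
    _ = ∑ k, ∑ l, ⟪φ k, φ l⟫_ℝ * ⟪u k, u l⟫_ℝ := by
        rw [Finset.sum_comm]
        apply Finset.sum_congr rfl; intro k _
        rw [Finset.sum_comm]
        apply Finset.sum_congr rfl; intro l _
        rw [hinner, Finset.mul_sum]


lemma exists_rotation' {K : ℕ} (P : Fin K → Fin K → ℝ) (hsym : ∀ k l, P k l = P l k) :
    ∃ (w : Fin K → Fin K → ℝ) (d : Fin K → ℝ),
      (∀ i j, ∑ k, w i k * w j k = if i = j then (1:ℝ) else 0) ∧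
      (∀ k k', ∑ i, w i k * w i k' = if k = k' then (1:ℝ) else 0) ∧
      (∀ i j, ∑ k, ∑ l, w i k * w j l * P k l = if i = j then d j else 0) := by
  classical
  set Pmap : EuclideanSpace ℝ (Fin K) →ₗ[ℝ] EuclideanSpace ℝ (Fin K) :=
    { toFun := fun x => (WithLp.toLp 2 (fun k => ∑ l, P k l * x l) : EuclideanSpace ℝ (Fin K))
      map_add' := by
        intro x y
        ext k
        show ∑ l, P k l * (x l + y l) = (∑ l, P k l * x l) + ∑ l, P k l * y l
        rw [← Finset.sum_add_distrib]
        apply Finset.sum_congr rfl; intro l _; ring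
      map_smul' := by
        intro r x
        ext k
        show ∑ l, P k l * (r * x l) = r * ∑ l, P k l * x l
        rw [Finset.mul_sum]
        apply Finset.sum_congr rfl; intro l _; ring } with hPmap
  have hPapp : ∀ (x : EuclideanSpace ℝ (Fin K)) (k : Fin K), Pmap x k = ∑ l, P k l * x l := fun x k => rfl
  have hinnerE : ∀ x y : EuclideanSpace ℝ (Fin K), ⟪x, y⟫_ℝ = ∑ k, x k * y k := by
    intro x y
    rw [PiLp.inner_apply]
    apply Finset.sum_congr rfl; intro k _
    simp [RCLike.inner_apply, conj_trivial]
    ring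
  have hPsym : Pmap.IsSymmetric := by
    intro x y
    rw [hinnerE, hinnerE]
    have h1 : ∑ k, (Pmap x) k * y k = ∑ k, ∑ l, P k l * x l * y k := by
      apply Finset.sum_congr rfl; intro k _
      rw [hPapp, Finset.sum_mul]
    have h2 : ∑ k, x k * (Pmap y) k = ∑ k, ∑ l, P k l * y l * x k := by
      apply Finset.sum_congr rfl; intro k _
      rw [hPapp, Finset.mul_sum]
      apply Finset.sum_congr rfl; intro l _; ring
    rw [h1, h2, Finset.sum_comm]
    apply Finset.sum_congr rfl; intro k _
    apply Finset.sum_congr rfl; intro l _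
    rw [hsym k l]; ring
  have hdim : Module.finrank ℝ (EuclideanSpace ℝ (Fin K)) = K := finrank_euclideanSpace_fin
  set v := hPsym.eigenvectorBasis hdim with hv
  set d : Fin K → ℝ := hPsym.eigenvalues hdim with hd
  have heig : ∀ j, Pmap (v j) = d j • v j := by
    intro j
    have h := hPsym.apply_eigenvectorBasis hdim j
    rw [← hv, ← hd] at h
    exact_mod_cast h
  have hO : ∀ i j, ∑ k, v i k * v j k = if i = j then (1:ℝ) else 0 := by
    intro i j
    have := orthonormal_iff_ite.mp v.orthonormal i j
    rw [← this, hinnerE]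
  refine ⟨fun i k => v i k, d, ?_, ?_, ?_⟩
  · exact hO
  · intro k k'
    have h := v.sum_inner_mul_inner (EuclideanSpace.single k (1:ℝ)) (EuclideanSpace.single k' (1:ℝ))
    have h1 : ∀ i, ⟪EuclideanSpace.single k (1:ℝ), v i⟫_ℝ = v i k := by
      intro i; rw [EuclideanSpace.inner_single_left]; simp
    have h2 : ∀ i, ⟪v i, EuclideanSpace.single k' (1:ℝ)⟫_ℝ = v i k' := by
      intro i; rw [EuclideanSpace.inner_single_right]; simp
    have h3 : ⟪EuclideanSpace.single k (1:ℝ), EuclideanSpace.single k' (1:ℝ)⟫_ℝ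
        = if k = k' then (1:ℝ) else 0 := by
      rw [EuclideanSpace.inner_single_left]
      simp [EuclideanSpace.single_apply]
    rw [← h3, ← h]
    apply Finset.sum_congr rfl; intro i _
    rw [h1, h2]
  · intro i j
    have h1 : ∑ k, ∑ l, v i k * v j l * P k l = ⟪v i, Pmap (v j)⟫_ℝ := by
      rw [hinnerE]
      apply Finset.sum_congr rfl; intro k _
      rw [hPapp, Finset.mul_sum]
      apply Finset.sum_congr rfl; intro l _; ring
    rw [h1, heig, real_inner_smul_right, hinnerE, hO i j]
    rcases eq_or_ne i j with h | h
    · subst h; simp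
    · simp [h]





lemma genEigH' (G K : ℕ) (hG : 0 < G) (hK : 0 < K) (μc τc : Fin G → H)
    (Tμμ Tμτ Tμτstar : H →L[ℝ] H)
    (hTμμ : ∀ h : H, Tμμ h = (G : ℝ)⁻¹ • ∑ g, ⟪μc g, h⟫_ℝ • μc g)
    (hTμτ : ∀ h : H, Tμτ h = (G : ℝ)⁻¹ • ∑ g, ⟪τc g, h⟫_ℝ • μc g)
    (hTμτstar : ∀ h : H, Tμτstar h = (G : ℝ)⁻¹ • ∑ g, ⟪μc g, h⟫_ℝ • τc g)
    (hrank : K ≤ Module.finrank ℝ (LinearMap.range (Tμμ : H →ₗ[ℝ] H)))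
    (a : ℝ) (ha : 0 ≤ a) :
    ∃ (γ : Fin K → ℝ) (φ : Fin K → H),
      Antitone γ ∧ (∀ k, 0 ≤ γ k) ∧
      (∀ k, φ k ∈ Submodule.span ℝ (Set.range μc)) ∧
      (∀ k, Tμτ (Tμτstar (φ k)) = γ k • (Tμμ (φ k) + a • φ k)) ∧
      (∀ k l, ⟪φ k, Tμμ (φ l) + a • φ l⟫_ℝ = if k = l then (1:ℝ) else 0) ∧
      (∀ k, ⟪φ k, Tμτ (Tμτstar (φ k))⟫_ℝ = γ k) ∧
      (∀ χ : Fin K → H, (∀ k, χ k ∈ Submodule.span ℝ (Set.range μc)) →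
        (∀ k l, ⟪χ k, Tμμ (χ l) + a • χ l⟫_ℝ = if k = l then (1:ℝ) else 0) →
        ∑ k, ⟪χ k, Tμτ (Tμτstar (χ k))⟫_ℝ ≤ ∑ k, γ k) := by
  classical
  set V : Submodule ℝ H := Submodule.span ℝ (Set.range μc) with hV
  haveI : FiniteDimensional ℝ V := FiniteDimensional.span_of_finite ℝ (Set.finite_range μc)
  have hμcV : ∀ g, μc g ∈ V := fun g => Submodule.subset_span (Set.mem_range_self g)
  have memV : ∀ (c : Fin G → ℝ), ((G : ℝ)⁻¹ • ∑ g, c g • μc g) ∈ V := by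
    intro c
    exact Submodule.smul_mem _ _ (Submodule.sum_mem _ fun g _ => Submodule.smul_mem _ _ (hμcV g))
  have hTμμV : ∀ x : H, Tμμ x ∈ V := fun x => by rw [hTμμ]; exact memV _
  have hTμτV : ∀ x : H, Tμτ x ∈ V := fun x => by rw [hTμτ]; exact memV _
  have hKV : K ≤ Module.finrank ℝ V := by
    refine hrank.trans (Submodule.finrank_mono ?_)
    rintro x ⟨y, rfl⟩
    exact hTμμV y
  have hMinner : ∀ x y : H, ⟪x, Tμμ y⟫_ℝ = (G : ℝ)⁻¹ * ∑ g, ⟪μc g, x⟫_ℝ * ⟪μc g, y⟫_ℝ := by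
    intro x y
    rw [hTμμ, real_inner_smul_right, inner_sum]
    congr 1
    apply Finset.sum_congr rfl; intro g _
    rw [real_inner_smul_right, real_inner_comm x (μc g)]; ring
  have hadj : ∀ x y : H, ⟪x, Tμτ y⟫_ℝ = ⟪Tμτstar x, y⟫_ℝ := by
    intro x y
    rw [hTμτ, hTμτstar, real_inner_smul_right, real_inner_smul_left, inner_sum, sum_inner]
    congr 1
    apply Finset.sum_congr rfl; intro g _
    rw [real_inner_smul_right, real_inner_smul_left, real_inner_comm x (μc g)]; ring
  have hAH : ∀ x y : H, ⟪x, Tμτ (Tμτstar y)⟫_ℝ = ⟪Tμτstar x, Tμτstar y⟫_ℝ :=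
    fun x y => hadj x (Tμτstar y)
  set AH : H →ₗ[ℝ] H := ((Tμτ : H →ₗ[ℝ] H).comp (Tμτstar : H →ₗ[ℝ] H)) with hAHdef
  set NH : H →ₗ[ℝ] H := (Tμμ : H →ₗ[ℝ] H) + a • LinearMap.id with hNHdef
  have hAHapp : ∀ x : H, AH x = Tμτ (Tμτstar x) := fun _ => rfl
  have hNHapp : ∀ x : H, NH x = Tμμ x + a • x := fun x => by
    simp [hNHdef]
  have hAV : ∀ x ∈ V, AH x ∈ V := fun x _ => hTμτV _
  have hNV : ∀ x ∈ V, NH x ∈ V := fun x hx => by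
    rw [hNHapp]
    exact Submodule.add_mem _ (hTμμV x) (Submodule.smul_mem _ _ hx)
  set Ahat : V →ₗ[ℝ] V := AH.restrict hAV with hAhat
  set Nhat : V →ₗ[ℝ] V := NH.restrict hNV with hNhat
  have hAcoe : ∀ x : V, (Ahat x : H) = Tμτ (Tμτstar (x : H)) := fun x => rfl
  have hNcoe : ∀ x : V, (Nhat x : H) = Tμμ (x : H) + a • (x : H) := fun x => by
    have : (Nhat x : H) = NH (x : H) := rfl
    rw [this, hNHapp]
  have hAsym : ∀ x y : V, ⟪Ahat x, y⟫_ℝ = ⟪x, Ahat y⟫_ℝ := by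
    intro x y
    rw [Submodule.coe_inner, Submodule.coe_inner, hAcoe, hAcoe]
    rw [real_inner_comm, hAH, hAH, real_inner_comm]
  have hApos : ∀ x : V, 0 ≤ ⟪x, Ahat x⟫_ℝ := by
    intro x
    rw [Submodule.coe_inner, hAcoe, hAH]
    exact real_inner_self_nonneg
  have hMsym : ∀ x y : H, ⟪Tμμ x, y⟫_ℝ = ⟪x, Tμμ y⟫_ℝ := by
    intro x y
    calc ⟪Tμμ x, y⟫_ℝ = ⟪y, Tμμ x⟫_ℝ := real_inner_comm _ _
      _ = (G : ℝ)⁻¹ * ∑ g, ⟪μc g, y⟫_ℝ * ⟪μc g, x⟫_ℝ := hMinner y x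
      _ = (G : ℝ)⁻¹ * ∑ g, ⟪μc g, x⟫_ℝ * ⟪μc g, y⟫_ℝ := by
          congr 1
          apply Finset.sum_congr rfl; intro g _; ring
      _ = ⟪x, Tμμ y⟫_ℝ := (hMinner x y).symm
  have hNsym : Nhat.IsSymmetric := by
    intro x y
    rw [Submodule.coe_inner, Submodule.coe_inner, hNcoe, hNcoe]
    rw [inner_add_left, inner_add_right, real_inner_smul_left, real_inner_smul_right, hMsym]
  have hNpos : ∀ x : V, x ≠ 0 → 0 < ⟪x, Nhat x⟫_ℝ := by
    intro x hx
    rw [Submodule.coe_inner, hNcoe, inner_add_right, real_inner_smul_right, hMinner]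
    have h1 : 0 ≤ (G : ℝ)⁻¹ * ∑ g, ⟪μc g, (x:H)⟫_ℝ * ⟪μc g, (x:H)⟫_ℝ := by
      apply mul_nonneg (by positivity)
      exact Finset.sum_nonneg fun g _ => mul_self_nonneg _
    have h2 : 0 ≤ a * ⟪(x:H), (x:H)⟫_ℝ := mul_nonneg ha real_inner_self_nonneg
    rcases lt_or_eq_of_le h1 with h | h
    · linarith
    · exfalso
      have hGpos : (0:ℝ) < (G:ℝ)⁻¹ := by
        rw [inv_pos]; exact_mod_cast hG
      have hsum : ∑ g, ⟪μc g, (x:H)⟫_ℝ * ⟪μc g, (x:H)⟫_ℝ = 0 := by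
        rcases mul_eq_zero.mp h.symm with h' | h'
        · exact absurd h' hGpos.ne'
        · exact h'
      have hzero : ∀ g, ⟪μc g, (x:H)⟫_ℝ = 0 := by
        intro g
        have := (Finset.sum_eq_zero_iff_of_nonneg
          (fun g _ => mul_self_nonneg (⟪μc g, (x:H)⟫_ℝ))).mp hsum g (Finset.mem_univ g)
        exact mul_self_eq_zero.mp this
      have hVorth : ∀ v ∈ V, ⟪v, (x:H)⟫_ℝ = 0 := by
        intro v hv
        induction hv using Submodule.span_induction with
        | mem v hv => obtain ⟨g, rfl⟩ := hv; exact hzero g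
        | zero => simp
        | add v w _ _ hv hw => rw [inner_add_left, hv, hw]; ring
        | smul c v _ hv => rw [real_inner_smul_left, hv]; ring
      have : ⟪(x:H), (x:H)⟫_ℝ = 0 := hVorth _ x.2
      have : (x:H) = 0 := by rwa [inner_self_eq_zero] at this
      exact hx (Subtype.ext this)
  obtain ⟨γ, φV, hant, hnn, heig, hgram, hdiag, hmax⟩ :=
    genEig Ahat Nhat hAsym hApos hNsym hNpos K hK hKV
  refine ⟨γ, fun k => (φV k : H), hant, hnn, fun k => (φV k).2, ?_, ?_, ?_, ?_⟩
  · intro k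
    have := congrArg (Subtype.val) (heig k)
    rw [hAcoe] at this
    rw [this]
    rw [Submodule.coe_smul, hNcoe]
  · intro k l
    have := hgram k l
    rw [Submodule.coe_inner, hNcoe] at this
    exact this
  · intro k
    have := hdiag k
    rw [Submodule.coe_inner, hAcoe] at this
    exact this
  · intro χ hmem hgramχ
    set χV : Fin K → V := fun k => ⟨χ k, hmem k⟩ with hχV
    have := hmax χV (by
      intro k l
      rw [Submodule.coe_inner, hNcoe]
      exact hgramχ k l)
    calc ∑ k, ⟪χ k, Tμτ (Tμτstar (χ k))⟫_ℝ = ∑ k, ⟪χV k, Ahat (χV k)⟫_ℝ := by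
          apply Finset.sum_congr rfl; intro k _
          rw [Submodule.coe_inner, hAcoe]
      _ ≤ ∑ k, γ k := this


lemma inner_sum_smul {K : ℕ} (x y : Fin K → H) (ci cj : Fin K → ℝ) (T : H →L[ℝ] H) :
    ⟪∑ k, ci k • x k, T (∑ l, cj l • y l)⟫_ℝ = ∑ k, ∑ l, ci k * cj l * ⟪x k, T (y l)⟫_ℝ := by
  rw [map_sum, sum_inner]
  refine Finset.sum_congr rfl fun k _ => ?_
  rw [real_inner_smul_left, inner_sum, Finset.mul_sum]
  refine Finset.sum_congr rfl fun l _ => ?_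
  rw [map_smul, real_inner_smul_right]
  ring

end Helpers

/-- Proposition 3.1, finite-population setting: (i) the unregularized
optimal basis exists and attains IMSE_K^*; (ii) regularized solutions achieve IMSE_K^*
up to an error linear in the regularization parameter a. -/
theorem transfer_unregularized_and_regularized_optimal_basis
    {H : Type*} [NormedAddCommGroup H] [InnerProductSpace ℝ H] [CompleteSpace H]
    [TopologicalSpace.SeparableSpace H]
    (G K : ℕ) (hG : 0 < G) (hK : 0 < K)
    (μ τ μc τc : Fin G → H)
    (hμc : ∀ g, μc g = μ g - (G : ℝ)⁻¹ • ∑ g', μ g')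
    (hτc : ∀ g, τc g = τ g - (G : ℝ)⁻¹ • ∑ g', τ g')
    (Tμμ Tμτ Tμτstar : H →L[ℝ] H)
    (hTμμ : ∀ h : H, Tμμ h = (G : ℝ)⁻¹ • ∑ g, ⟪μc g, h⟫_ℝ • μc g)
    (hTμτ : ∀ h : H, Tμτ h = (G : ℝ)⁻¹ • ∑ g, ⟪τc g, h⟫_ℝ • μc g)
    (hTμτstar : ∀ h : H, Tμτstar h = (G : ℝ)⁻¹ • ∑ g, ⟪μc g, h⟫_ℝ • τc g)
    (IMSE : (Fin K → H) → ℝ)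
    (hIMSE : ∀ φ : Fin K → H, IMSE φ =
      ⨅ ψ : Fin K → H, (G : ℝ)⁻¹ * ∑ g, ‖τc g - ∑ k, ⟪μc g, φ k⟫_ℝ • ψ k‖ ^ 2)
    (IMSEstar : ℝ)
    (hIMSEstar : IMSEstar = sInf { v : ℝ | ∃ χ : Fin K → H,
        (∀ k l, ⟪χ k, Tμμ (χ l)⟫_ℝ = if k = l then (1 : ℝ) else 0) ∧
        v = (G : ℝ)⁻¹ * ∑ g, ‖τc g‖ ^ 2 - ∑ k, ‖Tμτstar (χ k)‖ ^ 2 })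
    (hrank : K ≤ Module.finrank ℝ (LinearMap.range (Tμμ : H →ₗ[ℝ] H))) :
    (∃ (lam : Fin K → ℝ) (φ : Fin K → H),
        (∀ k l : Fin K, k ≤ l → lam l ≤ lam k) ∧
        (∀ k, 0 ≤ lam k) ∧
        (∀ k, Tμτ (Tμτstar (φ k)) = lam k • Tμμ (φ k)) ∧
        (∀ k l, ⟪φ k, Tμμ (φ l)⟫_ℝ = if k = l then (1 : ℝ) else 0) ∧
        IMSE φ = IMSEstar) ∧
    (∃ (C : ℝ) (a₀ : ℝ), 0 < a₀ ∧ ∀ a : ℝ, 0 < a → a < a₀ →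
      ∃ (lam : Fin K → ℝ) (φ : Fin K → H),
        (∀ k l : Fin K, k ≤ l → lam l ≤ lam k) ∧
        (∀ k, 0 ≤ lam k) ∧
        (∀ k, Tμτ (Tμτstar (φ k)) = lam k • (Tμμ (φ k) + a • φ k)) ∧
        (∀ k l, ⟪φ k, Tμμ (φ l) + a • φ l⟫_ℝ = if k = l then (1 : ℝ) else 0) ∧
        IMSE φ ≤ IMSEstar + C * a) := by
  classical
  have hμcV : ∀ g, μc g ∈ Submodule.span ℝ (Set.range μc) :=
    fun g => Submodule.subset_span (Set.mem_range_self g)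
  have hadj : ∀ x y : H, ⟪x, Tμτ y⟫_ℝ = ⟪Tμτstar x, y⟫_ℝ := by
    intro x y
    rw [hTμτ, hTμτstar, real_inner_smul_right, real_inner_smul_left, inner_sum, sum_inner]
    congr 1
    apply Finset.sum_congr rfl; intro g _
    rw [real_inner_smul_right, real_inner_smul_left, real_inner_comm x (μc g)]; ring
  have hAinner : ∀ x : H, ⟪x, Tμτ (Tμτstar x)⟫_ℝ = ‖Tμτstar x‖ ^ 2 := by
    intro x
    rw [hadj x (Tμτstar x), real_inner_self_eq_norm_sq]
  have hMinner : ∀ x y : H, ⟪x, Tμμ y⟫_ℝ = (G : ℝ)⁻¹ * ∑ g, ⟪μc g, x⟫_ℝ * ⟪μc g, y⟫_ℝ := by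
    intro x y
    rw [hTμμ, real_inner_smul_right, inner_sum]
    congr 1
    apply Finset.sum_congr rfl; intro g _
    rw [real_inner_smul_right, real_inner_comm x (μc g)]; ring
  set S : ℝ := (G : ℝ)⁻¹ * ∑ g, ‖τc g‖ ^ 2 with hS
  have hexp := val_expand' G K μc τc Tμμ Tμτstar hTμμ hTμτstar
  have hval_nonneg : ∀ φ ψ : Fin K → H,
      0 ≤ (G : ℝ)⁻¹ * ∑ g, ‖τc g - ∑ k, ⟪μc g, φ k⟫_ℝ • ψ k‖ ^ 2 := by
    intro φ ψ
    apply mul_nonneg (by positivity)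
    exact Finset.sum_nonneg fun g _ => by positivity
  have hIMSE_le : ∀ (φ ψ : Fin K → H), IMSE φ ≤
      (G : ℝ)⁻¹ * ∑ g, ‖τc g - ∑ k, ⟪μc g, φ k⟫_ℝ • ψ k‖ ^ 2 := by
    intro φ ψ
    rw [hIMSE φ]
    exact ciInf_le ⟨0, by rintro v ⟨ψ', rfl⟩; exact hval_nonneg φ ψ'⟩ ψ
  have hIMSE_ge : ∀ (φ : Fin K → H) (c : ℝ),
      (∀ ψ : Fin K → H, c ≤ (G : ℝ)⁻¹ * ∑ g, ‖τc g - ∑ k, ⟪μc g, φ k⟫_ℝ • ψ k‖ ^ 2) →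
      c ≤ IMSE φ := by
    intro φ c hc
    rw [hIMSE φ]
    exact le_ciInf hc
  have hdelta : ∀ (v : Fin K → ℝ) (k : Fin K),
      ∑ l, v l * (if k = l then (1:ℝ) else 0) = v k := by
    intro v k
    rw [Finset.sum_eq_single k]
    · simp
    · intro l _ hl; simp [Ne.symm hl]
    · intro h; exact absurd (Finset.mem_univ k) h
  have hite : ∀ (ψ : Fin K → H) (k : Fin K),
      ∑ l, (if k = l then (1:ℝ) else 0) * ⟪ψ k, ψ l⟫_ℝ = ‖ψ k‖ ^ 2 := by
    intro ψ k
    rw [Finset.sum_eq_single k]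
    · simp [real_inner_self_eq_norm_sq]
    · intro l _ hl; simp [Ne.symm hl]
    · intro h; exact absurd (Finset.mem_univ k) h
  have hF : ∀ φ : Fin K → H,
      (∀ k l, ⟪φ k, Tμμ (φ l)⟫_ℝ = if k = l then (1:ℝ) else 0) →
      IMSE φ = S - ∑ k, ‖Tμτstar (φ k)‖ ^ 2 := by
    intro φ hgram
    have h2 : ∑ k, ⟪Tμτstar (φ k), Tμτstar (φ k)⟫_ℝ = ∑ k, ‖Tμτstar (φ k)‖ ^ 2 :=
      Finset.sum_congr rfl fun k _ => real_inner_self_eq_norm_sq _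
    have hub : IMSE φ ≤ S - ∑ k, ‖Tμτstar (φ k)‖ ^ 2 := by
      have h1 := hIMSE_le φ (fun k => Tμτstar (φ k))
      rw [hexp φ (fun k => Tμτstar (φ k))] at h1
      have h3 : ∑ k, ∑ l, ⟪φ k, Tμμ (φ l)⟫_ℝ * ⟪Tμτstar (φ k), Tμτstar (φ l)⟫_ℝ
          = ∑ k, ‖Tμτstar (φ k)‖ ^ 2 := by
        refine Finset.sum_congr rfl fun k _ => ?_
        rw [← hite (fun k => Tμτstar (φ k)) k]
        exact Finset.sum_congr rfl fun l _ => by rw [hgram k l]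
      rw [h2, h3] at h1
      linarith
    have hlb : S - ∑ k, ‖Tμτstar (φ k)‖ ^ 2 ≤ IMSE φ := by
      apply hIMSE_ge
      intro ψ
      rw [hexp φ ψ]
      have h3 : ∑ k, ∑ l, ⟪φ k, Tμμ (φ l)⟫_ℝ * ⟪ψ k, ψ l⟫_ℝ = ∑ k, ‖ψ k‖ ^ 2 := by
        refine Finset.sum_congr rfl fun k _ => ?_
        rw [← hite ψ k]
        exact Finset.sum_congr rfl fun l _ => by rw [hgram k l]
      rw [h3]
      have h0 : 0 ≤ ∑ k, (‖ψ k‖ ^ 2 - 2 * ⟪Tμτstar (φ k), ψ k⟫_ℝ + ‖Tμτstar (φ k)‖ ^ 2) := by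
        apply Finset.sum_nonneg
        intro k _
        have hc : ⟪ψ k, Tμτstar (φ k)⟫_ℝ = ⟪Tμτstar (φ k), ψ k⟫_ℝ := real_inner_comm _ _
        have hh : (0:ℝ) ≤ ‖ψ k - Tμτstar (φ k)‖ ^ 2 := sq_nonneg _
        rw [norm_sub_sq_real] at hh
        linarith
      rw [Finset.sum_add_distrib, Finset.sum_sub_distrib, ← Finset.mul_sum] at h0
      linarith
    exact le_antisymm hub hlb
  have hFa : ∀ (a : ℝ), 0 ≤ a → ∀ φ : Fin K → H,
      (∀ k l, ⟪φ k, Tμμ (φ l) + a • φ l⟫_ℝ = if k = l then (1:ℝ) else 0) →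
      IMSE φ ≤ S - ∑ k, ‖Tμτstar (φ k)‖ ^ 2 := by
    intro a ha φ hgram
    have hgram' : ∀ k l, ⟪φ k, Tμμ (φ l)⟫_ℝ
        = (if k = l then (1:ℝ) else 0) - a * ⟪φ k, φ l⟫_ℝ := by
      intro k l
      have hh := hgram k l
      rw [inner_add_right, real_inner_smul_right] at hh
      linarith
    have h1 := hIMSE_le φ (fun k => Tμτstar (φ k))
    rw [hexp φ (fun k => Tμτstar (φ k))] at h1
    have h2 : ∑ k, ⟪Tμτstar (φ k), Tμτstar (φ k)⟫_ℝ = ∑ k, ‖Tμτstar (φ k)‖ ^ 2 :=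
      Finset.sum_congr rfl fun k _ => real_inner_self_eq_norm_sq _
    have h3 : ∑ k, ∑ l, ⟪φ k, Tμμ (φ l)⟫_ℝ * ⟪Tμτstar (φ k), Tμτstar (φ l)⟫_ℝ
        = ∑ k, ‖Tμτstar (φ k)‖ ^ 2
          - a * ∑ k, ∑ l, ⟪φ k, φ l⟫_ℝ * ⟪Tμτstar (φ k), Tμτstar (φ l)⟫_ℝ := by
      calc ∑ k, ∑ l, ⟪φ k, Tμμ (φ l)⟫_ℝ * ⟪Tμτstar (φ k), Tμτstar (φ l)⟫_ℝ
          = ∑ k, ∑ l, ((if k = l then (1:ℝ) else 0) * ⟪Tμτstar (φ k), Tμτstar (φ l)⟫_ℝ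
              - a * (⟪φ k, φ l⟫_ℝ * ⟪Tμτstar (φ k), Tμτstar (φ l)⟫_ℝ)) := by
            refine Finset.sum_congr rfl fun k _ => Finset.sum_congr rfl fun l _ => ?_
            rw [hgram' k l]; ring
        _ = ∑ k, ‖Tμτstar (φ k)‖ ^ 2
              - a * ∑ k, ∑ l, ⟪φ k, φ l⟫_ℝ * ⟪Tμτstar (φ k), Tμτstar (φ l)⟫_ℝ := by
            simp only [Finset.sum_sub_distrib, ← Finset.mul_sum]
            congr 1
            exact Finset.sum_congr rfl fun k _ => hite (fun k => Tμτstar (φ k)) k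
    rw [h2, h3] at h1
    have hQ := gram_prod_nonneg' φ (fun k => Tμτstar (φ k))
    have := mul_nonneg ha hQ
    linarith
  obtain ⟨lam0, φ0, hant0, hnn0, hmem0, heig0, hgram0, hdiag0, hmax0⟩ :=
    genEigH' G K hG hK μc τc Tμμ Tμτ Tμτstar hTμμ hTμτ hTμτstar hrank 0 le_rfl
  have hgram0' : ∀ k l, ⟪φ0 k, Tμμ (φ0 l)⟫_ℝ = if k = l then (1:ℝ) else 0 := by
    intro k l
    have hh := hgram0 k l
    rwa [zero_smul, add_zero] at hh
  have heig0' : ∀ k, Tμτ (Tμτstar (φ0 k)) = lam0 k • Tμμ (φ0 k) := by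
    intro k
    have hh := heig0 k
    rwa [zero_smul, add_zero] at hh
  set L : ℝ := ∑ k, lam0 k with hL
  have hFφ0 : ∑ k, ‖Tμτstar (φ0 k)‖ ^ 2 = L := by
    rw [hL]
    exact Finset.sum_congr rfl fun k _ => by rw [← hAinner, hdiag0 k]
  have hprojF : ∀ χ : Fin K → H,
      (∀ k l, ⟪χ k, Tμμ (χ l)⟫_ℝ = if k = l then (1:ℝ) else 0) →
      ∑ k, ‖Tμτstar (χ k)‖ ^ 2 ≤ L := by
    intro χ hg
    haveI : FiniteDimensional ℝ (Submodule.span ℝ (Set.range μc)) :=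
      FiniteDimensional.span_of_finite ℝ (Set.finite_range μc)
    have hproj_inner : ∀ (x : H) (g : Fin G),
        ⟪μc g, x⟫_ℝ
        = ⟪μc g, ((Submodule.orthogonalProjectionOnto (Submodule.span ℝ (Set.range μc)) x :
            Submodule.span ℝ (Set.range μc)) : H)⟫_ℝ := by
      intro x g
      have hmem := Submodule.sub_starProjection_mem_orthogonal
        (K := Submodule.span ℝ (Set.range μc)) x
      have h0 : ⟪μc g, x - ((Submodule.orthogonalProjectionOnto (Submodule.span ℝ (Set.range μc)) x :
          Submodule.span ℝ (Set.range μc)) : H)⟫_ℝ = 0 :=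
        (Submodule.mem_orthogonal _ _).mp hmem (μc g) (hμcV g)
      rw [inner_sub_right] at h0
      linarith
    have hstar_eq : ∀ k, Tμτstar (χ k)
        = Tμτstar ((Submodule.orthogonalProjectionOnto (Submodule.span ℝ (Set.range μc)) (χ k) : H)) := by
      intro k
      rw [hTμτstar, hTμτstar]
      congr 1
      refine Finset.sum_congr rfl fun g _ => ?_
      rw [← hproj_inner (χ k) g]
    have hgram'' : ∀ k l,
        ⟪((Submodule.orthogonalProjectionOnto (Submodule.span ℝ (Set.range μc)) (χ k) : H)),
          Tμμ ((Submodule.orthogonalProjectionOnto (Submodule.span ℝ (Set.range μc)) (χ l) : H))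
          + (0:ℝ) • ((Submodule.orthogonalProjectionOnto (Submodule.span ℝ (Set.range μc)) (χ l) : H))⟫_ℝ
        = if k = l then (1:ℝ) else 0 := by
      intro k l
      rw [zero_smul, add_zero]
      calc ⟪((Submodule.orthogonalProjectionOnto (Submodule.span ℝ (Set.range μc)) (χ k) : H)),
            Tμμ ((Submodule.orthogonalProjectionOnto (Submodule.span ℝ (Set.range μc)) (χ l) : H))⟫_ℝ
          = (G : ℝ)⁻¹ * ∑ g,
              ⟪μc g, ((Submodule.orthogonalProjectionOnto (Submodule.span ℝ (Set.range μc)) (χ k) : H))⟫_ℝ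
              * ⟪μc g, ((Submodule.orthogonalProjectionOnto (Submodule.span ℝ (Set.range μc)) (χ l) : H))⟫_ℝ :=
            hMinner _ _
        _ = (G : ℝ)⁻¹ * ∑ g, ⟪μc g, χ k⟫_ℝ * ⟪μc g, χ l⟫_ℝ := by
            congr 1
            refine Finset.sum_congr rfl fun g _ => ?_
            rw [← hproj_inner (χ k) g, ← hproj_inner (χ l) g]
        _ = ⟪χ k, Tμμ (χ l)⟫_ℝ := (hMinner _ _).symm
        _ = if k = l then (1:ℝ) else 0 := hg k l
    have hle := hmax0
      (fun k => ((Submodule.orthogonalProjectionOnto (Submodule.span ℝ (Set.range μc)) (χ k) : H)))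
      (fun k => (Submodule.orthogonalProjectionOnto (Submodule.span ℝ (Set.range μc)) (χ k)).2) hgram''
    calc ∑ k, ‖Tμτstar (χ k)‖ ^ 2
        = ∑ k, ⟪((Submodule.orthogonalProjectionOnto (Submodule.span ℝ (Set.range μc)) (χ k) : H)),
            Tμτ (Tμτstar ((Submodule.orthogonalProjectionOnto (Submodule.span ℝ (Set.range μc)) (χ k) : H)))⟫_ℝ := by
          refine Finset.sum_congr rfl fun k _ => ?_
          rw [hAinner, ← hstar_eq]
      _ ≤ ∑ k, lam0 k := hle
      _ = L := rfl
  have hsetlb : ∀ v ∈ { v : ℝ | ∃ χ : Fin K → H,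
      (∀ k l, ⟪χ k, Tμμ (χ l)⟫_ℝ = if k = l then (1 : ℝ) else 0) ∧
      v = (G : ℝ)⁻¹ * ∑ g, ‖τc g‖ ^ 2 - ∑ k, ‖Tμτstar (χ k)‖ ^ 2 }, S - L ≤ v := by
    rintro v ⟨χ, hχ, rfl⟩
    have := hprojF χ hχ
    have hSS : (G : ℝ)⁻¹ * ∑ g, ‖τc g‖ ^ 2 = S := rfl
    linarith [hSS.ge]
  have hmemset : (S - L) ∈ { v : ℝ | ∃ χ : Fin K → H,
      (∀ k l, ⟪χ k, Tμμ (χ l)⟫_ℝ = if k = l then (1 : ℝ) else 0) ∧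
      v = (G : ℝ)⁻¹ * ∑ g, ‖τc g‖ ^ 2 - ∑ k, ‖Tμτstar (χ k)‖ ^ 2 } := by
    exact ⟨φ0, hgram0', by rw [hFφ0]⟩
  have hstar : IMSEstar = S - L := by
    rw [hIMSEstar]
    exact le_antisymm (csInf_le ⟨S - L, hsetlb⟩ hmemset) (le_csInf ⟨S - L, hmemset⟩ hsetlb)
  constructor
  · exact ⟨lam0, φ0, fun k l hkl => hant0 hkl, hnn0, heig0', hgram0', by
      rw [hF φ0 hgram0', hFφ0, hstar]⟩
  · obtain ⟨w, d, hw1, hw2, hwP⟩ := exists_rotation' (fun k l => ⟪φ0 k, φ0 l⟫_ℝ)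
      (fun k l => real_inner_comm _ _)
    have hρmem : ∀ i, (∑ k, w i k • φ0 k) ∈ Submodule.span ℝ (Set.range μc) := fun i =>
      Submodule.sum_mem _ fun k _ => Submodule.smul_mem _ _ (hmem0 k)
    have hρM : ∀ i j, ⟪∑ k, w i k • φ0 k, Tμμ (∑ l, w j l • φ0 l)⟫_ℝ
        = if i = j then (1:ℝ) else 0 := by
      intro i j
      rw [inner_sum_smul φ0 φ0 (w i) (w j) Tμμ]
      rw [← hw1 i j]
      refine Finset.sum_congr rfl fun k _ => ?_
      rw [← hdelta (fun l => w i k * w j l) k]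
      refine Finset.sum_congr rfl fun l _ => ?_
      rw [hgram0' k l]
    have hρρ : ∀ i j, ⟪∑ k, w i k • φ0 k, ∑ l, w j l • φ0 l⟫_ℝ
        = if i = j then d j else 0 := by
      intro i j
      have hh := inner_sum_smul φ0 φ0 (w i) (w j) (ContinuousLinearMap.id ℝ H)
      simp only [ContinuousLinearMap.id_apply] at hh
      rw [hh, hwP i j]
    have hρA : ∀ i, ⟪∑ k, w i k • φ0 k, Tμτ (Tμτstar (∑ l, w i l • φ0 l))⟫_ℝ
        = ∑ k, lam0 k * (w i k) ^ 2 := by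
      intro i
      have hh := inner_sum_smul φ0 φ0 (w i) (w i) (Tμτ.comp Tμτstar)
      simp only [ContinuousLinearMap.comp_apply] at hh
      rw [hh]
      refine Finset.sum_congr rfl fun k _ => ?_
      rw [Finset.sum_eq_single k]
      · rw [heig0' k, real_inner_smul_right, hgram0' k k, if_pos rfl]; ring
      · intro l _ hl
        rw [heig0' l, real_inner_smul_right, hgram0' k l, if_neg (Ne.symm hl)]; ring
      · intro hcon; exact absurd (Finset.mem_univ k) hcon
    have hd_nonneg : ∀ i, 0 ≤ d i := by
      intro i
      have hh := hρρ i i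
      rw [if_pos rfl] at hh
      rw [← hh]
      exact real_inner_self_nonneg
    have hwsq : ∀ i k, (w i k) ^ 2 ≤ 1 := by
      intro i k
      have h1 := hw1 i i
      rw [if_pos rfl] at h1
      have h2 : (w i k) * (w i k) ≤ ∑ k', w i k' * w i k' :=
        Finset.single_le_sum (f := fun k' => w i k' * w i k')
          (fun k' _ => mul_self_nonneg _) (Finset.mem_univ k)
      rw [h1] at h2
      nlinarith
    have hq_nonneg : ∀ i, 0 ≤ ∑ k, lam0 k * (w i k) ^ 2 :=
      fun i => Finset.sum_nonneg fun k _ => mul_nonneg (hnn0 k) (sq_nonneg _)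
    have hq_le : ∀ i, ∑ k, lam0 k * (w i k) ^ 2 ≤ L := by
      intro i
      rw [hL]
      exact Finset.sum_le_sum fun k _ => by nlinarith [hwsq i k, hnn0 k]
    have hq_sum : ∑ i, ∑ k, lam0 k * (w i k) ^ 2 = L := by
      rw [Finset.sum_comm, hL]
      refine Finset.sum_congr rfl fun k _ => ?_
      have h1 := hw2 k k
      rw [if_pos rfl] at h1
      calc ∑ i, lam0 k * (w i k) ^ 2 = lam0 k * ∑ i, w i k * w i k := by
            rw [Finset.mul_sum]
            exact Finset.sum_congr rfl fun i _ => by ring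
        _ = lam0 k := by rw [h1, mul_one]
    refine ⟨L * ∑ i, d i, 1, one_pos, ?_⟩
    intro a ha0 ha1
    obtain ⟨γa, φa, hanta, hnna, hmema, heiga, hgrama, hdiaga, hmaxa⟩ :=
      genEigH' G K hG hK μc τc Tμμ Tμτ Tμτstar hTμμ hTμτ hTμτstar hrank a ha0.le
    refine ⟨γa, φa, fun k l hkl => hanta hkl, hnna, heiga, hgrama, ?_⟩
    have hFγ : ∑ k, ‖Tμτstar (φa k)‖ ^ 2 = ∑ k, γa k :=
      Finset.sum_congr rfl fun k _ => by rw [← hAinner, hdiaga k]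
    have h1 : IMSE φa ≤ S - ∑ k, γa k := by
      have hh := hFa a ha0.le φa hgrama
      rwa [hFγ] at hh
    have hpos1 : ∀ i, (0:ℝ) < 1 + a * d i := fun i => by nlinarith [hd_nonneg i]
    have hssq : ∀ i, ((Real.sqrt (1 + a * d i))⁻¹) ^ 2 = (1 + a * d i)⁻¹ := by
      intro i
      rw [inv_pow, Real.sq_sqrt (hpos1 i).le]
    have hχgram : ∀ i j,
        ⟪(Real.sqrt (1 + a * d i))⁻¹ • ∑ k, w i k • φ0 k,
          Tμμ ((Real.sqrt (1 + a * d j))⁻¹ • ∑ l, w j l • φ0 l)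
          + a • ((Real.sqrt (1 + a * d j))⁻¹ • ∑ l, w j l • φ0 l)⟫_ℝ
        = if i = j then (1:ℝ) else 0 := by
      intro i j
      rw [inner_add_right, map_smul, real_inner_smul_left, real_inner_smul_right,
        real_inner_smul_right, real_inner_smul_left, real_inner_smul_right,
        hρM i j, hρρ i j]
      rcases eq_or_ne i j with h | h
      · subst h
        rw [if_pos rfl, if_pos rfl]
        have h2 := hssq i
        have h3 : ((Real.sqrt (1 + a * d i))⁻¹) ^ 2 * (1 + a * d i) = 1 := by
          rw [h2]
          exact inv_mul_cancel₀ (hpos1 i).ne'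
        nlinarith [h3]
      · rw [if_neg h, if_neg h]
        ring
    have hmaxle := hmaxa (fun i => (Real.sqrt (1 + a * d i))⁻¹ • ∑ k, w i k • φ0 k)
      (fun i => Submodule.smul_mem _ _ (hρmem i)) hχgram
    have hχval : ∀ i, ⟪(Real.sqrt (1 + a * d i))⁻¹ • ∑ k, w i k • φ0 k,
        Tμτ (Tμτstar ((Real.sqrt (1 + a * d i))⁻¹ • ∑ k, w i k • φ0 k))⟫_ℝ
        = ((Real.sqrt (1 + a * d i))⁻¹) ^ 2 * ∑ k, lam0 k * (w i k) ^ 2 := by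
      intro i
      rw [map_smul, map_smul, real_inner_smul_left, real_inner_smul_right, hρA i]
      ring
    have hlow : L - (L * ∑ i, d i) * a ≤ ∑ i, ((Real.sqrt (1 + a * d i))⁻¹) ^ 2
        * ∑ k, lam0 k * (w i k) ^ 2 := by
      have hper : ∀ i, (1 - a * d i) * ∑ k, lam0 k * (w i k) ^ 2
          ≤ ((Real.sqrt (1 + a * d i))⁻¹) ^ 2 * ∑ k, lam0 k * (w i k) ^ 2 := by
        intro i
        rw [hssq i]
        have hA1 : (1 - a * d i) * (1 + a * d i) ≤ 1 := by nlinarith [sq_nonneg (a * d i)]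
        have hA2 : (1 - a * d i) ≤ (1 + a * d i)⁻¹ := by
          rw [← one_div, le_div_iff₀ (hpos1 i)]
          linarith
        exact mul_le_mul_of_nonneg_right hA2 (hq_nonneg i)
      have hsum1 : ∑ i, (1 - a * d i) * ∑ k, lam0 k * (w i k) ^ 2
          = ∑ i, (∑ k, lam0 k * (w i k) ^ 2) - a * ∑ i, d i * ∑ k, lam0 k * (w i k) ^ 2 := by
        rw [Finset.mul_sum, ← Finset.sum_sub_distrib]
        exact Finset.sum_congr rfl fun i _ => by ring
      have hdq : ∑ i, d i * ∑ k, lam0 k * (w i k) ^ 2 ≤ (∑ i, d i) * L := by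
        rw [Finset.sum_mul]
        exact Finset.sum_le_sum fun i _ =>
          mul_le_mul_of_nonneg_left (hq_le i) (hd_nonneg i)
      have hstep := Finset.sum_le_sum fun i (_ : i ∈ Finset.univ) => hper i
      have hda : a * ∑ i, d i * ∑ k, lam0 k * (w i k) ^ 2 ≤ a * ((∑ i, d i) * L) :=
        mul_le_mul_of_nonneg_left hdq ha0.le
      calc L - (L * ∑ i, d i) * a
          = ∑ i, (∑ k, lam0 k * (w i k) ^ 2) - a * ((∑ i, d i) * L) := by rw [hq_sum]; ring
        _ ≤ ∑ i, (∑ k, lam0 k * (w i k) ^ 2) - a * ∑ i, d i * ∑ k, lam0 k * (w i k) ^ 2 := by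
            linarith
        _ = ∑ i, (1 - a * d i) * ∑ k, lam0 k * (w i k) ^ 2 := hsum1.symm
        _ ≤ ∑ i, ((Real.sqrt (1 + a * d i))⁻¹) ^ 2 * ∑ k, lam0 k * (w i k) ^ 2 := hstep
    have hsum_val : ∑ i, ⟪(Real.sqrt (1 + a * d i))⁻¹ • ∑ k, w i k • φ0 k,
        Tμτ (Tμτstar ((Real.sqrt (1 + a * d i))⁻¹ • ∑ k, w i k • φ0 k))⟫_ℝ
        = ∑ i, ((Real.sqrt (1 + a * d i))⁻¹) ^ 2 * ∑ k, lam0 k * (w i k) ^ 2 :=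
      Finset.sum_congr rfl fun i _ => hχval i
    rw [hsum_val] at hmaxle
    have hfinal : L - (L * ∑ i, d i) * a ≤ ∑ k, γa k := le_trans hlow hmaxle
    rw [hstar]
    linarith
end

section
/- The set M := { (B μ_1^c, …, B μ_G^c) : B a bounded linear operator from H to H } is a closed linear subspace of the Hilbert space H^G (the G-fold direct sum of H with inner product ⟨(u_1,…,u_G),(v_1,…,v_G)⟩ := Σ_{g=1}^G ⟨u_g, v_g⟩). (This is the finite-population version of the closedness claim for the space of linear predictors established in the paper's proof of Theorem B.1, which justifies applying the classical projection theorem.) -/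
open scoped InnerProductSpace

/-- Auxiliary linear map sending coefficients `c` to `∑ g, c g • v g`. -/
private def mkLin {H : Type*} [NormedAddCommGroup H] [InnerProductSpace ℝ H]
    (G : ℕ) (v : Fin G → H) : (Fin G → ℝ) →ₗ[ℝ] H where
  toFun c := ∑ g, c g • v g
  map_add' a b := by simp [add_smul, Finset.sum_add_distrib]
  map_smul' r a := by simp [mul_smul, Finset.smul_sum]

/-- closedness claim in the proof of Theorem B.1, finite-population form:
the set of G-tuples (B μ_1^c, …, B μ_G^c), over bounded linear operators B, is a closed
linear subspace of the Hilbert space H^G (with inner product Σ_g ⟨u_g, v_g⟩). -/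
theorem predictor_space_closed_subspace
    {H : Type*} [NormedAddCommGroup H] [InnerProductSpace ℝ H] [CompleteSpace H]
    [TopologicalSpace.SeparableSpace H]
    (G : ℕ) (hG : 0 < G)
    (μ μc : Fin G → H)
    (hμc : ∀ g, μc g = μ g - (G : ℝ)⁻¹ • ∑ g', μ g') :
    ∃ M : Submodule ℝ (PiLp 2 (fun _ : Fin G => H)),
      (M : Set (PiLp 2 (fun _ : Fin G => H))) =
        { p : PiLp 2 (fun _ : Fin G => H) | ∃ B : H →L[ℝ] H, ∀ g, p g = B (μc g) } ∧
      IsClosed (M : Set (PiLp 2 (fun _ : Fin G => H))) := by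
  classical
  set M : Submodule ℝ (PiLp 2 (fun _ : Fin G => H)) :=
    { carrier := {p | ∀ c : Fin G → ℝ, (∑ g, c g • μc g) = 0 → (∑ g, c g • p g) = 0}
      add_mem' := by
        intro a b ha hb c hc
        have := ha c hc
        have := hb c hc
        simp only [PiLp.add_apply, smul_add, Finset.sum_add_distrib, *, add_zero]
      zero_mem' := by intro c hc; simp
      smul_mem' := by
        intro r a ha c hc
        have h := ha c hc
        have hcomm : ∀ x, c x • r • a x = r • (c x • a x) := fun x => smul_comm _ _ _
        simp only [PiLp.smul_apply, hcomm, ← Finset.smul_sum, h, smul_zero] } with hM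
  refine ⟨M, ?_, ?_⟩
  · ext p
    simp only [SetLike.mem_coe, Set.mem_setOf_eq]
    constructor
    · intro hp
      set φ : (Fin G → ℝ) →ₗ[ℝ] H := mkLin G μc with hφ
      set ψ : (Fin G → ℝ) →ₗ[ℝ] H := mkLin G (fun g => p g) with hψ
      have hle : LinearMap.ker φ ≤ LinearMap.ker ψ := by
        intro c hc
        rw [LinearMap.mem_ker] at hc ⊢
        exact hp c hc
      set K := LinearMap.range φ with hK
      haveI : FiniteDimensional ℝ K := by
        have : FiniteDimensional ℝ (Fin G → ℝ) := inferInstance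
        exact LinearMap.finiteDimensional_range φ
      let T : K →ₗ[ℝ] H :=
        ((LinearMap.ker φ).liftQ ψ hle) ∘ₗ (φ.quotKerEquivRange).symm.toLinearMap
      let B : H →L[ℝ] H :=
        (LinearMap.toContinuousLinearMap T) ∘L (Submodule.orthogonalProjectionOnto K)
      refine ⟨B, fun g => ?_⟩
      have hφg : φ (Pi.single g 1) = μc g := by
        simp [hφ, mkLin, Pi.single_apply, ite_smul]
      have hmem : μc g ∈ K := ⟨Pi.single g 1, hφg⟩
      have hproj : Submodule.orthogonalProjectionOnto K (μc g) = ⟨μc g, hmem⟩ :=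
        Submodule.orthogonalProjectionOnto_mem_subspace_eq_self (⟨μc g, hmem⟩ : K)
      have hquot : (φ.quotKerEquivRange) (Submodule.Quotient.mk (Pi.single g 1)) =
          (⟨μc g, hmem⟩ : K) := by
        apply Subtype.ext
        simpa using hφg
      have hψg : ψ (Pi.single g 1) = p g := by
        simp [hψ, mkLin, Pi.single_apply, ite_smul]
      have : B (μc g) = T ⟨μc g, hmem⟩ := by
        simp only [B, ContinuousLinearMap.comp_apply, hproj,
          LinearMap.coe_toContinuousLinearMap']
      rw [this]
      have : T ⟨μc g, hmem⟩ = ψ (Pi.single g 1) := by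
        simp only [T, LinearMap.comp_apply, LinearEquiv.coe_toLinearMap]
        rw [← hquot, LinearEquiv.symm_apply_apply]
        simp [Submodule.liftQ_apply]
      rw [this, hψg]
    · rintro ⟨B, hB⟩ c hc
      calc (∑ g, c g • p g) = ∑ g, c g • B (μc g) := by simp [hB]
        _ = B (∑ g, c g • μc g) := by rw [map_sum]; simp [map_smul]
        _ = 0 := by rw [hc, map_zero]
  · have hset : (M : Set (PiLp 2 (fun _ : Fin G => H))) =
        ⋂ c : {c : Fin G → ℝ // (∑ g, c g • μc g) = 0},
          {p : PiLp 2 (fun _ : Fin G => H) | (∑ g, c.1 g • p g) = 0} := by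
      ext p
      simp only [SetLike.mem_coe, Set.mem_iInter, Set.mem_setOf_eq, Subtype.forall]
      rfl
    rw [hset]
    apply isClosed_iInter
    intro c
    have hcont : Continuous fun p : PiLp 2 (fun _ : Fin G => H) => ∑ g, c.1 g • p g := by
      apply continuous_finset_sum
      intro g _
      exact ((continuous_apply g).comp (PiLp.continuous_ofLp 2 _)).const_smul _
    exact isClosed_eq hcont continuous_const
end

section
/- A bounded linear operator B₀ : H → H minimizes F(B) := (1/G)·Σ_{g=1}^G ‖τ_g^c − B μ_g^c‖² over all bounded linear operators B : H → H if and only if B₀ satisfies the normal equations T_{μτ}^* h = B₀ T_{μμ} h for every h ∈ H. (This is the operator normal equation characterizing the best linear predictor, derived in the paper's proof of Theorem B.1.) -/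
open scoped InnerProductSpace

set_option maxHeartbeats 1000000

/-- Cross-term vanishing: if ∑ g ⟪μc g, h⟫ • r g = 0 for all h, then
the cross term ∑ g ⟪r g, D (μc g)⟫ vanishes for every operator D. -/
lemma cross_term_zero
    {H : Type*} [NormedAddCommGroup H] [InnerProductSpace ℝ H] [CompleteSpace H]
    (G : ℕ) (μc r : Fin G → H)
    (h0 : ∀ h : H, ∑ g, ⟪μc g, h⟫_ℝ • r g = 0) (D : H →L[ℝ] H) :
    ∑ g, ⟪r g, D (μc g)⟫_ℝ = 0 := by
  set M := Submodule.span ℝ (Set.range μc) with hM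
  haveI : FiniteDimensional ℝ M :=
    FiniteDimensional.span_of_finite ℝ (Set.finite_range μc)
  set b := stdOrthonormalBasis ℝ M with hb
  have hmem : ∀ g, μc g ∈ M := fun g => Submodule.subset_span ⟨g, rfl⟩
  have hrep : ∀ g, μc g = ∑ i, ⟪((b i : M) : H), μc g⟫_ℝ • ((b i : M) : H) := by
    intro g
    have h1 := b.sum_repr' (⟨μc g, hmem g⟩ : M)
    have h2 := congrArg (Subtype.val) h1
    simpa [Submodule.coe_sum, Submodule.coe_inner] using h2.symm
  calc ∑ g, ⟪r g, D (μc g)⟫_ℝ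
      = ∑ g, ∑ i, ⟪((b i : M) : H), μc g⟫_ℝ * ⟪r g, D ((b i : M) : H)⟫_ℝ := by
        refine Finset.sum_congr rfl fun g _ => ?_
        conv_lhs => rw [hrep g]
        simp [inner_sum, real_inner_smul_right, map_sum, map_smul]
    _ = ∑ i, ∑ g, ⟪μc g, ((b i : M) : H)⟫_ℝ * ⟪r g, D ((b i : M) : H)⟫_ℝ := by
        rw [Finset.sum_comm]
        simp [real_inner_comm]
    _ = ∑ i, ⟪∑ g, ⟪μc g, ((b i : M) : H)⟫_ℝ • r g, D ((b i : M) : H)⟫_ℝ := by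
        refine Finset.sum_congr rfl fun i _ => ?_
        rw [sum_inner]
        simp [real_inner_smul_left]
    _ = 0 := by
        simp [h0]

/-- operator normal equations in the proof of Theorem B.1:
B₀ minimizes F(B) = (1/G) Σ_g ‖τ_g^c − B μ_g^c‖² iff T_{μτ}^* h = B₀ (T_{μμ} h)
for every h. -/
theorem normal_equations_characterize_minimizer
    {H : Type*} [NormedAddCommGroup H] [InnerProductSpace ℝ H] [CompleteSpace H]
    [TopologicalSpace.SeparableSpace H]
    (G : ℕ) (hG : 0 < G)
    (μ τ μc τc : Fin G → H)
    (hμc : ∀ g, μc g = μ g - (G : ℝ)⁻¹ • ∑ g', μ g')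
    (hτc : ∀ g, τc g = τ g - (G : ℝ)⁻¹ • ∑ g', τ g')
    (Tμμ Tμτstar : H →L[ℝ] H)
    (hTμμ : ∀ h : H, Tμμ h = (G : ℝ)⁻¹ • ∑ g, ⟪μc g, h⟫_ℝ • μc g)
    (hTμτstar : ∀ h : H, Tμτstar h = (G : ℝ)⁻¹ • ∑ g, ⟪μc g, h⟫_ℝ • τc g)
    (B₀ : H →L[ℝ] H) :
    (∀ B : H →L[ℝ] H,
      (G : ℝ)⁻¹ * ∑ g, ‖τc g - B₀ (μc g)‖ ^ 2 ≤
        (G : ℝ)⁻¹ * ∑ g, ‖τc g - B (μc g)‖ ^ 2) ↔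
    (∀ h : H, Tμτstar h = B₀ (Tμμ h)) := by
  have hGpos : (0:ℝ) < (G:ℝ)⁻¹ := by positivity
  set r : Fin G → H := fun g => τc g - B₀ (μc g) with hr
  -- Normal equations reformulation
  have hNE : (∀ h : H, Tμτstar h = B₀ (Tμμ h)) ↔
      (∀ h : H, ∑ g, ⟪μc g, h⟫_ℝ • r g = 0) := by
    have key : ∀ h : H, Tμτstar h - B₀ (Tμμ h)
        = (G : ℝ)⁻¹ • ∑ g, ⟪μc g, h⟫_ℝ • r g := by
      intro h
      rw [hTμτstar, hTμμ, map_smul, map_sum]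
      simp only [hr, smul_sub, Finset.sum_sub_distrib, smul_sub, map_smul]
    constructor
    · intro hne h
      have h1 : Tμτstar h - B₀ (Tμμ h) = 0 := by rw [hne h, sub_self]
      rw [key h] at h1
      exact (smul_eq_zero.mp h1).resolve_left (by positivity)
    · intro hz h
      have h1 : Tμτstar h - B₀ (Tμμ h) = 0 := by rw [key h, hz h, smul_zero]
      exact sub_eq_zero.mp h1
  rw [hNE]
  constructor
  · -- minimizer ⇒ normal equations
    intro hmin h
    set v : H := ∑ g, ⟪μc g, h⟫_ℝ • r g with hv
    by_contra hvne
    -- perturbation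
    set C : ℝ := ∑ g, ⟪μc g, h⟫_ℝ ^ 2 with hC
    have hCnn : 0 ≤ C := Finset.sum_nonneg fun g _ => sq_nonneg _
    set a : ℝ := ‖v‖ ^ 2 with ha
    have hann : 0 ≤ a := sq_nonneg _
    set t : ℝ := a / (C * a + 1) with ht
    set B : H →L[ℝ] H := B₀ + t • ((innerSL ℝ h).smulRight v) with hB
    have hBg : ∀ g, τc g - B (μc g) = r g - (t * ⟪h, μc g⟫_ℝ) • v := by
      intro g
      simp only [hB, ContinuousLinearMap.add_apply, ContinuousLinearMap.smul_apply,
        ContinuousLinearMap.smulRight_apply, innerSL_apply_apply, hr]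
      rw [smul_smul]
      abel
    have hcross : ∑ g, ⟪h, μc g⟫_ℝ * ⟪r g, v⟫_ℝ = a := by
      have : a = ⟪v, v⟫_ℝ := (real_inner_self_eq_norm_sq v).symm
      rw [this, hv, sum_inner]
      refine Finset.sum_congr rfl fun g _ => ?_
      rw [real_inner_smul_left, real_inner_comm (μc g) h]
    have hexp : ∑ g, ‖τc g - B (μc g)‖ ^ 2
        = (∑ g, ‖r g‖ ^ 2) - 2 * t * a + t ^ 2 * (C * a) := by
      have : ∀ g, ‖τc g - B (μc g)‖ ^ 2
          = ‖r g‖ ^ 2 - 2 * (t * ⟪h, μc g⟫_ℝ) * ⟪r g, v⟫_ℝ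
            + (t * ⟪h, μc g⟫_ℝ) ^ 2 * a := by
        intro g
        rw [hBg g, norm_sub_sq_real, real_inner_smul_right, norm_smul]
        simp only [Real.norm_eq_abs, mul_pow, sq_abs, ha]
        ring
      rw [Finset.sum_congr rfl fun g _ => this g]
      rw [Finset.sum_add_distrib, Finset.sum_sub_distrib]
      have e1 : ∑ g, 2 * (t * ⟪h, μc g⟫_ℝ) * ⟪r g, v⟫_ℝ
          = 2 * t * a := by
        rw [← hcross, Finset.mul_sum]
        refine Finset.sum_congr rfl fun g _ => by ring
      have e2 : ∑ g, (t * ⟪h, μc g⟫_ℝ) ^ 2 * a = t ^ 2 * (C * a) := by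
        rw [hC, Finset.sum_mul, Finset.mul_sum]
        refine Finset.sum_congr rfl fun g _ => by
          rw [real_inner_comm (μc g) h]; ring
      rw [e1, e2]
    have hle := hmin B
    rw [hexp] at hle
    have hle2 : 0 ≤ -2 * t * a + t ^ 2 * (C * a) := by
      have := (mul_le_mul_iff_right₀ hGpos).mp hle
      linarith
    have hden : (0:ℝ) < C * a + 1 := by positivity
    have hkey : a ^ 2 * (C * a + 2) ≤ 0 := by
      rw [ht] at hle2
      have h3 : 0 ≤ (-2 * (a / (C * a + 1)) * a
          + (a / (C * a + 1)) ^ 2 * (C * a)) * (C * a + 1) ^ 2 :=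
        mul_nonneg hle2 (by positivity)
      have h4 : (-2 * (a / (C * a + 1)) * a
          + (a / (C * a + 1)) ^ 2 * (C * a)) * (C * a + 1) ^ 2
          = a ^ 2 * (C * a) - 2 * a ^ 2 * (C * a + 1) := by
        field_simp
        ring
      rw [h4] at h3
      nlinarith
    have hCa : 0 < C * a + 2 := by positivity
    have ha0 : a = 0 := by nlinarith
    exact hvne (norm_eq_zero.mp (by nlinarith [norm_nonneg v, sq_nonneg ‖v‖] : ‖v‖ = 0))
  · -- normal equations ⇒ minimizer
    intro hz B
    have hcross := cross_term_zero G μc r hz (B - B₀)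
    have hle : ∑ g, ‖r g‖ ^ 2 ≤ ∑ g, ‖τc g - B (μc g)‖ ^ 2 := by
      have hexp : ∀ g, ‖τc g - B (μc g)‖ ^ 2
          = ‖r g‖ ^ 2 - 2 * ⟪r g, (B - B₀) (μc g)⟫_ℝ + ‖(B - B₀) (μc g)‖ ^ 2 := by
        intro g
        have : τc g - B (μc g) = r g - (B - B₀) (μc g) := by
          simp only [hr, ContinuousLinearMap.sub_apply]
          abel
        rw [this, norm_sub_sq_real]
      rw [Finset.sum_congr rfl fun g _ => hexp g, Finset.sum_add_distrib,
        Finset.sum_sub_distrib, ← Finset.mul_sum, hcross]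
      have : 0 ≤ ∑ g, ‖(B - B₀) (μc g)‖ ^ 2 :=
        Finset.sum_nonneg fun g _ => sq_nonneg _
      linarith
    exact mul_le_mul_of_nonneg_left hle (le_of_lt hGpos)
end

section
/- Let X be a complex Banach space, S and Ŝ bounded linear operators on X, λ ∈ ℂ and ρ > 0 such that every z ∈ ℂ with |z − λ| = ρ/2 lies in the resolvent set of S. Set M := sup { ‖(S − z·I)^{−1}‖ : |z − λ| = ρ/2 } (which is finite), and suppose ε := ‖Ŝ − S‖ ≤ 1/(2M). Then every z with |z − λ| = ρ/2 lies in the resolvent set of Ŝ, and the contour integrals P := −(2πi)^{−1}·∮_{|z−λ|=ρ/2} (S − z·I)^{−1} dz and P̂ := −(2πi)^{−1}·∮_{|z−λ|=ρ/2} (Ŝ − z·I)^{−1} dz (over the positively oriented circle of radius ρ/2 centered at λ) satisfy ‖P̂ − P‖ ≤ ρ·M²·ε. (This is the spectral-projection perturbation bound ‖P̂_k − P_k‖ ≤ ϱ_k M_k² ε established in the paper's proof of Lemma C.2.) -/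
open scoped InnerProductSpace

noncomputable def circleContourIntegral {X : Type*} [NormedAddCommGroup X]
    [NormedSpace ℂ X] (lam : ℂ) (r : ℝ) (f : ℂ → (X →L[ℂ] X)) : X →L[ℂ] X :=
  ∫ t in (0 : ℝ)..(2 * Real.pi),
    ((r : ℂ) * Complex.I * Complex.exp (Complex.I * t)) •
      f (lam + (r : ℂ) * Complex.exp (Complex.I * t))

/-- spectral-projection perturbation bound from the proof of Lemma C.2:
if the circle |z − λ| = ρ/2 lies in the resolvent set of S with resolvent norms bounded
by M = sup{‖(S − zI)⁻¹‖ : |z − λ| = ρ/2}, and ε = ‖Ŝ − S‖ ≤ 1/(2M), then the circle lies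
in the resolvent set of Ŝ and the spectral projections P, P̂ defined by contour integrals
satisfy ‖P̂ − P‖ ≤ ρ·M²·ε. -/
theorem spectral_projection_perturbation
    {X : Type*} [NormedAddCommGroup X] [NormedSpace ℂ X] [CompleteSpace X]
    (S Shat : X →L[ℂ] X) (lam : ℂ) (ρ : ℝ) (hρ : 0 < ρ)
    (R : ℂ → (X →L[ℂ] X))
    (hR : ∀ z : ℂ, ‖z - lam‖ = ρ / 2 →
      (S - z • (1 : X →L[ℂ] X)) ∘L R z = 1 ∧ R z ∘L (S - z • (1 : X →L[ℂ] X)) = 1)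
    (M : ℝ)
    (hM : M = sSup { r : ℝ | ∃ z : ℂ, ‖z - lam‖ = ρ / 2 ∧ r = ‖R z‖ })
    (hε : ‖Shat - S‖ ≤ 1 / (2 * M)) :
    (∀ z : ℂ, ‖z - lam‖ = ρ / 2 →
      ∃ Rz : X →L[ℂ] X,
        (Shat - z • (1 : X →L[ℂ] X)) ∘L Rz = 1 ∧
        Rz ∘L (Shat - z • (1 : X →L[ℂ] X)) = 1) ∧
    (∀ Rhat : ℂ → (X →L[ℂ] X),
      (∀ z : ℂ, ‖z - lam‖ = ρ / 2 →
        (Shat - z • (1 : X →L[ℂ] X)) ∘L Rhat z = 1 ∧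
        Rhat z ∘L (Shat - z • (1 : X →L[ℂ] X)) = 1) →
      ‖(-(2 * (Real.pi : ℂ) * Complex.I)⁻¹) • circleContourIntegral lam (ρ / 2) Rhat -
        (-(2 * (Real.pi : ℂ) * Complex.I)⁻¹) • circleContourIntegral lam (ρ / 2) R‖ ≤
        ρ * M ^ 2 * ‖Shat - S‖) := by
  have hR' : ∀ z : ℂ, ‖z - lam‖ = ρ / 2 →
      (S - z • (1 : X →L[ℂ] X)) * R z = 1 ∧ R z * (S - z • (1 : X →L[ℂ] X)) = 1 := by
    intro z hz
    have := hR z hz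
    rwa [ContinuousLinearMap.mul_def, ContinuousLinearMap.mul_def]
  -- units of S - z
  have key0 : ∀ z : ℂ, ‖z - lam‖ = ρ / 2 →
      ∃ u : (X →L[ℂ] X)ˣ, (u : X →L[ℂ] X) = S - z • 1 ∧ ((u⁻¹ : _ˣ) : X →L[ℂ] X) = R z :=
    fun z hz => ⟨⟨S - z • 1, R z, (hR' z hz).1, (hR' z hz).2⟩, rfl, rfl⟩
  have hRinv : ∀ z, ‖z - lam‖ = ρ / 2 → R z = Ring.inverse (S - z • (1 : X →L[ℂ] X)) := by
    intro z hz
    obtain ⟨u, hu1, hu2⟩ := key0 z hz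
    rw [← hu1, Ring.inverse_unit, hu2]
  have hcontinv : ∀ z : ℂ, ‖z - lam‖ = ρ / 2 →
      ContinuousAt (fun w : ℂ => Ring.inverse (S - w • (1 : X →L[ℂ] X))) z := by
    intro z hz
    obtain ⟨u, hu1, -⟩ := key0 z hz
    have h1 : ContinuousAt (fun w : ℂ => S - w • (1 : X →L[ℂ] X)) z := by fun_prop
    have h2 : ContinuousAt (Ring.inverse : (X →L[ℂ] X) → _) (S - z • (1 : X →L[ℂ] X)) := by
      rw [← hu1]; exact NormedRing.inverse_continuousAt u
    exact ContinuousAt.comp (f := fun w : ℂ => S - w • (1 : X →L[ℂ] X)) h2 h1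
  have hset : { r : ℝ | ∃ z : ℂ, ‖z - lam‖ = ρ / 2 ∧ r = ‖R z‖ }
      = (fun z => ‖Ring.inverse (S - z • (1 : X →L[ℂ] X))‖) '' Metric.sphere lam (ρ / 2) := by
    ext r
    constructor
    · rintro ⟨z, hz, rfl⟩
      exact ⟨z, by simpa [Metric.mem_sphere, dist_eq_norm] using hz, by simp [← hRinv z hz]⟩
    · rintro ⟨z, hz, rfl⟩
      have hz' : ‖z - lam‖ = ρ / 2 := by simpa [Metric.mem_sphere, dist_eq_norm] using hz
      exact ⟨z, hz', by simp [← hRinv z hz']⟩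
  have hbdd : BddAbove { r : ℝ | ∃ z : ℂ, ‖z - lam‖ = ρ / 2 ∧ r = ‖R z‖ } := by
    rw [hset]
    apply ((isCompact_sphere lam (ρ / 2)).image_of_continuousOn ?_).bddAbove
    intro z hz
    have hz' : ‖z - lam‖ = ρ / 2 := by simpa [Metric.mem_sphere, dist_eq_norm] using hz
    exact ((hcontinv z hz').norm).continuousWithinAt
  have hMle : ∀ z : ℂ, ‖z - lam‖ = ρ / 2 → ‖R z‖ ≤ M := by
    intro z hz
    rw [hM]
    exact le_csSup hbdd ⟨z, hz, rfl⟩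
  have hz0 : ‖(lam + ((ρ / 2 : ℝ) : ℂ)) - lam‖ = ρ / 2 := by
    rw [add_sub_cancel_left]
    simp [abs_of_pos (by linarith : (0:ℝ) < ρ / 2), abs_of_pos hρ]
  have hM0 : 0 ≤ M := le_trans (norm_nonneg _) (hMle _ hz0)
  have hε0 : (0:ℝ) ≤ ‖Shat - S‖ := norm_nonneg _
  rcases eq_or_lt_of_le hM0 with hMz | hMpos
  · -- M = 0 : subsingleton case
    have hR0 : R (lam + ((ρ / 2 : ℝ) : ℂ)) = 0 := by
      have := hMle _ hz0
      rw [← hMz] at this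
      exact norm_le_zero_iff.mp this
    have h01 : (0 : X →L[ℂ] X) = 1 := by
      have := (hR' _ hz0).1
      rw [hR0] at this
      simpa using this
    have hsub : Subsingleton (X →L[ℂ] X) := subsingleton_of_zero_eq_one h01
    refine ⟨fun z hz => ⟨R z, Subsingleton.elim _ _, Subsingleton.elim _ _⟩, fun Rhat _ => ?_⟩
    have h0 : (-(2 * (Real.pi : ℂ) * Complex.I)⁻¹) • circleContourIntegral lam (ρ / 2) Rhat -
        (-(2 * (Real.pi : ℂ) * Complex.I)⁻¹) • circleContourIntegral lam (ρ / 2) R = 0 :=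
      Subsingleton.elim _ _
    rw [h0, norm_zero]
    positivity
  · -- M > 0
    have hMε : M * ‖Shat - S‖ ≤ 1 / 2 := by
      have h2M : (0:ℝ) < 2 * M := by linarith
      rw [le_div_iff₀ h2M] at hε
      nlinarith
    have key : ∀ z : ℂ, ‖z - lam‖ = ρ / 2 →
        ∃ V : (X →L[ℂ] X)ˣ, (V : X →L[ℂ] X) = Shat - z • 1 ∧
          ‖((V⁻¹ : _ˣ) : X →L[ℂ] X)‖ ≤ 2 * M := by
      intro z hz
      obtain ⟨u, hu1, hu2⟩ := key0 z hz
      set t : X →L[ℂ] X := -(R z * (Shat - S)) with ht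
      have htnorm : ‖t‖ ≤ M * ‖Shat - S‖ := by
        rw [ht, norm_neg]
        calc ‖R z * (Shat - S)‖ ≤ ‖R z‖ * ‖Shat - S‖ := norm_mul_le _ _
        _ ≤ M * ‖Shat - S‖ := by gcongr; exact hMle z hz
      have htle : ‖t‖ ≤ 1 / 2 := le_trans htnorm hMε
      have htlt : ‖t‖ < 1 := lt_of_le_of_lt htle (by norm_num)
      set u2 : (X →L[ℂ] X)ˣ := Units.oneSub t htlt with hu2def
      set V : (X →L[ℂ] X)ˣ := u * u2 with hV
      have hVval : (V : X →L[ℂ] X) = Shat - z • 1 := by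
        have h1 : (S - z • (1 : X →L[ℂ] X)) * R z = 1 := (hR' z hz).1
        rw [hV, Units.val_mul, hu1, hu2def, Units.val_oneSub, ht, sub_neg_eq_add,
          mul_add, mul_one, ← mul_assoc, h1, one_mul]
        abel
      have hu2inv : ‖((u2⁻¹ : _ˣ) : X →L[ℂ] X)‖ ≤ 2 := by
        set v : X →L[ℂ] X := ((u2⁻¹ : _ˣ) : X →L[ℂ] X) with hv
        have hvt : v * (1 - t) = 1 := by
          rw [hv, ← Units.val_oneSub t htlt, ← hu2def, Units.inv_mul]
        have hveq : v = 1 + v * t := by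
          rw [← hvt, mul_sub, mul_one]; abel
        have hb : ‖v‖ ≤ 1 + ‖v‖ * (1/2) := by
          calc ‖v‖ = ‖1 + v * t‖ := by rw [← hveq]
          _ ≤ ‖(1 : X →L[ℂ] X)‖ + ‖v * t‖ := norm_add_le _ _
          _ ≤ 1 + ‖v‖ * ‖t‖ := by
              gcongr
              · exact ContinuousLinearMap.norm_id_le
              · exact norm_mul_le _ _
          _ ≤ 1 + ‖v‖ * (1/2) := by gcongr
        linarith
      refine ⟨V, hVval, ?_⟩
      rw [hV, mul_inv_rev, Units.val_mul, hu2]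
      calc ‖((u2⁻¹ : _ˣ) : X →L[ℂ] X) * R z‖
          ≤ ‖((u2⁻¹ : _ˣ) : X →L[ℂ] X)‖ * ‖R z‖ := norm_mul_le _ _
      _ ≤ 2 * M := mul_le_mul hu2inv (hMle z hz) (norm_nonneg _) (by norm_num)
    refine ⟨?_, ?_⟩
    · intro z hz
      obtain ⟨V, hVval, -⟩ := key z hz
      refine ⟨((V⁻¹ : _ˣ) : X →L[ℂ] X), ?_, ?_⟩
      · show (Shat - z • (1 : X →L[ℂ] X)) * ((V⁻¹ : _ˣ) : X →L[ℂ] X) = 1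
        rw [← hVval]; exact V.mul_inv
      · show ((V⁻¹ : _ˣ) : X →L[ℂ] X) * (Shat - z • (1 : X →L[ℂ] X)) = 1
        rw [← hVval]; exact V.inv_mul
    · intro Rhat hRhat
      have hRhat' : ∀ z : ℂ, ‖z - lam‖ = ρ / 2 →
          (Shat - z • (1 : X →L[ℂ] X)) * Rhat z = 1 ∧
          Rhat z * (Shat - z • (1 : X →L[ℂ] X)) = 1 := by
        intro z hz
        have := hRhat z hz
        rwa [ContinuousLinearMap.mul_def, ContinuousLinearMap.mul_def]
      -- Rhat z is the inverse ↑V⁻¹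
      have huniq : ∀ z : ℂ, (hz : ‖z - lam‖ = ρ / 2) →
          Rhat z = Ring.inverse (Shat - z • (1 : X →L[ℂ] X)) ∧ ‖Rhat z‖ ≤ 2 * M := by
        intro z hz
        obtain ⟨V, hVval, hVinv⟩ := key z hz
        have hmulinv : (Shat - z • (1 : X →L[ℂ] X)) * ((V⁻¹ : _ˣ) : X →L[ℂ] X) = 1 := by
          rw [← hVval]; exact V.mul_inv
        have hequ : Rhat z = ((V⁻¹ : _ˣ) : X →L[ℂ] X) :=
          left_inv_eq_right_inv (hRhat' z hz).2 hmulinv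
        refine ⟨?_, by rw [hequ]; exact hVinv⟩
        rw [hequ, ← hVval, Ring.inverse_unit]
      have hcontinv2 : ∀ z : ℂ, ‖z - lam‖ = ρ / 2 →
          ContinuousAt (fun w : ℂ => Ring.inverse (Shat - w • (1 : X →L[ℂ] X))) z := by
        intro z hz
        obtain ⟨V, hVval, -⟩ := key z hz
        have h1 : ContinuousAt (fun w : ℂ => Shat - w • (1 : X →L[ℂ] X)) z := by fun_prop
        have h2 : ContinuousAt (Ring.inverse : (X →L[ℂ] X) → _) (Shat - z • (1 : X →L[ℂ] X)) := by
          rw [← hVval]; exact NormedRing.inverse_continuousAt V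
        exact ContinuousAt.comp (f := fun w : ℂ => Shat - w • (1 : X →L[ℂ] X)) h2 h1
      -- the difference bound on the circle
      have hdiff : ∀ z : ℂ, ‖z - lam‖ = ρ / 2 →
          ‖Rhat z - R z‖ ≤ 2 * M ^ 2 * ‖Shat - S‖ := by
        intro z hz
        have e1 : (S - z • (1 : X →L[ℂ] X)) * R z = 1 := (hR' z hz).1
        have e2 : Rhat z * (Shat - z • (1 : X →L[ℂ] X)) = 1 := (hRhat' z hz).2
        have heq : Rhat z - R z = Rhat z * (S - Shat) * R z := by
          calc Rhat z - R z
              = Rhat z * ((S - z • (1 : X →L[ℂ] X)) * R z)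
                - (Rhat z * (Shat - z • (1 : X →L[ℂ] X))) * R z := by
                rw [e1, e2, mul_one, one_mul]
          _ = Rhat z * (S - Shat) * R z := by noncomm_ring
        rw [heq]
        calc ‖Rhat z * (S - Shat) * R z‖
            ≤ ‖Rhat z * (S - Shat)‖ * ‖R z‖ := norm_mul_le _ _
        _ ≤ (‖Rhat z‖ * ‖S - Shat‖) * ‖R z‖ := by gcongr; exact norm_mul_le _ _
        _ ≤ ((2 * M) * ‖Shat - S‖) * M := by
            rw [norm_sub_rev]
            exact mul_le_mul (mul_le_mul (huniq z hz).2 le_rfl (norm_nonneg _)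
              (by positivity)) (hMle z hz) (norm_nonneg _) (by positivity)
        _ = 2 * M ^ 2 * ‖Shat - S‖ := by ring
      -- set up the parametrization
      set c : ℝ → ℂ := fun t =>
        ((ρ / 2 : ℝ) : ℂ) * Complex.I * Complex.exp (Complex.I * t) with hc
      set γ : ℝ → ℂ := fun t =>
        lam + ((ρ / 2 : ℝ) : ℂ) * Complex.exp (Complex.I * t) with hγdef
      have habs_exp : ∀ t : ℝ, ‖Complex.exp (Complex.I * t)‖ = 1 := by
        intro t
        rw [Complex.norm_exp]
        simp
      have hγ : ∀ t : ℝ, ‖γ t - lam‖ = ρ / 2 := by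
        intro t
        rw [hγdef]
        simp only [add_sub_cancel_left]
        rw [norm_mul, habs_exp, mul_one, Complex.norm_real, Real.norm_eq_abs,
          abs_of_pos (by linarith : (0:ℝ) < ρ / 2)]
      have hcnorm : ∀ t : ℝ, ‖c t‖ = ρ / 2 := by
        intro t
        rw [hc]
        simp only [norm_mul, habs_exp, Complex.norm_I, mul_one,
          Complex.norm_real, Real.norm_eq_abs]
        rw [abs_of_pos (by linarith : (0:ℝ) < ρ / 2)]
      have hccont : Continuous c := by fun_prop
      have hγcont : Continuous γ := by fun_prop
      have hcR : Continuous fun t : ℝ => R (γ t) := by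
        have : (fun t : ℝ => R (γ t))
            = fun t : ℝ => Ring.inverse (S - γ t • (1 : X →L[ℂ] X)) :=
          funext fun t => hRinv (γ t) (hγ t)
        rw [this]
        exact continuous_iff_continuousAt.mpr fun t =>
          (hcontinv (γ t) (hγ t)).comp hγcont.continuousAt
      have hcRhat : Continuous fun t : ℝ => Rhat (γ t) := by
        have : (fun t : ℝ => Rhat (γ t))
            = fun t : ℝ => Ring.inverse (Shat - γ t • (1 : X →L[ℂ] X)) :=
          funext fun t => (huniq (γ t) (hγ t)).1
        rw [this]
        exact continuous_iff_continuousAt.mpr fun t =>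
          (hcontinv2 (γ t) (hγ t)).comp hγcont.continuousAt
      have hint1 : IntervalIntegrable (fun t : ℝ => c t • Rhat (γ t))
          MeasureTheory.volume 0 (2 * Real.pi) :=
        (hccont.smul hcRhat).intervalIntegrable _ _
      have hint2 : IntervalIntegrable (fun t : ℝ => c t • R (γ t))
          MeasureTheory.volume 0 (2 * Real.pi) :=
        (hccont.smul hcR).intervalIntegrable _ _
      have hCC : circleContourIntegral lam (ρ / 2) Rhat - circleContourIntegral lam (ρ / 2) R
          = ∫ t in (0:ℝ)..(2 * Real.pi), (c t • Rhat (γ t) - c t • R (γ t)) := by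
        rw [intervalIntegral.integral_sub hint1 hint2]
        rfl
      rw [← smul_sub, hCC, norm_smul]
      have hnormc : ‖(-(2 * (Real.pi : ℂ) * Complex.I)⁻¹)‖ = (2 * Real.pi)⁻¹ := by
        rw [norm_neg, norm_inv]
        simp only [norm_mul, Complex.norm_I, mul_one, Complex.norm_two,
          Complex.norm_real, Real.norm_eq_abs]
        rw [abs_of_pos Real.pi_pos]
      have hintle : ‖∫ t in (0:ℝ)..(2 * Real.pi), (c t • Rhat (γ t) - c t • R (γ t))‖
          ≤ (ρ / 2 * (2 * M ^ 2 * ‖Shat - S‖)) * |2 * Real.pi - 0| := by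
        apply intervalIntegral.norm_integral_le_of_norm_le_const
        intro t _
        rw [← smul_sub, norm_smul, hcnorm]
        exact mul_le_mul_of_nonneg_left (hdiff (γ t) (hγ t)) (by positivity)
      calc ‖(-(2 * (Real.pi : ℂ) * Complex.I)⁻¹)‖
            * ‖∫ t in (0:ℝ)..(2 * Real.pi), (c t • Rhat (γ t) - c t • R (γ t))‖
          ≤ (2 * Real.pi)⁻¹ * ((ρ / 2 * (2 * M ^ 2 * ‖Shat - S‖)) * |2 * Real.pi - 0|) := by
            rw [hnormc]
            exact mul_le_mul_of_nonneg_left hintle (by positivity)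
      _ = ρ * M ^ 2 * ‖Shat - S‖ := by
            rw [sub_zero, abs_of_pos (by positivity : (0:ℝ) < 2 * Real.pi)]
            have hπ : Real.pi ≠ 0 := Real.pi_ne_zero
            field_simp
end

section
/- Let H be a Hilbert space, let P and Q be orthogonal projections on H, let φ be a unit vector with P φ = φ, and let φ̂ be a unit vector in the range of Q such that Q φ = ⟨φ, φ̂⟩·φ̂ and ⟨φ, φ̂⟩ ≥ 0. Then ‖φ̂ − φ‖² ≤ 2·(1 − ⟨φ, φ̂⟩²) ≤ 2·‖Q − P‖². (This is the eigenvector alignment inequality in the paper's proof of Lemma C.2, bounding the distance between an eigenvector and its analogue for a perturbed operator by the distance between the corresponding spectral projections.) -/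
open scoped InnerProductSpace

section UnitVectors

variable {F : Type*} [NormedAddCommGroup F] [InnerProductSpace ℝ F]

theorem norm_sub_sq_eq_two_mul_one_sub_inner {x y : F} (hx : ‖x‖ = 1) (hy : ‖y‖ = 1) :
    ‖y - x‖ ^ 2 = 2 * (1 - ⟪x, y⟫_ℝ) := by
  rw [norm_sub_sq_real, hx, hy, real_inner_comm]
  ring

/-- Pythagoras for the orthogonal projection of `x` onto the line spanned by `y`. -/
theorem norm_inner_smul_sub_sq {x y : F} (hy : ‖y‖ = 1) :
    ‖⟪x, y⟫_ℝ • y - x‖ ^ 2 = ‖x‖ ^ 2 - ⟪x, y⟫_ℝ ^ 2 := by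
  rw [norm_sub_sq_real, norm_smul, real_inner_smul_left, hy, real_inner_comm y x,
    Real.norm_eq_abs, mul_one, sq_abs]
  ring

end UnitVectors

theorem eigenvector_alignment_general
    {H : Type*} [NormedAddCommGroup H] [InnerProductSpace ℝ H]
    (P Q : H →L[ℝ] H)
    (φ φhat : H) (hφ : ‖φ‖ = 1) (hφhat : ‖φhat‖ = 1)
    (hPφ : P φ = φ)
    (hQφ : Q φ = ⟪φ, φhat⟫_ℝ • φhat)
    (hpos : 0 ≤ ⟪φ, φhat⟫_ℝ) :
    ‖φhat - φ‖ ^ 2 ≤ 2 * (1 - ⟪φ, φhat⟫_ℝ ^ 2) ∧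
    2 * (1 - ⟪φ, φhat⟫_ℝ ^ 2) ≤ 2 * ‖Q - P‖ ^ 2 := by
  constructor
  · have hle_one : ⟪φ, φhat⟫_ℝ ≤ 1 := by
      simpa [hφ, hφhat] using real_inner_le_norm φ φhat
    rw [norm_sub_sq_eq_two_mul_one_sub_inner hφ hφhat]
    linarith [sq_le hpos hle_one]
  · have hdiff : (Q - P) φ = ⟪φ, φhat⟫_ℝ • φhat - φ := by
      rw [sub_apply, hQφ, hPφ]
    have hnorm_sq : ‖(Q - P) φ‖ ^ 2 = 1 - ⟪φ, φhat⟫_ℝ ^ 2 := by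
      rw [hdiff, norm_inner_smul_sub_sq hφhat, hφ, one_pow]
    rw [← hnorm_sq]
    gcongr
    exact (Q - P).unit_le_opNorm φ hφ.le

/-- eigenvector alignment inequality in the proof of Lemma C.2:
if P, Q are orthogonal projections, φ a unit vector with P φ = φ, and φ̂ a unit vector
in the range of Q with Q φ = ⟨φ, φ̂⟩ φ̂ and ⟨φ, φ̂⟩ ≥ 0, then
‖φ̂ − φ‖² ≤ 2(1 − ⟨φ, φ̂⟩²) ≤ 2 ‖Q − P‖². -/
theorem eigenvector_alignment
    {H : Type*} [NormedAddCommGroup H] [InnerProductSpace ℝ H] [CompleteSpace H]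
    (P Q : H →L[ℝ] H)
    (hP_sa : IsSelfAdjoint P) (hP_idem : P ∘L P = P)
    (hQ_sa : IsSelfAdjoint Q) (hQ_idem : Q ∘L Q = Q)
    (φ φhat : H) (hφ : ‖φ‖ = 1) (hφhat : ‖φhat‖ = 1)
    (hPφ : P φ = φ) (hQφhat : Q φhat = φhat)
    (hQφ : Q φ = ⟪φ, φhat⟫_ℝ • φhat)
    (hpos : 0 ≤ ⟪φ, φhat⟫_ℝ) :
    ‖φhat - φ‖ ^ 2 ≤ 2 * (1 - ⟪φ, φhat⟫_ℝ ^ 2) ∧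
    2 * (1 - ⟪φ, φhat⟫_ℝ ^ 2) ≤ 2 * ‖Q - P‖ ^ 2 :=
  eigenvector_alignment_general P Q φ φhat hφ hφhat hPφ hQφ hpos
end

section
/- Let H be a complex Hilbert space, a > 0, and let A and B be bounded self-adjoint operators on H with A ≥ a·I and B ≥ a·I (i.e. ⟨x, A x⟩ ≥ a·‖x‖² and ⟨x, B x⟩ ≥ a·‖x‖² for all x ∈ H). Then the positive square roots satisfy ‖A^{1/2} − B^{1/2}‖ ≤ ‖A − B‖ / (2·√a). (This operator-Lipschitz property of the square root on operators bounded below by a·I is used in the paper's proof of Theorem 4.2 to bound ‖(T̂_{μμ} + aI)^{1/2} − (T_{μμ} + aI)^{1/2}‖.) -/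
open scoped InnerProductSpace

section Aux

variable {H : Type*} [NormedAddCommGroup H] [InnerProductSpace ℂ H] [CompleteSpace H]

lemma re_inner_sub_smul (r : ℝ) (x y : H) :
    (⟪x, y - r • x⟫_ℂ).re = (⟪x, y⟫_ℂ).re - r * ‖x‖ ^ 2 := by
  rw [inner_sub_right]
  have h : r • x = (r : ℂ) • x := by simp
  rw [h, inner_smul_right, inner_self_eq_norm_sq_to_K]
  simp [Complex.sub_re, Complex.mul_re]
  left
  rw [sq, Complex.mul_re]
  simp [sq]

lemma isSelfAdjoint_real_smul_one (r : ℝ) :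
    IsSelfAdjoint (r • (1 : H →L[ℂ] H)) := by
  rw [IsSelfAdjoint, star_smul, star_trivial, star_one]

/-- If `T` is self-adjoint with `⟪x, Tx⟫.re ≥ r‖x‖²`, then `r • 1 ≤ T` in the Loewner order. -/
lemma smul_one_le_of_inner_lb (r : ℝ) (T : H →L[ℂ] H) (hT : IsSelfAdjoint T)
    (h : ∀ x : H, r * ‖x‖ ^ 2 ≤ (⟪x, T x⟫_ℂ).re) :
    r • (1 : H →L[ℂ] H) ≤ T := by
  rw [ContinuousLinearMap.le_def]
  refine ⟨ContinuousLinearMap.isSelfAdjoint_iff_isSymmetric.mp (hT.sub (isSelfAdjoint_real_smul_one r)), fun x => ?_⟩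
  have hx : (T - r • (1 : H →L[ℂ] H)) x = T x - r • x := by simp
  rw [ContinuousLinearMap.reApplyInnerSelf_apply, hx]
  rw [inner_re_symm]
  simp only [RCLike.re_to_complex]
  rw [re_inner_sub_smul]
  linarith [h x]

/-- Conversely, `r • 1 ≤ T` gives the inner-product lower bound. -/
lemma inner_lb_of_smul_one_le {r : ℝ} {T : H →L[ℂ] H}
    (h : r • (1 : H →L[ℂ] H) ≤ T) :
    ∀ x : H, r * ‖x‖ ^ 2 ≤ (⟪x, T x⟫_ℂ).re := by
  intro x
  rw [ContinuousLinearMap.le_def] at h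
  have h0 := h.re_inner_nonneg_right x
  have hx : (T - r • (1 : H →L[ℂ] H)) x = T x - r • x := by simp
  rw [hx] at h0
  simp only [RCLike.re_to_complex] at h0
  rw [re_inner_sub_smul] at h0
  linarith

/-- If `r • 1 ≤ T` then the real spectrum of `T` lies in `[r, ∞)`. -/
lemma spectrum_lb {r : ℝ} {T : H →L[ℂ] H} (h : r • (1 : H →L[ℂ] H) ≤ T) :
    ∀ μ ∈ spectrum ℝ T, r ≤ μ := by
  intro μ hμ
  have halg : algebraMap ℝ (H →L[ℂ] H) r = r • (1 : H →L[ℂ] H) :=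
    Algebra.algebraMap_eq_smul_one r
  have hmem : μ - r ∈ spectrum ℝ (T - algebraMap ℝ (H →L[ℂ] H) r) := by
    rw [← spectrum.sub_singleton_eq]
    exact Set.sub_mem_sub hμ rfl
  have hnn : (0 : H →L[ℂ] H) ≤ T - algebraMap ℝ (H →L[ℂ] H) r := by
    rw [halg]
    exact sub_nonneg.mpr h
  have := spectrum_nonneg_of_nonneg hnn hmem
  linarith

/-- Key spectral lemma: if `S ≥ 0` and `S ∘ S = A ≥ a·1` with `a > 0`,
then `S ≥ √a · 1` pointwise. -/
lemma sqrt_inner_lb (a : ℝ) (ha : 0 < a) (A S : H →L[ℂ] H)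
    (hA_sa : IsSelfAdjoint A)
    (hA_lb : ∀ x : H, a * ‖x‖ ^ 2 ≤ (⟪x, A x⟫_ℂ).re)
    (hS : S.IsPositive) (hSS : S ∘L S = A) :
    ∀ x : H, Real.sqrt a * ‖x‖ ^ 2 ≤ (⟪x, S x⟫_ℂ).re := by
  have hSnn : (0 : H →L[ℂ] H) ≤ S := (ContinuousLinearMap.nonneg_iff_isPositive S).mpr hS
  have hS_sa : IsSelfAdjoint S := hS.isSelfAdjoint
  have hA_le : a • (1 : H →L[ℂ] H) ≤ A := smul_one_le_of_inner_lb a A hA_sa hA_lb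
  set c := Real.sqrt a with hc
  have key : c • (1 : H →L[ℂ] H) ≤ S := by
    have halg : algebraMap ℝ (H →L[ℂ] H) c = c • (1 : H →L[ℂ] H) :=
      Algebra.algebraMap_eq_smul_one c
    rw [← halg, ← sub_nonneg]
    rw [nonneg_iff_isSelfAdjoint_and_quasispectrumRestricts]
    refine ⟨hS_sa.sub (halg ▸ isSelfAdjoint_real_smul_one c), ?_⟩
    refine SpectrumRestricts.nnreal_iff.mpr ?_
    intro t ht
    rw [← spectrum.sub_singleton_eq] at ht
    obtain ⟨μ, hμ, s, hs, hts⟩ := Set.mem_sub.mp ht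
    rw [Set.mem_singleton_iff] at hs
    subst hs
    have hμ0 : 0 ≤ μ := spectrum_nonneg_of_nonneg hSnn hμ
    have hμ2 : μ ^ 2 ∈ spectrum ℝ A := by
      have hmap := cfc_map_spectrum (fun t : ℝ => t ^ 2) S
      have hcfc : cfc (fun t : ℝ => t ^ 2) S = S ^ 2 := cfc_pow_id S 2
      have hsq : S ^ 2 = A := by rw [pow_two]; exact hSS
      rw [hcfc, hsq] at hmap
      rw [hmap]
      exact ⟨μ, hμ, rfl⟩
    have haμ : a ≤ μ ^ 2 := spectrum_lb hA_le _ hμ2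
    have hcμ : c ≤ μ := by
      calc c = Real.sqrt a := rfl
        _ ≤ Real.sqrt (μ ^ 2) := Real.sqrt_le_sqrt haμ
        _ = |μ| := Real.sqrt_sq_eq_abs μ
        _ = μ := abs_of_nonneg hμ0
    subst hts
    linarith
  exact inner_lb_of_smul_one_le key

end Aux

section Key

variable {H : Type*} [NormedAddCommGroup H] [InnerProductSpace ℂ H] [CompleteSpace H]

lemma key_estimate {c ε : ℝ} (hc : 0 < c) (hε : 0 ≤ ε) (S T : H →L[ℂ] H)
    (hS_sa : IsSelfAdjoint S) (hT_sa : IsSelfAdjoint T)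
    (hSlb : ∀ x : H, c * ‖x‖ ^ 2 ≤ (⟪x, S x⟫_ℂ).re)
    (hTlb : ∀ x : H, c * ‖x‖ ^ 2 ≤ (⟪x, T x⟫_ℂ).re)
    (z : H) (hz : ‖z‖ = 1) (lam : ℝ) (hlam : |lam| = ‖S - T‖)
    (hw : ‖(S - T) z - lam • z‖ ≤ ε) :
    2 * c * ‖S - T‖ ≤ ‖S ∘L S - T ∘L T‖ + (‖S‖ + ‖T‖) * ε := by
  set D := S - T with hD
  set w : H := D z - lam • z with hwdef
  have hD_sa : IsSelfAdjoint D := hS_sa.sub hT_sa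
  have hsymS := (ContinuousLinearMap.isSelfAdjoint_iff_isSymmetric.mp hS_sa)
  have hsymD := (ContinuousLinearMap.isSelfAdjoint_iff_isSymmetric.mp hD_sa)
  have hDz : D z = (lam : ℂ) • z + w := by
    rw [hwdef]
    have : lam • z = (lam : ℂ) • z := by simp
    rw [← this]; abel
  have happ : (S ∘L S - T ∘L T) z = S (D z) + D (T z) := by
    simp only [hD, ContinuousLinearMap.sub_apply, ContinuousLinearMap.comp_apply, map_sub]
    abel
  have e1 : ⟪z, S (D z)⟫_ℂ = (lam : ℂ) * ⟪S z, z⟫_ℂ + ⟪S z, w⟫_ℂ := by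
    have h1 : ⟪z, S (D z)⟫_ℂ = ⟪S z, D z⟫_ℂ := by
      have := hsymS z (D z)
      simpa using this.symm
    rw [h1, hDz, inner_add_right, inner_smul_right]
  have e2 : ⟪z, D (T z)⟫_ℂ = (lam : ℂ) * ⟪z, T z⟫_ℂ + ⟪w, T z⟫_ℂ := by
    have h1 : ⟪z, D (T z)⟫_ℂ = ⟪D z, T z⟫_ℂ := by
      have := hsymD z (T z)
      simpa using this.symm
    rw [h1, hDz, inner_add_left, inner_smul_left, Complex.conj_ofReal]
  -- main re computation
  set m : ℝ := (⟪z, S z⟫_ℂ).re + (⟪z, T z⟫_ℂ).re with hm_def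
  have hE : (⟪z, (S ∘L S - T ∘L T) z⟫_ℂ).re
      = lam * m + ((⟪S z, w⟫_ℂ).re + (⟪w, T z⟫_ℂ).re) := by
    rw [happ, inner_add_right, e1, e2]
    have hsz : (⟪S z, z⟫_ℂ).re = (⟪z, S z⟫_ℂ).re := inner_re_symm (𝕜 := ℂ) (S z) z
    simp only [Complex.add_re, Complex.mul_re, Complex.ofReal_re, Complex.ofReal_im, hm_def]
    rw [hsz]
    ring
  have hm : 2 * c ≤ m := by
    have h1 := hSlb z
    have h2 := hTlb z
    rw [hz] at h1 h2
    simp only [one_pow, mul_one] at h1 h2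
    rw [hm_def]; linarith
  have hwS : |(⟪S z, w⟫_ℂ).re| ≤ ‖S‖ * ε := by
    calc |(⟪S z, w⟫_ℂ).re| ≤ ‖⟪S z, w⟫_ℂ‖ := Complex.abs_re_le_norm _
      _ ≤ ‖S z‖ * ‖w‖ := norm_inner_le_norm _ _
      _ ≤ ‖S‖ * ε := by
          have h1 : ‖S z‖ ≤ ‖S‖ := by simpa [hz] using S.le_opNorm z
          exact mul_le_mul h1 hw (norm_nonneg _) (norm_nonneg _)
  have hwT : |(⟪w, T z⟫_ℂ).re| ≤ ‖T‖ * ε := by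
    calc |(⟪w, T z⟫_ℂ).re| ≤ ‖⟪w, T z⟫_ℂ‖ := Complex.abs_re_le_norm _
      _ ≤ ‖w‖ * ‖T z‖ := norm_inner_le_norm _ _
      _ ≤ ε * ‖T‖ := by
          have h1 : ‖T z‖ ≤ ‖T‖ := by simpa [hz] using T.le_opNorm z
          exact mul_le_mul hw h1 (norm_nonneg _) hε
      _ = ‖T‖ * ε := mul_comm _ _
  have hre : |(⟪z, (S ∘L S - T ∘L T) z⟫_ℂ).re| ≤ ‖S ∘L S - T ∘L T‖ := by
    calc |(⟪z, (S ∘L S - T ∘L T) z⟫_ℂ).re| ≤ ‖⟪z, (S ∘L S - T ∘L T) z⟫_ℂ‖ :=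
          Complex.abs_re_le_norm _
      _ ≤ ‖z‖ * ‖(S ∘L S - T ∘L T) z‖ := norm_inner_le_norm _ _
      _ ≤ ‖z‖ * (‖S ∘L S - T ∘L T‖ * ‖z‖) := by
          gcongr
          exact (S ∘L S - T ∘L T).le_opNorm z
      _ = ‖S ∘L S - T ∘L T‖ := by rw [hz]; ring
  -- combine
  have hmain : |lam| * m ≤ ‖S ∘L S - T ∘L T‖ + (‖S‖ + ‖T‖) * ε := by
    have h1 : |lam * m| = |lam| * m := by
      rw [abs_mul, abs_of_nonneg (by linarith : (0:ℝ) ≤ m)]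
    have h2 : lam * m = (⟪z, (S ∘L S - T ∘L T) z⟫_ℂ).re
        - ((⟪S z, w⟫_ℂ).re + (⟪w, T z⟫_ℂ).re) := by rw [hE]; ring
    calc |lam| * m = |lam * m| := h1.symm
      _ ≤ |(⟪z, (S ∘L S - T ∘L T) z⟫_ℂ).re| + |(⟪S z, w⟫_ℂ).re + (⟪w, T z⟫_ℂ).re| := by
          rw [h2]; exact abs_sub _ _
      _ ≤ ‖S ∘L S - T ∘L T‖ + (|(⟪S z, w⟫_ℂ).re| + |(⟪w, T z⟫_ℂ).re|) :=
          add_le_add hre (abs_add_le _ _)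
      _ ≤ ‖S ∘L S - T ∘L T‖ + (‖S‖ + ‖T‖) * ε := by
          rw [add_mul]; gcongr
  have hfin : 2 * c * ‖D‖ ≤ |lam| * m := by
    rw [← hlam, ← hD] at *
    have hl : (0:ℝ) ≤ |lam| := abs_nonneg _
    nlinarith
  rw [hD] at hfin
  linarith

end Key

section Main

variable {H : Type*} [NormedAddCommGroup H] [InnerProductSpace ℂ H] [CompleteSpace H]

lemma re_inner_real_smul_right (s : ℝ) (x y : H) :
    (⟪x, s • y⟫_ℂ).re = s * (⟪x, y⟫_ℂ).re := by
  rw [← Complex.coe_smul, inner_smul_right]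
  simp [Complex.mul_re]

lemma re_inner_self (x : H) : (⟪x, x⟫_ℂ).re = ‖x‖ ^ 2 := by
  have := inner_self_eq_norm_sq (𝕜 := ℂ) x
  simpa [RCLike.re_to_complex] using this

lemma approx_eigen (D : H →L[ℂ] H) (hD_sa : IsSelfAdjoint D) (hr : 0 < ‖D‖)
    {ε' : ℝ} (hε' : 0 < ε') :
    ∃ (z : H) (lam : ℝ), ‖z‖ = 1 ∧ |lam| = ‖D‖ ∧ ‖D z - lam • z‖ ≤ ε' := by
  set r := ‖D‖ with hrdef
  have hsymD := (ContinuousLinearMap.isSelfAdjoint_iff_isSymmetric.mp hD_sa)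
  set δ : ℝ := min (r ^ 2 / 2) ((ε' ^ 2 / r) ^ 2 / 2) with hδdef
  have hδpos : 0 < δ := by
    apply lt_min <;> positivity
  have hδle : δ ≤ r ^ 2 / 2 := min_le_left _ _
  have hδle2 : 2 * δ ≤ (ε' ^ 2 / r) ^ 2 := by
    have := min_le_right (r ^ 2 / 2) ((ε' ^ 2 / r) ^ 2 / 2)
    rw [← hδdef] at this
    linarith
  set t : ℝ := Real.sqrt (r ^ 2 - δ) with htdef
  have hrδ : 0 ≤ r ^ 2 - δ := by nlinarith
  have ht0 : 0 ≤ t := Real.sqrt_nonneg _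
  have htr : t < r := by
    rw [htdef]
    have : Real.sqrt (r ^ 2 - δ) < Real.sqrt (r ^ 2) := by
      apply Real.sqrt_lt_sqrt hrδ
      linarith
    rwa [Real.sqrt_sq hr.le] at this
  have ht2 : t ^ 2 = r ^ 2 - δ := Real.sq_sqrt hrδ
  -- find a unit vector with ‖D u‖ large
  obtain ⟨x, hx⟩ : ∃ x : H, t * ‖x‖ < ‖D x‖ := by
    by_contra hall
    push_neg at hall
    have : ‖D‖ ≤ t := D.opNorm_le_bound ht0 fun x => (hall x)
    linarith
  have hx0 : x ≠ 0 := by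
    rintro rfl
    simp at hx
  set u : H := (‖x‖⁻¹ : ℝ) • x with hudef
  have hxn : 0 < ‖x‖ := norm_pos_iff.mpr hx0
  have hu1 : ‖u‖ = 1 := by
    rw [hudef, norm_smul]
    simp [abs_of_nonneg (inv_nonneg.mpr hxn.le), inv_mul_cancel₀ hxn.ne']
  have hDu : D u = (‖x‖⁻¹ : ℝ) • D x := by
    rw [hudef, ContinuousLinearMap.map_smul_of_tower]
  have hDu_lt : t < ‖D u‖ := by
    rw [hDu, norm_smul]
    simp only [norm_inv, norm_norm]
    rw [lt_inv_mul_iff₀ hxn] -- may fix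
    linarith [hx]
  have hDu_sq : r ^ 2 - δ < ‖D u‖ ^ 2 := by
    rw [← ht2]
    exact pow_lt_pow_left₀ hDu_lt ht0 two_ne_zero -- may fix
  have hDu_le : ‖D u‖ ≤ r := by
    simpa [hu1] using D.le_opNorm u
  clear_value u
  -- second-order estimate
  have hkey : ‖D (D u) - (r ^ 2) • u‖ ≤ r * Real.sqrt (2 * δ) := by
    have hre : (⟪D (D u), (r ^ 2 : ℝ) • u⟫_ℂ).re = r ^ 2 * ‖D u‖ ^ 2 := by
      rw [re_inner_real_smul_right]
      have h2 : ⟪D (D u), u⟫_ℂ = ⟪D u, D u⟫_ℂ := by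
        have := hsymD (D u) u
        simpa using this
      rw [h2, re_inner_self]
    have hsq : ‖D (D u) - (r ^ 2 : ℝ) • u‖ ^ 2 ≤ 2 * r ^ 2 * δ := by
      have hns := @norm_sub_sq ℂ _ _ _ _ (D (D u)) ((r ^ 2 : ℝ) • u)
      simp only [RCLike.re_to_complex] at hns
      rw [hre] at hns
      have h3 : ‖(r ^ 2 : ℝ) • u‖ = r ^ 2 := by
        rw [norm_smul, hu1]
        simp [abs_of_nonneg (sq_nonneg r)]
      have h4 : ‖D (D u)‖ ≤ r * r := by
        calc ‖D (D u)‖ ≤ ‖D‖ * ‖D u‖ := D.le_opNorm _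
          _ ≤ r * r := by rw [← hrdef]; exact mul_le_mul_of_nonneg_left hDu_le hr.le
      rw [hns, h3]
      nlinarith [norm_nonneg (D (D u))]
    have h5 : 0 ≤ r * Real.sqrt (2 * δ) := by positivity
    rw [← Real.sqrt_sq (norm_nonneg (D (D u) - (r ^ 2 : ℝ) • u))]
    rw [← Real.sqrt_sq h5]
    apply Real.sqrt_le_sqrt
    rw [mul_pow, Real.sq_sqrt (by positivity : (0:ℝ) ≤ 2 * δ)]
    nlinarith
  set y : H := D u + r • u with hydef
  clear_value y
  rcases lt_or_ge ‖y‖ ε' with hy | hy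
  · refine ⟨u, -r, hu1, by rw [abs_neg, abs_of_nonneg hr.le], ?_⟩
    have : D u - (-r) • u = y := by rw [hydef, neg_smul, sub_neg_eq_add]
    rw [this]
    exact hy.le
  · have hy0 : y ≠ 0 := by
      intro h
      rw [h, norm_zero] at hy
      linarith
    have hyn : 0 < ‖y‖ := norm_pos_iff.mpr hy0
    refine ⟨(‖y‖⁻¹ : ℝ) • y, r, ?_, abs_of_nonneg hr.le, ?_⟩
    · rw [norm_smul]
      simp [abs_of_nonneg (inv_nonneg.mpr hyn.le), inv_mul_cancel₀ hyn.ne']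
    · have hDy : D ((‖y‖⁻¹ : ℝ) • y) - r • ((‖y‖⁻¹ : ℝ) • y)
          = (‖y‖⁻¹ : ℝ) • (D y - r • y) := by
        rw [ContinuousLinearMap.map_smul_of_tower, smul_sub, smul_comm]
      have hDy2 : D y - r • y = D (D u) - (r ^ 2 : ℝ) • u := by
        have h1 : D y = D (D u) + r • D u := by
          rw [hydef, map_add, ContinuousLinearMap.map_smul_of_tower]
        have h2 : r • y = r • D u + (r ^ 2 : ℝ) • u := by
          rw [hydef, smul_add, smul_smul, pow_two]
        rw [h1, h2]
        abel
      rw [hDy, hDy2, norm_smul]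
      simp only [norm_inv, norm_norm]
      have hb : Real.sqrt (2 * δ) ≤ ε' ^ 2 / r := by
        rw [← Real.sqrt_sq (by positivity : (0:ℝ) ≤ ε' ^ 2 / r)]
        exact Real.sqrt_le_sqrt hδle2
      calc ‖y‖⁻¹ * ‖D (D u) - (r ^ 2 : ℝ) • u‖ ≤ ε'⁻¹ * (r * Real.sqrt (2 * δ)) := by
            apply mul_le_mul (by gcongr) hkey (norm_nonneg _) (by positivity)
        _ ≤ ε'⁻¹ * (r * (ε' ^ 2 / r)) := by gcongr
        _ = ε' := by
            field_simp
end Main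

/-- operator-Lipschitz property of the square root, used in the proof of
Theorem 4.2: if A, B are bounded self-adjoint operators with A ≥ aI and B ≥ aI for
a > 0, then their unique positive square roots satisfy
‖A^{1/2} − B^{1/2}‖ ≤ ‖A − B‖/(2√a). -/
theorem sqrt_operator_lipschitz
    {H : Type*} [NormedAddCommGroup H] [InnerProductSpace ℂ H] [CompleteSpace H]
    (a : ℝ) (ha : 0 < a)
    (A B sqA sqB : H →L[ℂ] H)
    (hA_sa : IsSelfAdjoint A) (hB_sa : IsSelfAdjoint B)
    (hA_lb : ∀ x : H, a * ‖x‖ ^ 2 ≤ (⟪x, A x⟫_ℂ).re)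
    (hB_lb : ∀ x : H, a * ‖x‖ ^ 2 ≤ (⟪x, B x⟫_ℂ).re)
    (hsqA_pos : sqA.IsPositive) (hsqA_sq : sqA ∘L sqA = A)
    (hsqB_pos : sqB.IsPositive) (hsqB_sq : sqB ∘L sqB = B) :
    ‖sqA - sqB‖ ≤ ‖A - B‖ / (2 * Real.sqrt a) := by
  set c := Real.sqrt a with hc
  have hcpos : 0 < c := Real.sqrt_pos.mpr ha
  have hSlb := sqrt_inner_lb a ha A sqA hA_sa hA_lb hsqA_pos hsqA_sq
  have hTlb := sqrt_inner_lb a ha B sqB hB_sa hB_lb hsqB_pos hsqB_sq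
  have hS_sa : IsSelfAdjoint sqA := hsqA_pos.isSelfAdjoint
  have hT_sa : IsSelfAdjoint sqB := hsqB_pos.isSelfAdjoint
  rcases eq_or_lt_of_le (norm_nonneg (sqA - sqB)) with h0 | hrpos
  · rw [← h0]
    positivity
  · rw [le_div_iff₀ (by positivity)]
    have main : ∀ ε : ℝ, 0 < ε → ‖sqA - sqB‖ * (2 * c) ≤ ‖A - B‖ + ε := by
      intro ε hε
      set M : ℝ := ‖sqA‖ + ‖sqB‖ + 1 with hM_def
      have hM : 0 < M := by positivity
      have hεM : 0 < ε / M := div_pos hε hM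
      obtain ⟨z, lam, hz, hlam, hwb⟩ :=
        approx_eigen (sqA - sqB) (hS_sa.sub hT_sa) hrpos hεM
      have hkey := key_estimate hcpos hεM.le sqA sqB hS_sa hT_sa hSlb hTlb
        z hz lam hlam hwb
      rw [hsqA_sq, hsqB_sq] at hkey
      have hle : (‖sqA‖ + ‖sqB‖) * (ε / M) ≤ ε := by
        have h1 : (‖sqA‖ + ‖sqB‖) * (ε / M) ≤ M * (ε / M) := by
          apply mul_le_mul_of_nonneg_right _ hεM.le
          rw [hM_def]
          linarith
        have h2 : M * (ε / M) = ε := by field_simp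
        linarith
      calc ‖sqA - sqB‖ * (2 * c) = 2 * c * ‖sqA - sqB‖ := by ring
        _ ≤ ‖A - B‖ + (‖sqA‖ + ‖sqB‖) * (ε / M) := hkey
        _ ≤ ‖A - B‖ + ε := by linarith
    exact le_of_forall_pos_le_add main
end

section
/- Let ν_1 ≥ … ≥ ν_R > 0 be the nonzero eigenvalues of the finite-rank operator T_{μμ}, counted with multiplicity, with corresponding orthonormal eigenvectors e_1, …, e_R. Then Σ_{j=1}^R ν_j^{−1}·‖T_{μτ}^* e_j‖² ≤ (1/G)·Σ_{g=1}^G ‖τ_g^c‖². (This is the trace bound tr(T_{μτ}^* T_{μμ}^{−1} T_{μτ}) = min_B (1/G)Σ_g‖τ_g^c − Bμ_g^c‖² ≤ (1/G)Σ_g‖τ_g^c‖² used in the paper's proof of Theorem 4.2 to establish that the operator T_{μμ}^{−1/2} T_{μτ} T_{μτ}^* T_{μμ}^{−1/2} is trace class.) -/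
open scoped InnerProductSpace
open Finset

/-- trace bound from the proof of Theorem 4.2:
Σ_j ν_j⁻¹ ‖T_{μτ}^* e_j‖² ≤ (1/G) Σ_g ‖τ_g^c‖², where ν_j, e_j are the nonzero
eigenvalues and orthonormal eigenvectors of the finite-rank operator T_{μμ}. -/
theorem trace_bound_Tmumu_inverse
    {H : Type*} [NormedAddCommGroup H] [InnerProductSpace ℝ H] [CompleteSpace H]
    [TopologicalSpace.SeparableSpace H]
    (G : ℕ) (hG : 0 < G)
    (μ τ μc τc : Fin G → H)
    (hμc : ∀ g, μc g = μ g - (G : ℝ)⁻¹ • ∑ g', μ g')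
    (hτc : ∀ g, τc g = τ g - (G : ℝ)⁻¹ • ∑ g', τ g')
    (Tμμ Tμτstar : H →L[ℝ] H)
    (hTμμ : ∀ h : H, Tμμ h = (G : ℝ)⁻¹ • ∑ g, ⟪μc g, h⟫_ℝ • μc g)
    (hTμτstar : ∀ h : H, Tμτstar h = (G : ℝ)⁻¹ • ∑ g, ⟪μc g, h⟫_ℝ • τc g)
    (R : ℕ) (ν : Fin R → ℝ) (e : Fin R → H)
    (hν_pos : ∀ j, 0 < ν j)
    (hν_mono : ∀ j l : Fin R, j ≤ l → ν l ≤ ν j)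
    (he : Orthonormal ℝ e)
    (heig : ∀ h : H, Tμμ h = ∑ j, (ν j * ⟪e j, h⟫_ℝ) • e j) :
    ∑ j, (ν j)⁻¹ * ‖Tμτstar (e j)‖ ^ 2 ≤ (G : ℝ)⁻¹ * ∑ g, ‖τc g‖ ^ 2 := by
  classical
  have hGpos : (0:ℝ) < (G:ℝ) := by exact_mod_cast hG
  set a : Fin G → Fin R → ℝ := fun g j => ⟪μc g, e j⟫_ℝ with ha
  have hone : ∀ i j : Fin R, ⟪e i, e j⟫_ℝ = if i = j then 1 else 0 :=
    orthonormal_iff_ite.mp he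
  -- key identity
  have key : ∀ j l : Fin R, (G:ℝ)⁻¹ * ∑ g, a g j * a g l = if l = j then ν j else 0 := by
    intro j l
    have h1 : ⟪e l, Tμμ (e j)⟫_ℝ = (G:ℝ)⁻¹ * ∑ g, a g j * a g l := by
      rw [hTμμ, real_inner_smul_right, inner_sum]
      congr 1
      refine Finset.sum_congr rfl fun g _ => ?_
      rw [real_inner_smul_right, show ⟪e l, μc g⟫_ℝ = a g l from real_inner_comm _ _]
    have h2 : ⟪e l, Tμμ (e j)⟫_ℝ = if l = j then ν j else 0 := by
      rw [heig, inner_sum]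
      simp only [real_inner_smul_right, hone]
      rw [Finset.sum_eq_single l]
      · by_cases h : l = j <;> simp [h]
      · intro b _ hb
        simp [hb.symm]
      · simp
    rw [← h1, h2]
  -- orthonormal vectors in Euclidean space
  set w : Fin R → EuclideanSpace ℝ (Fin G) :=
    fun j => WithLp.toLp 2 (fun g => (Real.sqrt ((G:ℝ) * ν j))⁻¹ * a g j) with hw
  have hsq : ∀ j, Real.sqrt ((G:ℝ) * ν j) * Real.sqrt ((G:ℝ) * ν j) = (G:ℝ) * ν j := by
    intro j
    exact Real.mul_self_sqrt (le_of_lt (mul_pos hGpos (hν_pos j)))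
  have hsqpos : ∀ j, 0 < Real.sqrt ((G:ℝ) * ν j) := by
    intro j
    exact Real.sqrt_pos.mpr (mul_pos hGpos (hν_pos j))
  have hwinner : ∀ j l : Fin R, ⟪w j, w l⟫_ℝ =
      (Real.sqrt ((G:ℝ) * ν j))⁻¹ * (Real.sqrt ((G:ℝ) * ν l))⁻¹ * ∑ g, a g j * a g l := by
    intro j l
    rw [PiLp.inner_apply]
    simp only [hw, RCLike.inner_apply, conj_trivial, PiLp.toLp_apply]
    rw [Finset.mul_sum]
    refine Finset.sum_congr rfl fun g _ => by ring
  have hwo : Orthonormal ℝ w := by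
    rw [orthonormal_iff_ite]
    intro j l
    rw [hwinner]
    have hk := key j l
    have hsum : ∑ g, a g j * a g l = (G:ℝ) * ((G:ℝ)⁻¹ * ∑ g, a g j * a g l) := by
      field_simp
    rw [hsum, hk]
    by_cases h : j = l
    · subst h
      rw [if_pos rfl, if_pos rfl]
      have hne := (hsqpos j).ne'
      have hgen : ∀ s : ℝ, s ≠ 0 → s⁻¹ * s⁻¹ * (s * s) = 1 := by
        intro s hs; field_simp
      calc (Real.sqrt ((G:ℝ) * ν j))⁻¹ * (Real.sqrt ((G:ℝ) * ν j))⁻¹ * ((G:ℝ) * ν j)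
          = (Real.sqrt ((G:ℝ) * ν j))⁻¹ * (Real.sqrt ((G:ℝ) * ν j))⁻¹ *
            (Real.sqrt ((G:ℝ) * ν j) * Real.sqrt ((G:ℝ) * ν j)) := by rw [hsq j]
        _ = 1 := hgen _ hne
    · rw [if_neg (Ne.symm h), if_neg h]
      ring
  -- the vectors v j
  set v : Fin R → H := fun j => ∑ g, w j g • τc g with hv
  have hTv : ∀ j, Tμτstar (e j) = ((G:ℝ)⁻¹ * Real.sqrt ((G:ℝ) * ν j)) • v j := by
    intro j
    rw [hTμτstar]
    simp only [hv, Finset.smul_sum, smul_smul]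
    refine Finset.sum_congr rfl fun g _ => ?_
    congr 1
    simp only [hw]
    have hne := (hsqpos j).ne'
    have hgen : ∀ s x : ℝ, s ≠ 0 → (G:ℝ)⁻¹ * x = ((G:ℝ)⁻¹ * s) * (s⁻¹ * x) := by
      intro s x hs
      field_simp
    exact hgen _ _ hne
  have hterm : ∀ j, (ν j)⁻¹ * ‖Tμτstar (e j)‖ ^ 2 = (G:ℝ)⁻¹ * ‖v j‖ ^ 2 := by
    intro j
    rw [hTv j, norm_smul]
    rw [mul_pow, Real.norm_eq_abs, sq_abs]
    have : ((G:ℝ)⁻¹ * Real.sqrt ((G:ℝ) * ν j)) ^ 2 = (G:ℝ)⁻¹ * ν j := by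
      rw [mul_pow, sq, sq, hsq j]
      field_simp
    rw [this]
    have hne := (hν_pos j).ne'
    field_simp
  simp only [hterm]
  rw [← Finset.mul_sum]
  have hGinv : (0:ℝ) ≤ (G:ℝ)⁻¹ := by positivity
  refine mul_le_mul_of_nonneg_left ?_ hGinv
  -- main inequality : ∑ j, ‖v j‖^2 ≤ ∑ g, ‖τc g‖^2
  set F : Submodule ℝ H := Submodule.span ℝ (Set.range τc) with hF
  haveI : FiniteDimensional ℝ F := FiniteDimensional.span_of_finite ℝ (Set.finite_range τc)
  set b := stdOrthonormalBasis ℝ F with hb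
  have htmem : ∀ g, τc g ∈ F := fun g => Submodule.subset_span ⟨g, rfl⟩
  set t : Fin G → F := fun g => ⟨τc g, htmem g⟩ with ht
  have hParseval : ∀ y : F, ‖y‖ ^ 2 = ∑ i, ⟪b i, y⟫_ℝ ^ 2 := by
    intro y
    rw [← real_inner_self_eq_norm_sq]
    rw [← b.repr.inner_map_map y y, PiLp.inner_apply]
    refine Finset.sum_congr rfl fun i _ => ?_
    rw [b.repr_apply_apply]
    simp [sq]
  -- v j as element of F
  set vF : Fin R → F := fun j => ∑ g, w j g • t g with hvF
  have hvFcoe : ∀ j, (vF j : H) = v j := by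
    intro j
    simp [hvF, hv, ht]
  set c : Fin (Module.finrank ℝ F) → EuclideanSpace ℝ (Fin G) :=
    fun i => WithLp.toLp 2 (fun g => ⟪b i, t g⟫_ℝ) with hc
  have hinner_vF : ∀ i j, ⟪b i, vF j⟫_ℝ = ⟪c i, w j⟫_ℝ := by
    intro i j
    rw [hvF]
    simp only [inner_sum, real_inner_smul_right]
    rw [PiLp.inner_apply]
    refine Finset.sum_congr rfl fun g _ => ?_
    simp [hc]
  calc ∑ j, ‖v j‖ ^ 2 = ∑ j, ∑ i, ⟪c i, w j⟫_ℝ ^ 2 := by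
        refine Finset.sum_congr rfl fun j _ => ?_
        rw [← hvFcoe j]
        have : ‖(vF j : H)‖ = ‖vF j‖ := rfl
        rw [this, hParseval]
        exact Finset.sum_congr rfl fun i _ => by rw [hinner_vF]
    _ = ∑ i, ∑ j, ⟪c i, w j⟫_ℝ ^ 2 := Finset.sum_comm
    _ ≤ ∑ i, ‖c i‖ ^ 2 := by
        refine Finset.sum_le_sum fun i _ => ?_
        have := hwo.sum_inner_products_le (s := Finset.univ) (c i)
        simpa [Real.norm_eq_abs, sq_abs, mul_comm, real_inner_comm] using this
    _ = ∑ g, ‖τc g‖ ^ 2 := by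
        have h1 : ∀ i, ‖c i‖ ^ 2 = ∑ g, ⟪b i, t g⟫_ℝ ^ 2 := by
          intro i
          rw [← real_inner_self_eq_norm_sq, PiLp.inner_apply]
          simp [hc, sq]
        simp only [h1]
        rw [Finset.sum_comm]
        refine Finset.sum_congr rfl fun g _ => ?_
        have h2 : ‖τc g‖ = ‖t g‖ := rfl
        rw [h2, hParseval]
end
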